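/- arXiv:1806.05119 — 6 statements merged into one kernel-verified Lean document; each statement's English description precedes it below -/
import Mathlib

section
/- Let G be a balanced bipartite graph on parts of size n with minimum degree at least δn where 0 ≤ δ ≤ 2/3. Then in every 2-coloring of the edges of G there exists a monochromatic connected matching of size at least δn/2, i.e., a matching of at least δn/2 edges all lying in a single monochromatic component. -/
/-!
Suppose neither colour has a connected matching with `m = δn/2` edges. König's theorem, applied
inside each monochromatic component, gives for each colour a set `P` of at most `n` vertices that
meets every component of that colour in fewer than `m` vertices and outside of which every vertex
has degree less than `m` in that colour. As all degrees are at least `2m`, the red and the blue set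
partition the `2n` vertices, so `P_red` has `n` vertices, each of red degree more than `m`.
In a red component meeting `P_red`, the red neighbourhoods of one or two vertices of `P_red` on
opposite sides put more than `m` vertices outside `P_red`; so every such component has more
vertices outside `P_red` than inside, and summing over components gives `n < n`.
-/

open SimpleGraph Set

/-- `M` is a connected matching in the graph `K`: a set of pairwise vertex-disjoint
edges of `K`, all lying in the same connected component of `K`. -/
def IsConnectedMatching {V : Type*} (K : SimpleGraph V) (M : Finset (V × V)) : Prop :=
  (∀ p ∈ M, K.Adj p.1 p.2) ∧
  (∀ p ∈ M, ∀ q ∈ M, p ≠ q → p.1 ≠ q.1 ∧ p.1 ≠ q.2 ∧ p.2 ≠ q.1 ∧ p.2 ≠ q.2) ∧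
  (∀ p ∈ M, ∀ q ∈ M, K.Reachable p.1 q.1)

open Finset

theorem SimpleGraph.ncard_neighborSet_eq_degree {V : Type*} (G : SimpleGraph V) (v : V)
    [Fintype (G.neighborSet v)] : (G.neighborSet v).ncard = G.degree v := by
  rw [Set.ncard_eq_toFinset_card', ← card_neighborSet_eq_degree, Set.toFinset_card]

theorem SimpleGraph.degree_sup_le {V : Type*} [Fintype V] (G₁ G₂ : SimpleGraph V)
    [DecidableRel G₁.Adj] [DecidableRel G₂.Adj] (v : V) :
    (G₁ ⊔ G₂).degree v ≤ G₁.degree v + G₂.degree v := by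
  simp only [← ncard_neighborSet_eq_degree, neighborSet_sup]
  exact Set.ncard_union_le _ _

theorem exists_matching_of_card_le_card_add {α β : Type*} [Fintype α] [Fintype β]
    (r : α → β → Prop) [DecidableRel r] (d : ℕ)
    (hall : ∀ s : Finset α, #s ≤ #{b | ∃ a ∈ s, r a b} + d) :
    ∃ M : Finset (α × β), (∀ p ∈ M, r p.1 p.2) ∧
      Set.InjOn Prod.fst (M : Set (α × β)) ∧ Set.InjOn Prod.snd (M : Set (α × β)) ∧
      Fintype.card α ≤ #M + d := by
  classical
  -- Hall's theorem for `r` extended by `d` new right-hand vertices related to every `a`.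
  let r' : α → β ⊕ Fin d → Prop := fun a => Sum.elim (r a) fun _ => True
  obtain ⟨f, hf, hfr⟩ := (Fintype.all_card_le_filter_rel_iff_exists_injective r').mp fun s => by
    rcases s.eq_empty_or_nonempty with rfl | ⟨a, ha⟩
    · simp
    calc #s ≤ #{b | ∃ a ∈ s, r a b} + #(univ : Finset (Fin d)) := by simpa using hall s
      _ = #(({b | ∃ a ∈ s, r a b} : Finset β).disjSum univ) := (card_disjSum _ _).symm
      _ ≤ #{y | ∃ a ∈ s, r' a y} := card_le_card fun y hy => by
        rcases y with b | i <;> simp_all [r']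
        exact ⟨a, ha⟩
  let M : Finset (α × β) := {p | f p.1 = .inl p.2}
  have hM : ∀ p ∈ M, f p.1 = .inl p.2 := fun p hp => (mem_filter.mp hp).2
  have hfst : Set.InjOn Prod.fst (M : Set (α × β)) := fun p hp q hq h =>
    Prod.ext h (Sum.inl_injective ((hM p hp).symm.trans (h ▸ hM q hq)))
  refine ⟨M, fun p hp => by simpa [r', hM p hp] using hfr p.1, hfst,
    fun p hp q hq h => Prod.ext (hf ((hM p hp).trans (h ▸ (hM q hq).symm))) h, ?_⟩
  have himage : M.image Prod.fst = ({a | (f a).isLeft} : Finset α) := by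
    ext a
    simp only [Finset.mem_image, Finset.mem_filter, Finset.mem_univ, true_and, Sum.isLeft_iff, M]
    exact ⟨fun ⟨p, hp, hpa⟩ => ⟨p.2, hpa ▸ hp⟩,
      fun ⟨b, hb⟩ => ⟨(a, b), hb, rfl⟩⟩
  have hright : #({a | (f a).isRight} : Finset α) ≤ d := by
    simpa using card_le_card_of_injOn f (t := univ.map .inr) (fun a ha => by
      obtain ⟨i, hi⟩ := Sum.isRight_iff.mp (mem_filter.mp ha).2
      simp [hi]) hf.injOn
  have hsplit := card_filter_add_card_filter_not (s := univ) (fun a => (f a).isLeft)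
  simp only [Sum.not_isLeft, card_univ] at hsplit
  rw [← card_image_of_injOn hfst, himage]
  omega

theorem exists_matching_and_cover_card_le {α β : Type*} [Fintype α] [Fintype β]
    (r : α → β → Prop) :
    ∃ (M : Finset (α × β)) (C : Finset (α ⊕ β)), (∀ p ∈ M, r p.1 p.2) ∧
      Set.InjOn Prod.fst (M : Set (α × β)) ∧ Set.InjOn Prod.snd (M : Set (α × β)) ∧
      (∀ a b, r a b → .inl a ∈ C ∨ .inr b ∈ C) ∧ #C ≤ #M := by
  classical
  let N : Finset α → Finset β := fun s => {b | ∃ a ∈ s, r a b}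
  obtain ⟨A, -, hA⟩ := exists_max_image univ (fun s => (#s : ℤ) - #(N s)) univ_nonempty
  have hA0 : 0 ≤ (#A : ℤ) - #(N A) := by simpa [N] using hA ∅ (mem_univ _)
  obtain ⟨d, hd⟩ : ∃ d : ℕ, (d : ℤ) = #A - #(N A) := ⟨_, Int.toNat_of_nonneg hA0⟩
  obtain ⟨M, hMr, hfst, hsnd, hMcard⟩ := exists_matching_of_card_le_card_add r d fun s => by
    have := hA s (mem_univ _)
    simp only [N] at this hd ⊢
    omega
  refine ⟨M, Aᶜ.disjSum (N A), hMr, hfst, hsnd, fun a b hab => ?_, ?_⟩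
  · by_cases ha : a ∈ A
    · exact .inr (by simpa [N] using ⟨a, ha, hab⟩)
    · exact .inl (by simpa using ha)
  · rw [card_disjSum, card_compl]
    have := card_le_univ A
    omega

section Bipartite

variable {α β : Type*}

theorem isConnectedMatching_map_inl_inr {H : SimpleGraph (α ⊕ β)} {c : H.ConnectedComponent}
    {M : Finset (α × β)} (hadj : ∀ p ∈ M, H.Adj (.inl p.1) (.inr p.2))
    (hfst : Set.InjOn Prod.fst (M : Set (α × β)))
    (hsnd : Set.InjOn Prod.snd (M : Set (α × β)))
    (hc : ∀ p ∈ M, H.connectedComponentMk (.inl p.1) = c) :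
    IsConnectedMatching H (M.map (.prodMap .inl .inr)) := by
  simp only [IsConnectedMatching, Finset.forall_mem_map]
  refine ⟨hadj, fun p hp q hq hpq => ?_, fun p hp q hq =>
    ConnectedComponent.exact ((hc p hp).trans (hc q hq).symm)⟩
  have hpq' : p ≠ q := fun h => hpq (h ▸ rfl)
  simp only [Function.Embedding.coe_prodMap, Prod.map_fst, Prod.map_snd,
    Function.Embedding.inl_apply, Function.Embedding.inr_apply, ne_eq, Sum.inl.injEq,
    Sum.inr.injEq, reduceCtorEq, not_false_eq_true, true_and]
  exact ⟨fun h => hpq' (hfst hp hq h), fun h => hpq' (hsnd hp hq h)⟩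

theorem exists_cover_of_forall_isConnectedMatching_card_lt [Fintype α] [Fintype β]
    {H : SimpleGraph (α ⊕ β)} [DecidableRel H.Adj] [DecidableEq H.ConnectedComponent]
    (hH : H ≤ completeBipartiteGraph α β) {m : ℝ}
    (hsmall : ∀ M, IsConnectedMatching H M → (#M : ℝ) < m) :
    ∃ P : Finset (α ⊕ β), #P ≤ Fintype.card α ∧ (∀ v ∉ P, (H.degree v : ℝ) < m) ∧
      ∀ c : H.ConnectedComponent, (#{v ∈ P | H.connectedComponentMk v = c} : ℝ) < m := by
  classical
  choose M C hMr hfst hsnd hC hCM using fun c : H.ConnectedComponent =>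
    exists_matching_and_cover_card_le fun a b =>
      H.Adj (.inl a) (.inr b) ∧ H.connectedComponentMk (.inl a) = c
  have hM : ∀ c, (#(M c) : ℝ) < m := fun c => by
    simpa using hsmall _ (isConnectedMatching_map_inl_inr (fun p hp => (hMr c p hp).1)
      (hfst c) (hsnd c) fun p hp => (hMr c p hp).2)
  have hC_lt : ∀ c, (#(C c) : ℝ) < m := fun c => lt_of_le_of_lt (by exact_mod_cast hCM c) (hM c)
  let P : Finset (α ⊕ β) := {v | v ∈ C (H.connectedComponentMk v)}
  have hfiber : ∀ c, {v ∈ P | H.connectedComponentMk v = c} ⊆ C c := fun c v hv => by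
    obtain ⟨hvP, rfl⟩ := Finset.mem_filter.mp hv
    exact (Finset.mem_filter.mp hvP).2
  refine ⟨P, ?_, fun v hv => ?_, fun c =>
    lt_of_le_of_lt (by exact_mod_cast Finset.card_le_card (hfiber c)) (hC_lt c)⟩
  · -- matchings in different components have disjoint sets of left endpoints
    calc #P = ∑ c, #{v ∈ P | H.connectedComponentMk v = c} :=
          card_eq_sum_card_fiberwise fun _ _ => Finset.mem_coe.mpr (Finset.mem_univ _)
      _ ≤ ∑ c, #((M c).image Prod.fst) := Finset.sum_le_sum fun c _ => by
          rw [card_image_of_injOn (hfst c)]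
          exact (Finset.card_le_card (hfiber c)).trans (hCM c)
      _ ≤ ∑ c, #({a | H.connectedComponentMk (.inl a) = c} : Finset α) :=
          Finset.sum_le_sum fun c _ => Finset.card_le_card fun a ha => by
            obtain ⟨p, hp, rfl⟩ := Finset.mem_image.mp ha
            simpa using (hMr c p hp).2
      _ = Fintype.card α :=
          (card_eq_sum_card_fiberwise fun _ _ => Finset.mem_coe.mpr (Finset.mem_univ _)).symm
  · have hvC : v ∉ C (H.connectedComponentMk v) := by simpa [P] using hv
    refine lt_of_le_of_lt ?_ (hC_lt (H.connectedComponentMk v))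
    rw [← card_neighborFinset_eq_degree]
    refine Nat.cast_le.mpr (Finset.card_le_card fun u hu => ?_)
    rw [mem_neighborFinset] at hu
    have hcomp := ConnectedComponent.connectedComponentMk_eq_of_adj hu
    rcases v with a | b <;> rcases u with a' | b'
    · simpa using hH hu
    · exact (hC _ a b' ⟨hu, rfl⟩).resolve_left hvC
    · exact (hC _ a' b ⟨hu.symm, hcomp.symm⟩).resolve_right hvC
    · simpa using hH hu

end Bipartite

section TwoColorable

variable {V : Type*} [Fintype V] [DecidableEq V] {H : SimpleGraph V} [DecidableRel H.Adj]
  [DecidableEq H.ConnectedComponent] {P : Finset V} {m : ℝ}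

theorem lt_card_filter_compl_of_mem (C : H.Coloring Bool) (hdeg : ∀ v ∈ P, m < H.degree v)
    {c : H.ConnectedComponent} (hc : (#{v ∈ P | H.connectedComponentMk v = c} : ℝ) < m)
    {v : V} (hv : v ∈ P) (hvc : H.connectedComponentMk v = c) :
    m < #{u ∈ Pᶜ | H.connectedComponentMk u = c} := by
  set Pc : Finset V := {v ∈ P | H.connectedComponentMk v = c}
  set Qc : Finset V := {u ∈ Pᶜ | H.connectedComponentMk u = c}
  have hN : ∀ w, H.connectedComponentMk w = c → H.neighborFinset w ⊆ Pc ∪ Qc :=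
    fun w hw u hu => by
      have hu := (ConnectedComponent.connectedComponentMk_eq_of_adj
        ((mem_neighborFinset _ _ _).mp hu)).symm.trans hw
      by_cases huP : u ∈ P <;> simp [Pc, Qc, huP, hu]
  by_cases hopp : ∃ w ∈ Pc, C w ≠ C v
  · obtain ⟨w, hw, hCw⟩ := hopp
    obtain ⟨hwP, hwc⟩ := Finset.mem_filter.mp hw
    have hdisj : Disjoint (H.neighborFinset v) (H.neighborFinset w) :=
      Finset.disjoint_left.mpr fun x hxv hxw => by
        have h1 := C.valid ((mem_neighborFinset _ _ _).mp hxv)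
        have h2 := C.valid ((mem_neighborFinset _ _ _).mp hxw)
        revert hCw h1 h2
        cases C v <;> cases C w <;> cases C x <;> simp
    have hsum : H.degree v + H.degree w ≤ #Pc + #Qc := by
      rw [← card_neighborFinset_eq_degree, ← card_neighborFinset_eq_degree,
        ← Finset.card_union_of_disjoint hdisj]
      exact (Finset.card_le_card (Finset.union_subset (hN v hvc) (hN w hwc))).trans
        (Finset.card_union_le _ _)
    have hsum' : (H.degree v + H.degree w : ℝ) ≤ #Pc + #Qc := by exact_mod_cast hsum
    linarith [hdeg v hv, hdeg w hwP]
  · push Not at hopp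
    have hsub : H.neighborFinset v ⊆ Qc := fun u hu => by
      have hadj := (mem_neighborFinset _ _ _).mp hu
      have huc := (ConnectedComponent.connectedComponentMk_eq_of_adj hadj).symm.trans hvc
      have huP : u ∉ P := fun huP => C.valid hadj (hopp u (by simp [Pc, huP, huc])).symm
      simp [Qc, huP, huc]
    have : (H.degree v : ℝ) ≤ #Qc := by
      exact_mod_cast (card_neighborFinset_eq_degree H v ▸ Finset.card_le_card hsub)
    linarith [hdeg v hv]

theorem card_lt_card_compl_of_forall_degree_gt (C : H.Coloring Bool) (hP : P.Nonempty)
    (hdeg : ∀ v ∈ P, m < H.degree v)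
    (hfib : ∀ c : H.ConnectedComponent, (#{v ∈ P | H.connectedComponentMk v = c} : ℝ) < m) :
    #P < #Pᶜ := by
  have hmaps : ∀ s : Finset V,
      Set.MapsTo H.connectedComponentMk s (Finset.univ : Finset H.ConnectedComponent) :=
    fun _ _ _ => by simp
  rw [card_eq_sum_card_fiberwise (hmaps P), card_eq_sum_card_fiberwise (hmaps Pᶜ)]
  have key : ∀ c v, v ∈ P → H.connectedComponentMk v = c →
      #{v ∈ P | H.connectedComponentMk v = c} < #{u ∈ Pᶜ | H.connectedComponentMk u = c} :=
    fun c v hv hvc => by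
      exact_mod_cast (hfib c).trans (lt_card_filter_compl_of_mem C hdeg (hfib c) hv hvc)
  obtain ⟨v, hv⟩ := hP
  refine Finset.sum_lt_sum (fun c _ => ?_) ⟨_, Finset.mem_univ _, key _ v hv rfl⟩
  rcases Finset.eq_empty_or_nonempty {v ∈ P | H.connectedComponentMk v = c} with h | ⟨w, hw⟩
  · simp [h]
  · exact (key c w (Finset.mem_filter.mp hw).1 (Finset.mem_filter.mp hw).2).le

end TwoColorable

theorem mono_connected_matching_low_degree_general (n : ℕ) (δ : ℝ)
    (G R B : SimpleGraph (Fin n ⊕ Fin n))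
    (hbip : G ≤ completeBipartiteGraph (Fin n) (Fin n))
    (hcol : R ⊔ B = G)
    (hdeg : ∀ v, δ * n ≤ ((G.neighborSet v).ncard : ℝ)) :
    ∃ (K : SimpleGraph (Fin n ⊕ Fin n)), (K = R ∨ K = B) ∧
      ∃ M : Finset ((Fin n ⊕ Fin n) × (Fin n ⊕ Fin n)),
        IsConnectedMatching K M ∧ δ * n / 2 ≤ (M.card : ℝ) := by
  classical
  subst hcol
  by_contra! hsmall
  have hR := le_sup_left.trans hbip
  obtain ⟨PR, hPR, hPRdeg, hPRfib⟩ :=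
    exists_cover_of_forall_isConnectedMatching_card_lt hR (hsmall R (.inl rfl))
  obtain ⟨PB, hPB, hPBdeg, -⟩ :=
    exists_cover_of_forall_isConnectedMatching_card_lt (le_sup_right.trans hbip)
      (hsmall B (.inr rfl))
  have hsplit : ∀ v, δ * n ≤ R.degree v + B.degree v := fun v =>
    (hdeg v).trans (by rw [ncard_neighborSet_eq_degree]; exact_mod_cast degree_sup_le R B v)
  have hcover : PR ∪ PB = Finset.univ := Finset.eq_univ_of_forall fun v => by
    by_contra h
    simp only [Finset.mem_union, not_or] at h
    linarith [hPRdeg v h.1, hPBdeg v h.2, hsplit v]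
  have hcard := Finset.card_union_add_card_inter PR PB
  rw [hcover, Finset.card_univ, Fintype.card_sum, Fintype.card_fin] at hcard
  rw [Fintype.card_fin] at hPR hPB
  have hdisj : Disjoint PR PB :=
    Finset.disjoint_iff_inter_eq_empty.mpr (Finset.card_eq_zero.mp (by omega))
  have hRdeg : ∀ v ∈ PR, δ * n / 2 < R.degree v := fun v hv => by
    linarith [hPBdeg v (Finset.disjoint_left.mp hdisj hv), hsplit v]
  have hn : 0 < n := Nat.pos_of_ne_zero fun h => by
    simpa [h] using hsmall R (.inl rfl) ∅ (by simp [IsConnectedMatching])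
  have := card_lt_card_compl_of_forall_degree_gt
    ((CompleteBipartiteGraph.bicoloring _ _).comap (Hom.ofLE hR))
    (Finset.card_pos.mp (by omega)) hRdeg hPRfib
  rw [Finset.card_compl, Fintype.card_sum, Fintype.card_fin] at this
  omega

/-- Monochromatic connected matching in a 2-colored balanced bipartite graph. -/
theorem mono_connected_matching_low_degree (n : ℕ) (δ : ℝ) (hlo : (0 : ℝ) ≤ δ) (hhi : δ ≤ (2/3 : ℝ))
    (G R B : SimpleGraph (Fin n ⊕ Fin n))
    (hbip : G ≤ completeBipartiteGraph (Fin n) (Fin n))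
    (hcol : R ⊔ B = G)
    (hdeg : ∀ v, δ * n ≤ ((G.neighborSet v).ncard : ℝ)) :
    ∃ (K : SimpleGraph (Fin n ⊕ Fin n)), (K = R ∨ K = B) ∧
      ∃ M : Finset ((Fin n ⊕ Fin n) × (Fin n ⊕ Fin n)),
        IsConnectedMatching K M ∧ δ * n / 2 ≤ (M.card : ℝ) :=
  mono_connected_matching_low_degree_general n δ G R B hbip hcol hdeg
end

section
/- Let G be a balanced bipartite graph on parts of size n with minimum degree at least δn, where 3/4 ≤ δ ≤ 1. Then in every 2-coloring of the edges of G there exists a monochromatic connected matching of size at least n/2. -/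
open SimpleGraph Set

namespace MCM

open Finset

open scoped Classical
set_option linter.unusedSectionVars false

variable {V : Type*} [Fintype V] [DecidableEq V]

/-- neighbor finset -/
noncomputable def nb (G : SimpleGraph V) (v : V) : Finset V :=
  Finset.univ.filter (fun u => G.Adj v u)

@[simp] lemma mem_nb {G : SimpleGraph V} {v u : V} : u ∈ nb G v ↔ G.Adj v u := by
  simp [nb]

/-- the part of the component of `v` in graph `K` lying within `Z` -/
noncomputable def cp (K : SimpleGraph V) (Z : Finset V) (v : V) : Finset V :=
  Z.filter (fun u => K.Reachable v u)

lemma mem_cp {K : SimpleGraph V} {Z : Finset V} {v u : V} :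
    u ∈ cp K Z v ↔ u ∈ Z ∧ K.Reachable v u := by simp [cp]

lemma cp_congr {K : SimpleGraph V} {Z : Finset V} {v w : V} (h : K.Reachable v w) :
    cp K Z v = cp K Z w := by
  ext u; simp only [mem_cp]
  exact and_congr_right (fun _ => ⟨fun hr => h.symm.trans hr, fun hr => h.trans hr⟩)

lemma cp_eq_of_inter {K : SimpleGraph V} {Z : Finset V} {v w : V}
    (h : ((cp K Z v) ∩ (cp K Z w)).Nonempty) : K.Reachable v w := by
  obtain ⟨u, hu⟩ := h
  simp only [Finset.mem_inter, mem_cp] at hu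
  exact hu.1.2.trans hu.2.2.symm

/-- card of intersection lower bound: for A, W ⊆ T, |A ∩ W| ≥ |A| + |W| - |T|. -/
lemma card_inter_lb {A W T : Finset V} (hA : A ⊆ T) (hW : W ⊆ T) :
    A.card + W.card ≤ T.card + (A ∩ W).card := by
  have h1 : A ∪ W ⊆ T := Finset.union_subset hA hW
  have := Finset.card_le_card h1
  have h2 := Finset.card_inter_add_card_union A W
  omega

lemma inter_nonempty_of_card {A W T : Finset V} (hA : A ⊆ T) (hW : W ⊆ T)
    (h : T.card < A.card + W.card) : (A ∩ W).Nonempty := by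
  have := card_inter_lb hA hW
  rw [← Finset.card_pos]; omega

/-- configuration bundling all standing hypotheses -/
structure Cfg (V : Type*) [Fintype V] [DecidableEq V] where
  n : ℕ
  k : ℕ
  d : ℝ
  G : SimpleGraph V
  R : SimpleGraph V
  B : SimpleGraph V
  X : Finset V
  Y : Finset V
  hn : 1 ≤ n
  hk1 : n ≤ 2*k
  hk2 : 2*k ≤ n+1
  hd : 3*(n:ℝ) ≤ 4*d
  hX : X.card = n
  hY : Y.card = n
  hdisj : Disjoint X Y
  hRG : R ≤ G
  hBG : B ≤ G
  hRB : ∀ u v, G.Adj u v → R.Adj u v ∨ B.Adj u v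
  hbip : ∀ u v, G.Adj u v → (u ∈ X ∧ v ∈ Y) ∨ (u ∈ Y ∧ v ∈ X)
  hdeg : ∀ v, v ∈ X ∪ Y → d ≤ ((nb G v).card : ℝ)
  hnoR : ∀ M : Finset (V × V), IsConnectedMatching R M → M.card < k
  hnoB : ∀ M : Finset (V × V), IsConnectedMatching B M → M.card < k

namespace Cfg

variable (S : Cfg V)

/-- swap the two sides -/
noncomputable def swapXY : Cfg V :=
  { S with
    X := S.Y
    Y := S.X
    hX := S.hY
    hY := S.hX
    hdisj := S.hdisj.symm
    hbip := fun u v h => (S.hbip u v h).symm.imp id id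
    hdeg := fun v hv => S.hdeg v (by rwa [Finset.union_comm]) }

/-- swap the two colors -/
noncomputable def swapRB : Cfg V :=
  { S with
    R := S.B
    B := S.R
    hRG := S.hBG
    hBG := S.hRG
    hRB := fun u v h => (S.hRB u v h).symm
    hnoR := S.hnoB
    hnoB := S.hnoR }

@[simp] lemma swapXY_X : S.swapXY.X = S.Y := rfl
@[simp] lemma swapXY_Y : S.swapXY.Y = S.X := rfl
@[simp] lemma swapRB_R : S.swapRB.R = S.B := rfl
@[simp] lemma swapRB_B : S.swapRB.B = S.R := rfl

lemma hd' : (3:ℝ)/4 * S.n ≤ S.d := by have := S.hd; linarith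

lemma kR : (S.n : ℝ) / 2 ≤ S.k := by
  have := S.hk1; have : (S.n:ℝ) ≤ 2*S.k := by exact_mod_cast this
  linarith

lemma kR' : (S.k : ℝ) ≤ (S.n+1)/2 := by
  have := S.hk2; have : (2*S.k : ℝ) ≤ S.n+1 := by exact_mod_cast this
  linarith

/-- neighbors of a vertex of X lie in Y (for any subgraph of G) -/
lemma nb_sub_Y {K : SimpleGraph V} (hK : K ≤ S.G) {x : V} (hx : x ∈ S.X) :
    nb K x ⊆ S.Y := by
  intro y hy
  rw [mem_nb] at hy
  rcases S.hbip x y (hK hy) with ⟨_, h2⟩ | ⟨h1, _⟩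
  · exact h2
  · exact absurd (S.hdisj.forall_ne_finset hx h1) (by simp)

lemma nb_sub_X {K : SimpleGraph V} (hK : K ≤ S.G) {y : V} (hy : y ∈ S.Y) :
    nb K y ⊆ S.X := S.swapXY.nb_sub_Y hK hy

/-- degree decomposition -/
lemma deg_split (v : V) : nb S.G v ⊆ nb S.R v ∪ nb S.B v := by
  intro u hu; rw [mem_nb] at hu
  rcases S.hRB v u hu with h | h
  · exact Finset.mem_union_left _ (by simpa using h)
  · exact Finset.mem_union_right _ (by simpa using h)

lemma deg_sum (v : V) (hv : v ∈ S.X ∪ S.Y) :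
    S.d ≤ ((nb S.R v).card : ℝ) + ((nb S.B v).card : ℝ) := by
  have h1 := S.hdeg v hv
  have h2 := Finset.card_le_card (S.deg_split v)
  have h3 := Finset.card_union_le (nb S.R v) (nb S.B v)
  have : ((nb S.G v).card : ℝ) ≤ ((nb S.R v).card : ℝ) + ((nb S.B v).card : ℝ) := by
    exact_mod_cast le_trans h2 h3
  linarith

/-- neighbors in a subset W of Y : |N(v) ∩ W| ≥ d - (n - |W|)  -/
lemma nb_inter_lb {v : V} (hv : v ∈ S.X) {W : Finset V} (hW : W ⊆ S.Y) :
    S.d - (S.n - (W.card:ℝ)) ≤ (((nb S.G v) ∩ W).card : ℝ) := by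
  have hsub : nb S.G v ⊆ S.Y := S.nb_sub_Y le_rfl hv
  have := card_inter_lb hsub hW
  have hd := S.hdeg v (Finset.mem_union_left _ hv)
  have hcast : ((nb S.G v).card : ℝ) + W.card ≤ (S.Y.card:ℝ) + (((nb S.G v) ∩ W).card:ℝ) := by
    exact_mod_cast this
  rw [S.hY] at hcast
  linarith



/-- build a connected matching from an injective choice function -/
lemma mkCM (K : SimpleGraph V) (A' : Finset V) (g : V → V)
    (hadj : ∀ x ∈ A', K.Adj x (g x))
    (hinj : Set.InjOn g A')
    (hAX : A' ⊆ S.X) (hgY : ∀ x ∈ A', g x ∈ S.Y)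
    (hreach : ∀ x ∈ A', ∀ x' ∈ A', K.Reachable x x') :
    ∃ M : Finset (V × V), IsConnectedMatching K M ∧ M.card = A'.card := by
  classical
  refine ⟨A'.image (fun x => (x, g x)), ⟨?_, ?_, ?_⟩, ?_⟩
  · intro p hp
    simp only [Finset.mem_image] at hp
    obtain ⟨x, hx, rfl⟩ := hp
    exact hadj x hx
  · intro p hp q hq hpq
    simp only [Finset.mem_image] at hp hq
    obtain ⟨x, hx, rfl⟩ := hp
    obtain ⟨x', hx', rfl⟩ := hq
    have hxx : x ≠ x' := by rintro rfl; exact hpq rfl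
    have hXne : ∀ a ∈ A', ∀ b ∈ A', a ≠ g b := by
      intro a ha b hb hab
      have : a ∈ S.Y := hab ▸ hgY b hb
      exact Finset.disjoint_left.mp S.hdisj (hAX ha) this
    refine ⟨hxx, hXne x hx x' hx', fun h => hXne x' hx' x hx h.symm, fun h => hxx (hinj hx hx' h)⟩
  · intro p hp q hq
    simp only [Finset.mem_image] at hp hq
    obtain ⟨x, hx, rfl⟩ := hp
    obtain ⟨x', hx', rfl⟩ := hq
    exact hreach x hx x' hx'
  · rw [Finset.card_image_of_injOn]
    intro a _ b _ h
    exact (Prod.mk.injEq _ _ _ _ ▸ h).1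

/-- two vertices of X with a common neighbor in a large subset W of Y -/
lemma common_nb {v v' : V} (hv : v ∈ S.X) (hv' : v' ∈ S.X)
    {W : Finset V} (hW : W ⊆ S.Y) (hcard : (S.n:ℝ) < 2 * W.card) :
    ∃ y ∈ W, S.G.Adj v y ∧ S.G.Adj v' y := by
  have h1 := S.nb_inter_lb hv hW
  have h2 := S.nb_inter_lb hv' hW
  have hd := S.hd
  have hlt : (W.card:ℝ) < ((nb S.G v ∩ W).card : ℝ) + ((nb S.G v' ∩ W).card : ℝ) := by
    linarith
  have hltn : W.card < (nb S.G v ∩ W).card + (nb S.G v' ∩ W).card := by exact_mod_cast hlt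
  have hne := inter_nonempty_of_card (Finset.inter_subset_right)
    (Finset.inter_subset_right) hltn
  obtain ⟨y, hy⟩ := hne
  simp only [Finset.mem_inter, mem_nb] at hy
  exact ⟨y, hy.1.2, hy.1.1, hy.2.1⟩

/-- The key rectangle lemma: a K-empty large rectangle yields a K'-connected matching
of size k, where every G-edge inside the rectangle is a K'-edge. -/
lemma rect_cm (K' : SimpleGraph V) {U W : Finset V}
    (hcol : ∀ x ∈ U, ∀ y ∈ W, S.G.Adj x y → K'.Adj x y)
    (hU : U ⊆ S.X) (hW : W ⊆ S.Y)
    (hUk : S.k ≤ U.card) (hWk : S.k ≤ W.card) (hsum : S.n + 1 ≤ U.card + W.card) :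
    ∃ M : Finset (V × V), IsConnectedMatching K' M ∧ M.card = S.k := by
  classical
  obtain ⟨U', hU'sub, hU'card⟩ := Finset.exists_subset_card_eq hUk
  have hU'X : U' ⊆ S.X := hU'sub.trans hU
  -- basic real facts
  have hd := S.hd
  have hkR := S.kR
  have hkR' := S.kR'
  have hWn2 : (S.n:ℝ)/2 ≤ (W.card:ℝ) := le_trans (le_trans hkR (by exact_mod_cast hWk)) le_rfl
  have hn1 : (1:ℝ) ≤ S.n := by exact_mod_cast S.hn
  -- the Hall family
  set t : V → Finset V := fun v => if v ∈ U' then W.filter (fun y => K'.Adj v y) else Finset.univ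
    with ht
  have htW : ∀ v ∈ U', (nb S.G v ∩ W) ⊆ t v := by
    intro v hv y hy
    simp only [Finset.mem_inter, mem_nb] at hy
    simp only [ht, if_pos hv, Finset.mem_filter]
    exact ⟨hy.2, hcol v (hU'sub hv) y hy.2 hy.1⟩
  have htcard : ∀ v ∈ U', S.d - ((S.n:ℝ) - W.card) ≤ ((t v).card : ℝ) := by
    intro v hv
    refine le_trans (S.nb_inter_lb (hU'X hv) hW) ?_
    exact_mod_cast Finset.card_le_card (htW v hv)
  -- Hall condition
  have hall : ∀ s : Finset V, s.card ≤ (s.biUnion t).card := by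
    intro s
    by_cases hsub : s ⊆ U'
    · rcases s.eq_empty_or_nonempty with rfl | ⟨v₀, hv₀⟩
      · simp
      rcases le_or_gt (s.card : ℝ) ((S.n:ℝ) - S.d) with hs | hs
      · have h1 : ((t v₀).card : ℝ) ≤ ((s.biUnion t).card : ℝ) := by
          exact_mod_cast Finset.card_le_card (Finset.subset_biUnion_of_mem t hv₀)
        have h2 := htcard v₀ (hsub hv₀)
        have : (s.card : ℝ) ≤ ((s.biUnion t).card : ℝ) := by linarith
        exact_mod_cast this
      · -- big s : every y ∈ W is in the biUnion
        have hWb : W ⊆ s.biUnion t := by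
          intro y hy
          have hyY : y ∈ S.Y := hW hy
          have h3 : S.d - ((S.n:ℝ) - U'.card) ≤ ((nb S.G y ∩ U').card : ℝ) :=
            S.swapXY.nb_inter_lb hyY hU'X
          rw [hU'card] at h3
          have hlt : (U'.card : ℝ) < ((nb S.G y ∩ U').card : ℝ) + (s.card:ℝ) := by
            rw [hU'card]; linarith
          have hltn : U'.card < (nb S.G y ∩ U').card + s.card := by exact_mod_cast hlt
          obtain ⟨v, hv⟩ := inter_nonempty_of_card Finset.inter_subset_right hsub hltn
          simp only [Finset.mem_inter, mem_nb] at hv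
          refine Finset.mem_biUnion.mpr ⟨v, hv.2, ?_⟩
          simp only [ht, if_pos (hsub hv.2), Finset.mem_filter]
          exact ⟨hy, hcol v (hU'sub (hsub hv.2)) y hy hv.1.1.symm⟩
        have h4 : s.card ≤ U'.card := Finset.card_le_card hsub
        have h5 : W.card ≤ (s.biUnion t).card := Finset.card_le_card hWb
        omega
    · obtain ⟨v, hv, hvn⟩ := Finset.not_subset.mp hsub
      have : (Finset.univ : Finset V) ⊆ s.biUnion t := by
        intro u _
        refine Finset.mem_biUnion.mpr ⟨v, hv, ?_⟩
        simp [ht, if_neg hvn]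
      have := Finset.card_le_card this
      have h6 := Finset.card_le_univ s
      have h7 : (Finset.univ : Finset V).card = Fintype.card V := Finset.card_univ
      omega
  -- get the injective choice function
  obtain ⟨f, hfinj, hft⟩ := (Finset.all_card_le_biUnion_card_iff_exists_injective t).mp hall
  have hfW : ∀ v ∈ U', f v ∈ W ∧ K'.Adj v (f v) := by
    intro v hv
    have := hft v
    simp only [ht, if_pos hv, Finset.mem_filter] at this
    exact this
  -- nonemptiness of candidate neighborhoods (for connectivity)
  have hnbW : ∀ v ∈ U', ∃ y ∈ W, S.G.Adj v y := by
    intro v hv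
    have h1 := S.nb_inter_lb (hU'X hv) hW
    have hpos : (0:ℝ) < ((nb S.G v ∩ W).card : ℝ) := by linarith
    have : 0 < (nb S.G v ∩ W).card := by exact_mod_cast hpos
    obtain ⟨y, hy⟩ := Finset.card_pos.mp this
    simp only [Finset.mem_inter, mem_nb] at hy
    exact ⟨y, hy.2, hy.1⟩
  -- connectivity
  have hreach : ∀ x ∈ U', ∀ x' ∈ U', K'.Reachable x x' := by
    intro x hx x' hx'
    have hcases : S.n + 1 ≤ 2 * W.card ∨ S.n + 1 ≤ 2 * U.card := by
      rcases le_or_gt (S.n+1) (2*W.card) with h | h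
      · exact Or.inl h
      · right; omega
    rcases hcases with hbig | hbig
    · have hWbig : (S.n:ℝ) < 2 * W.card := by
        have : (S.n:ℝ) + 1 ≤ 2 * W.card := by exact_mod_cast hbig
        linarith
      obtain ⟨y, hy, h1, h2⟩ := S.common_nb (hU'X hx) (hU'X hx') hW hWbig
      have k1 : K'.Adj x y := hcol x (hU'sub hx) y hy h1
      have k2 : K'.Adj x' y := hcol x' (hU'sub hx') y hy h2
      exact (k1.reachable).trans k2.symm.reachable
    · have hUbig : (S.n:ℝ) < 2 * U.card := by
        have : (S.n:ℝ) + 1 ≤ 2 * U.card := by exact_mod_cast hbig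
        linarith
      obtain ⟨y, hy, hxy⟩ := hnbW x hx
      obtain ⟨y', hy', hxy'⟩ := hnbW x' hx'
      obtain ⟨x'', hx'', h1, h2⟩ := S.swapXY.common_nb (hW hy) (hW hy') hU hUbig
      have k0 : K'.Adj x y := hcol x (hU'sub hx) y hy hxy
      have k0' : K'.Adj x' y' := hcol x' (hU'sub hx') y' hy' hxy'
      have k1 : K'.Adj x'' y := hcol x'' hx'' y hy h1.symm
      have k2 : K'.Adj x'' y' := hcol x'' hx'' y' hy' h2.symm
      exact k0.reachable.trans (k1.symm.reachable.trans (k2.reachable.trans k0'.symm.reachable))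
  obtain ⟨M, hM, hMcard⟩ := S.mkCM K' U' f (fun x hx => (hfW x hx).2)
    (fun a ha b hb h => hfinj h) hU'X (fun x hx => hW (hfW x hx).1) hreach
  exact ⟨M, hM, by rw [hMcard, hU'card]⟩

/-- Contrapositive form: a K-empty rectangle with k ≤ |U| is constrained. -/
lemma rect_bound (K K' : SimpleGraph V)
    (hsplit : ∀ u v, S.G.Adj u v → K.Adj u v ∨ K'.Adj u v)
    (hno : ∀ M : Finset (V × V), IsConnectedMatching K' M → M.card < S.k)
    {U W : Finset V} (hU : U ⊆ S.X) (hW : W ⊆ S.Y)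
    (hre : ∀ x ∈ U, ∀ y ∈ W, ¬ K.Adj x y)
    (hUk : S.k ≤ U.card) : W.card < S.k ∨ U.card + W.card ≤ S.n := by
  by_contra h
  push_neg at h
  obtain ⟨h1, h2⟩ := h
  obtain ⟨M, hM, hMc⟩ := S.rect_cm K'
    (fun x hx y hy hG => (hsplit x y hG).resolve_left (hre x hx y hy)) hU hW hUk h1 h2
  have := hno M hM
  omega


/-- basic facts about component parts -/
lemma cp_sub {K : SimpleGraph V} {Z : Finset V} {v : V} : cp K Z v ⊆ Z :=
  Finset.filter_subset _ _

lemma mem_cp_self {K : SimpleGraph V} {Z : Finset V} {v : V} (h : v ∈ Z) : v ∈ cp K Z v :=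
  mem_cp.mpr ⟨h, SimpleGraph.Reachable.refl v⟩

/-- neighbors (in K ≤ G) of a vertex x ∈ X lie in the Y-part of its component -/
lemma nb_sub_cpY {K : SimpleGraph V} (hKG : K ≤ S.G) {x v : V} (hx : x ∈ cp K S.X v) :
    nb K x ⊆ cp K S.Y v := by
  intro y hy
  rw [mem_nb] at hy
  rw [mem_cp] at hx ⊢
  exact ⟨S.nb_sub_Y hKG (cp_sub (mem_cp.mpr hx)) (mem_nb.mpr hy), hx.2.trans hy.reachable⟩

/-- there is no K-edge leaving a component: from X ∖ A to B -/
lemma cp_rect_empty {K : SimpleGraph V} (hKG : K ≤ S.G) (v : V) :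
    ∀ x ∈ S.X \ cp K S.X v, ∀ y ∈ cp K S.Y v, ¬ K.Adj x y := by
  intro x hx y hy hadj
  rw [Finset.mem_sdiff] at hx
  rw [mem_cp] at hy
  exact hx.2 (mem_cp.mpr ⟨hx.1, hy.2.trans hadj.symm.reachable⟩)

/-- The cover lemma: a fat component with no large connected matching has a small
"cover" structure obtained from the failure of Hall's condition. -/
lemma cover_lemma (K : SimpleGraph V) (hKG : K ≤ S.G)
    (hno : ∀ M : Finset (V × V), IsConnectedMatching K M → M.card < S.k)
    (x₀ : V) (hx₀ : x₀ ∈ S.X)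
    (hA : S.k ≤ (cp K S.X x₀).card) :
    ∃ σ T : Finset V, σ ⊆ cp K S.X x₀ ∧ T ⊆ cp K S.Y x₀ ∧ σ.Nonempty ∧
      ((cp K S.X x₀) \ σ).card + T.card < S.k ∧
      (∀ x ∈ σ, nb K x ⊆ T) ∧
      (∀ y ∈ (cp K S.Y x₀) \ T, nb K y ⊆ (cp K S.X x₀) \ σ) := by
  classical
  set A := cp K S.X x₀ with hAdef
  set Bp := cp K S.Y x₀ with hBdef
  set r := A.card - S.k with hrdef
  set t : V → Finset (V ⊕ Fin r) := fun v =>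
    if v ∈ A then ((nb K v).image Sum.inl) ∪ (Finset.univ.image (Sum.inr : Fin r → V ⊕ Fin r))
    else Finset.univ with ht
  have hAX : A ⊆ S.X := cp_sub
  -- Hall's condition must fail
  have hhall : ¬ (∀ s : Finset V, s.card ≤ (s.biUnion t).card) := by
    intro hall
    obtain ⟨f, hfinj, hft⟩ := (Finset.all_card_le_biUnion_card_iff_exists_injective t).mp hall
    set A' := A.filter (fun v => (f v).isLeft) with hA'
    have hA'card : S.k ≤ A'.card := by
      have hsplit : (A.filter (fun v => ¬ (f v).isLeft)).card ≤ r := by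
        have himg : (A.filter (fun v => ¬ (f v).isLeft)).image f ⊆
            Finset.univ.image (Sum.inr : Fin r → V ⊕ Fin r) := by
          intro z hz
          simp only [Finset.mem_image, Finset.mem_filter] at hz
          obtain ⟨v, ⟨hvA, hvr⟩, rfl⟩ := hz
          have := hft v
          rw [ht] at this
          simp only [if_pos hvA, Finset.mem_union] at this
          rcases this with h | h
          · exfalso
            simp only [Finset.mem_image] at h
            obtain ⟨y, _, hy⟩ := h
            rw [← hy] at hvr
            simp at hvr
          · exact h
        have h1 : (A.filter (fun v => ¬ (f v).isLeft)).card
            = ((A.filter (fun v => ¬ (f v).isLeft)).image f).card :=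
          (Finset.card_image_of_injective _ hfinj).symm
        have h2 := Finset.card_le_card himg
        have h3 : (Finset.univ.image (Sum.inr : Fin r → V ⊕ Fin r)).card = r := by
          rw [Finset.card_image_of_injective _ Sum.inr_injective, Finset.card_univ,
            Fintype.card_fin]
        omega
      have hcup : A ⊆ A' ∪ (A.filter (fun v => ¬ (f v).isLeft)) := by
        intro v hv
        by_cases hl : (f v).isLeft
        · exact Finset.mem_union_left _ (by rw [hA']; exact Finset.mem_filter.mpr ⟨hv, hl⟩)
        · exact Finset.mem_union_right _ (Finset.mem_filter.mpr ⟨hv, hl⟩)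
      have h4 := Finset.card_le_card hcup
      have h5 := Finset.card_union_le A' (A.filter (fun v => ¬ (f v).isLeft))
      omega
    -- extract the matched neighbor
    have hgood : ∀ v ∈ A', ∃ y, f v = Sum.inl y ∧ y ∈ nb K v := by
      intro v hv
      rw [hA', Finset.mem_filter] at hv
      have := hft v
      rw [ht] at this
      simp only [if_pos hv.1, Finset.mem_union] at this
      rcases this with h | h
      · simp only [Finset.mem_image] at h
        obtain ⟨y, hy1, hy2⟩ := h
        exact ⟨y, hy2.symm, hy1⟩
      · exfalso
        simp only [Finset.mem_image] at h
        obtain ⟨z, _, hz⟩ := h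
        rw [← hz] at hv
        simp at hv
    set g : V → V := fun v => Sum.elim id (fun _ => v) (f v) with hg
    have hgval : ∀ v ∈ A', g v ∈ nb K v ∧ f v = Sum.inl (g v) := by
      intro v hv
      obtain ⟨y, h1, h2⟩ := hgood v hv
      constructor
      · rw [hg]; simp only [h1, Sum.elim_inl, id]; exact h2
      · rw [hg]; simp only [h1, Sum.elim_inl, id]
    have hA'A : A' ⊆ A := Finset.filter_subset _ _
    obtain ⟨M, hM, hMcard⟩ := S.mkCM K A' g
      (fun v hv => mem_nb.mp (hgval v hv).1)
      (by
        intro a ha b hb hab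
        have h1 := (hgval a ha).2
        have h2 := (hgval b hb).2
        have : f a = f b := by rw [h1, h2, hab]
        exact hfinj this)
      (hA'A.trans hAX)
      (fun v hv => S.nb_sub_Y hKG (hAX (hA'A hv)) (hgval v hv).1)
      (by
        intro x hx x' hx'
        have h1 := (mem_cp.mp (hA'A hx)).2
        have h2 := (mem_cp.mp (hA'A hx')).2
        exact h1.symm.trans h2)
    have := hno M hM
    omega
  push_neg at hhall
  obtain ⟨s, hs⟩ := hhall
  have hsA : s ⊆ A := by
    intro v hv
    by_contra hvA
    have : (Finset.univ : Finset (V ⊕ Fin r)) ⊆ s.biUnion t := by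
      intro u _
      refine Finset.mem_biUnion.mpr ⟨v, hv, ?_⟩
      rw [ht]; simp [if_neg hvA]
    have h1 := Finset.card_le_card this
    have h2 : s.card ≤ Fintype.card V := Finset.card_le_univ s
    have h3 : (Finset.univ : Finset (V ⊕ Fin r)).card = Fintype.card V + r := by
      rw [Finset.card_univ, Fintype.card_sum, Fintype.card_fin]
    omega
  have hsne : s.Nonempty := by
    rcases s.eq_empty_or_nonempty with rfl | h
    · simp at hs
    · exact h
  set T := s.biUnion (nb K) with hT
  have hTB : T ⊆ Bp := by
    intro y hy
    rw [hT, Finset.mem_biUnion] at hy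
    obtain ⟨v, hv, hy⟩ := hy
    exact S.nb_sub_cpY hKG (hsA hv) hy
  -- compute the biUnion
  have hbiU : s.biUnion t = (T.image Sum.inl) ∪ (Finset.univ.image (Sum.inr : Fin r → V ⊕ Fin r)) := by
    apply Finset.Subset.antisymm
    · intro z hz
      rw [Finset.mem_biUnion] at hz
      obtain ⟨v, hv, hz⟩ := hz
      rw [ht] at hz
      simp only [if_pos (hsA hv), Finset.mem_union] at hz
      rcases hz with h | h
      · apply Finset.mem_union_left
        simp only [Finset.mem_image] at h ⊢
        obtain ⟨y, h1, h2⟩ := h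
        exact ⟨y, Finset.mem_biUnion.mpr ⟨v, hv, h1⟩, h2⟩
      · exact Finset.mem_union_right _ h
    · obtain ⟨v₀, hv₀⟩ := hsne
      intro z hz
      rw [Finset.mem_union] at hz
      rcases hz with h | h
      · simp only [Finset.mem_image] at h
        obtain ⟨y, h1, h2⟩ := h
        rw [hT, Finset.mem_biUnion] at h1
        obtain ⟨v, hv, h1⟩ := h1
        refine Finset.mem_biUnion.mpr ⟨v, hv, ?_⟩
        rw [ht]
        simp only [if_pos (hsA hv), Finset.mem_union]
        exact Or.inl (Finset.mem_image.mpr ⟨y, h1, h2⟩)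
      · refine Finset.mem_biUnion.mpr ⟨v₀, hv₀, ?_⟩
        rw [ht]
        simp only [if_pos (hsA hv₀), Finset.mem_union]
        exact Or.inr h
  have hbiUcard : (s.biUnion t).card = T.card + r := by
    rw [hbiU]
    rw [Finset.card_union_of_disjoint]
    · rw [Finset.card_image_of_injective _ Sum.inl_injective,
        Finset.card_image_of_injective _ Sum.inr_injective, Finset.card_univ, Fintype.card_fin]
    · simp only [Finset.disjoint_left, Finset.mem_image]
      rintro z ⟨y, _, rfl⟩ ⟨w, _, hw⟩
      exact Sum.inl_ne_inr hw.symm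
  refine ⟨s, T, hsA, hTB, hsne, ?_, ?_, ?_⟩
  · have h1 : (A \ s).card = A.card - s.card := Finset.card_sdiff_of_subset hsA
    have h2 : s.card ≤ A.card := Finset.card_le_card hsA
    omega
  · intro x hx y hy
    rw [hT, Finset.mem_biUnion]
    exact ⟨x, hx, hy⟩
  · intro y hy u hu
    rw [Finset.mem_sdiff] at hy
    rw [mem_nb] at hu
    have huX : u ∈ S.X := S.nb_sub_X hKG (cp_sub hy.1) (mem_nb.mpr hu)
    have huA : u ∈ A := by
      rw [mem_cp]
      exact ⟨huX, (mem_cp.mp hy.1).2.trans hu.reachable⟩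
    rw [Finset.mem_sdiff]
    refine ⟨huA, fun hus => hy.2 ?_⟩
    have : y ∈ nb K u := mem_nb.mpr hu.symm
    rw [hT, Finset.mem_biUnion]
    exact ⟨u, hus, this⟩

/-- the thin rule: if the X-part of a component is small, so is its Y-part -/
lemma thin_rule (K K' : SimpleGraph V) (hKG : K ≤ S.G)
    (hsplit : ∀ u v, S.G.Adj u v → K.Adj u v ∨ K'.Adj u v)
    (hno : ∀ M : Finset (V × V), IsConnectedMatching K' M → M.card < S.k)
    (v : V) (h : (cp K S.X v).card < S.k) : (cp K S.Y v).card < S.k := by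
  have hUk : S.k ≤ (S.X \ cp K S.X v).card := by
    have h1 : (S.X \ cp K S.X v).card = S.n - (cp K S.X v).card := by
      rw [Finset.card_sdiff_of_subset cp_sub, S.hX]
    have := S.hk2
    omega
  have := S.rect_bound K K' hsplit hno (Finset.sdiff_subset) cp_sub
    (S.cp_rect_empty hKG v) hUk
  rcases this with h1 | h1
  · exact h1
  · have h2 : (S.X \ cp K S.X v).card = S.n - (cp K S.X v).card := by
      rw [Finset.card_sdiff_of_subset cp_sub, S.hX]
    have h3 : (cp K S.X v).card ≤ S.n := by rw [← S.hX]; exact Finset.card_le_card cp_sub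
    omega


/-- degree bound from the cover: vertices of σ have few K-neighbors -/
lemma deg_from_cover {K : SimpleGraph V} {σ T : Finset V} {x : V}
    (hσT : ∀ x ∈ σ, nb K x ⊆ T) (hx : x ∈ σ) : (nb K x).card ≤ T.card :=
  Finset.card_le_card (hσT x hx)

/-- The endgame: a fat `R`-component together with a cover whose `T`-side is small
leads to a contradiction. -/
lemma end_lemma (x₀ : V) (hx₀ : x₀ ∈ S.X)
    (hfA : S.k ≤ (cp S.R S.X x₀).card) (hfB : S.k ≤ (cp S.R S.Y x₀).card)
    (σ T : Finset V) (hσA : σ ⊆ cp S.R S.X x₀) (hTB : T ⊆ cp S.R S.Y x₀)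
    (hσne : σ.Nonempty)
    (hcov : ((cp S.R S.X x₀) \ σ).card + T.card < S.k)
    (hσT : ∀ x ∈ σ, nb S.R x ⊆ T)
    (hTσ : ∀ y ∈ (cp S.R S.Y x₀) \ T, nb S.R y ⊆ (cp S.R S.X x₀) \ σ)
    (hbr : 2 * T.card + 1 ≤ S.k) : False := by
  classical
  set A := cp S.R S.X x₀ with hAdef
  set B' := cp S.R S.Y x₀ with hB'def
  have hAX : A ⊆ S.X := cp_sub
  have hB'Y : B' ⊆ S.Y := cp_sub
  -- numeric abbreviations
  set a := A.card
  set b := B'.card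
  set sc := (A \ σ).card with hscdef
  set tc := T.card with htcdef
  have hσcard : σ.card = a - sc := by
    have h1 : (A \ σ).card = a - σ.card := Finset.card_sdiff_of_subset hσA
    have h2 : σ.card ≤ a := Finset.card_le_card hσA
    omega
  have hsca : sc ≤ a := Finset.card_le_card (Finset.sdiff_subset)
  -- real versions of the basic bounds
  have hdR := S.hd
  have hk2R : (2*S.k : ℝ) ≤ S.n + 1 := by exact_mod_cast S.hk2
  have hk1R : (S.n : ℝ) ≤ 2*S.k := by exact_mod_cast S.hk1
  have hcovR : (sc:ℝ) + tc + 1 ≤ S.k := by exact_mod_cast hcov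
  have hbrR : 2*(tc:ℝ) + 1 ≤ S.k := by exact_mod_cast hbr
  have haR : (S.k:ℝ) ≤ a := by exact_mod_cast hfA
  have hbR : (S.k:ℝ) ≤ b := by exact_mod_cast hfB
  -- every x ∈ σ has small red degree hence big blue degree
  have hblue : ∀ x ∈ σ, S.d - tc ≤ ((nb S.B x).card : ℝ) := by
    intro x hx
    have h1 : (nb S.R x).card ≤ tc := deg_from_cover hσT hx
    have h2 := S.deg_sum x (Finset.mem_union_left _ (hAX (hσA hx)))
    have h1R : ((nb S.R x).card : ℝ) ≤ tc := by exact_mod_cast h1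
    linarith
  -- blue component Y-parts of σ-vertices are large
  have hQbig : ∀ x ∈ σ, S.d - tc ≤ ((cp S.B S.Y x).card : ℝ) := by
    intro x hx
    refine le_trans (hblue x hx) ?_
    exact_mod_cast Finset.card_le_card
      (S.nb_sub_cpY S.hBG (mem_cp_self (hAX (hσA hx))))
  have hdt : (S.n:ℝ)/2 < S.d - tc := by linarith
  -- pick a base vertex and define the blue component D
  obtain ⟨x₁, hx₁⟩ := hσne
  set P := cp S.B S.X x₁ with hPdef
  set Q := cp S.B S.Y x₁ with hQdef
  have hPX : P ⊆ S.X := cp_sub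
  have hQY : Q ⊆ S.Y := cp_sub
  have hqR : S.d - tc ≤ ((Q.card) : ℝ) := hQbig x₁ hx₁
  -- all of σ is inside P
  have hσP : σ ⊆ P := by
    intro x hx
    have h1 := hQbig x hx
    have hne : (Q ∩ cp S.B S.Y x).Nonempty := by
      apply inter_nonempty_of_card hQY cp_sub
      rw [S.hY]
      have : (S.n:ℝ) < (Q.card:ℝ) + ((cp S.B S.Y x).card:ℝ) := by linarith
      exact_mod_cast this
    exact mem_cp.mpr ⟨hAX (hσA hx), cp_eq_of_inter hne⟩
  -- Q is big, P is fat
  have hqk : S.k ≤ Q.card := by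
    have : (S.n:ℝ) < 2*(Q.card:ℝ) := by linarith
    have h2 : S.n < 2*Q.card := by exact_mod_cast this
    have h3 := S.hk2
    omega
  have hpk : S.k ≤ P.card := by
    by_contra hp
    push_neg at hp
    have h4 := S.thin_rule S.B S.R S.hBG (fun u v h => (S.hRB u v h).symm) S.hnoR x₁ hp
    rw [← hQdef] at h4
    omega
  -- cover lemma for the blue component
  obtain ⟨σ', T', hσ'P, hT'Q, hσ'ne, hcov', hσ'T', hT'σ'⟩ :=
    S.cover_lemma S.B S.hBG S.hnoB x₁ (hAX (hσA hx₁)) hpk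
  set p := P.card
  set q := Q.card
  set sc' := (P \ σ').card with hsc'def
  set tc' := T'.card with htc'def
  have hσ'card : σ'.card = p - sc' := by
    have h1 : (P \ σ').card = p - σ'.card := Finset.card_sdiff_of_subset hσ'P
    have h2 : σ'.card ≤ p := Finset.card_le_card hσ'P
    omega
  have hsc'p : sc' ≤ p := Finset.card_le_card (Finset.sdiff_subset)
  have hcov'R : (sc':ℝ) + tc' + 1 ≤ S.k := by exact_mod_cast hcov'
  have hpR : (S.k:ℝ) ≤ p := by exact_mod_cast hpk
  have hqkR : (S.k:ℝ) ≤ q := by exact_mod_cast hqk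
  have htq : tc' ≤ q := Finset.card_le_card hT'Q
  have htb : tc ≤ b := Finset.card_le_card hTB
  -- vertices of σ have blue degree at most q
  have hble : ∀ x ∈ σ, ((nb S.B x).card : ℝ) ≤ q := by
    intro x hx
    have : nb S.B x ⊆ Q := by
      have h1 := S.nb_sub_cpY S.hBG (hσP hx)
      exact h1
    exact_mod_cast Finset.card_le_card this
  -- t ≥ d - q
  have htdq : S.d - (q:ℝ) ≤ tc := by
    have h1 : (nb S.R x₁).card ≤ tc := deg_from_cover hσT hx₁
    have h2 := S.deg_sum x₁ (Finset.mem_union_left _ (hAX (hσA hx₁)))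
    have h3 := hble x₁ hx₁
    have h1R : ((nb S.R x₁).card : ℝ) ≤ tc := by exact_mod_cast h1
    linarith
  -- E-fact for the red component : b < k + t
  have hEb : b < S.k + tc := by
    have hre : ∀ x ∈ (S.X \ A) ∪ σ, ∀ y ∈ B' \ T, ¬ S.R.Adj x y := by
      intro x hx y hy hadj
      rw [Finset.mem_union] at hx
      rw [Finset.mem_sdiff] at hy
      rcases hx with hx | hx
      · exact S.cp_rect_empty S.hRG x₀ x hx y hy.1 hadj
      · exact hy.2 (hσT x hx (mem_nb.mpr hadj))
    have hZX : (S.X \ A) ∪ σ ⊆ S.X := Finset.union_subset (Finset.sdiff_subset) (hσA.trans hAX)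
    have hZcard : ((S.X \ A) ∪ σ).card = S.n - sc := by
      rw [Finset.card_union_of_disjoint]
      · rw [Finset.card_sdiff_of_subset hAX, S.hX, hσcard]
        have h3 : a ≤ S.n := by rw [← S.hX]; exact Finset.card_le_card hAX
        omega
      · rw [Finset.disjoint_left]
        intro u hu hu2
        exact (Finset.mem_sdiff.mp hu).2 (hσA hu2)
    have hZk : S.k ≤ ((S.X \ A) ∪ σ).card := by
      rw [hZcard]
      have := S.hk2
      omega
    have hWY : B' \ T ⊆ S.Y := (Finset.sdiff_subset).trans hB'Y
    have := S.rect_bound S.R S.B S.hRB S.hnoB hZX hWY hre hZk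
    have hWcard : (B' \ T).card = b - tc := Finset.card_sdiff_of_subset hTB
    rcases this with h | h
    · omega
    · rw [hZcard, hWcard] at h
      have := S.hk2
      omega
  -- E-fact for the blue component : q < k + t'
  have hEq : q < S.k + tc' := by
    have hre : ∀ x ∈ (S.X \ P) ∪ σ', ∀ y ∈ Q \ T', ¬ S.B.Adj x y := by
      intro x hx y hy hadj
      rw [Finset.mem_union] at hx
      rw [Finset.mem_sdiff] at hy
      rcases hx with hx | hx
      · exact S.cp_rect_empty S.hBG x₁ x hx y hy.1 hadj
      · exact hy.2 (hσ'T' x hx (mem_nb.mpr hadj))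
    have hZX : (S.X \ P) ∪ σ' ⊆ S.X := Finset.union_subset (Finset.sdiff_subset) (hσ'P.trans hPX)
    have hZcard : ((S.X \ P) ∪ σ').card = S.n - sc' := by
      rw [Finset.card_union_of_disjoint]
      · rw [Finset.card_sdiff_of_subset hPX, S.hX, hσ'card]
        have h3 : p ≤ S.n := by rw [← S.hX]; exact Finset.card_le_card hPX
        omega
      · rw [Finset.disjoint_left]
        intro u hu hu2
        exact (Finset.mem_sdiff.mp hu).2 (hσ'P hu2)
    have hZk : S.k ≤ ((S.X \ P) ∪ σ').card := by
      rw [hZcard]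
      have := S.hk2
      omega
    have hWY : Q \ T' ⊆ S.Y := (Finset.sdiff_subset).trans hQY
    have := S.rect_bound S.B S.R (fun u v h => (S.hRB u v h).symm) S.hnoR hZX hWY hre hZk
    have hWcard : (Q \ T').card = q - tc' := Finset.card_sdiff_of_subset hT'Q
    rcases this with h | h
    · omega
    · rw [hZcard, hWcard] at h
      have := S.hk2
      omega
  -- now the two cases according to which side of the blue cover is small
  have hbranch : 2 * tc' + 1 ≤ S.k ∨ 2 * sc' + 1 ≤ S.k := by omega
  rcases hbranch with hbr' | hbr'
  · -- CASE (i) : t' small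
    have hbr'R : 2*(tc':ℝ) + 1 ≤ S.k := by exact_mod_cast hbr'
    -- vertices of σ' have big red degree, so they lie in A
    have hred' : ∀ x ∈ σ', S.d - tc' ≤ ((nb S.R x).card : ℝ) := by
      intro x hx
      have h1 : (nb S.B x).card ≤ tc' := deg_from_cover hσ'T' hx
      have h2 := S.deg_sum x (Finset.mem_union_left _ (hPX (hσ'P hx)))
      have h1R : ((nb S.B x).card : ℝ) ≤ tc' := by exact_mod_cast h1
      linarith
    have hσ'A : σ' ⊆ A := by
      intro x hx
      have h1 : S.d - tc' ≤ ((cp S.R S.Y x).card : ℝ) := by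
        refine le_trans (hred' x hx) ?_
        exact_mod_cast Finset.card_le_card
          (S.nb_sub_cpY S.hRG (mem_cp_self (hPX (hσ'P hx))))
      have hne : (B' ∩ cp S.R S.Y x).Nonempty := by
        apply inter_nonempty_of_card hB'Y cp_sub
        rw [S.hY]
        have : (S.n:ℝ) < (b:ℝ) + ((cp S.R S.Y x).card:ℝ) := by linarith
        exact_mod_cast this
      exact mem_cp.mpr ⟨hPX (hσ'P hx), cp_eq_of_inter hne⟩
    -- σ and σ' are disjoint
    have hdisj' : Disjoint σ σ' := by
      rw [Finset.disjoint_left]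
      intro x hx hx'
      have h1 : (nb S.R x).card ≤ tc := deg_from_cover hσT hx
      have h2 : (nb S.B x).card ≤ tc' := deg_from_cover hσ'T' hx'
      have h3 := S.deg_sum x (Finset.mem_union_left _ (hAX (hσA hx)))
      have h1R : ((nb S.R x).card : ℝ) ≤ tc := by exact_mod_cast h1
      have h2R : ((nb S.B x).card : ℝ) ≤ tc' := by exact_mod_cast h2
      linarith
    -- t' ≥ d - b
    have htdb : S.d - (b:ℝ) ≤ tc' := by
      obtain ⟨x', hx'⟩ := hσ'ne
      have h1 : (nb S.B x').card ≤ tc' := deg_from_cover hσ'T' hx'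
      have h2 := S.deg_sum x' (Finset.mem_union_left _ (hPX (hσ'P hx')))
      have h3 : nb S.R x' ⊆ B' := by
        rw [hB'def]
        exact S.nb_sub_cpY S.hRG (hσ'A hx')
      have h3R : ((nb S.R x').card : ℝ) ≤ b := by exact_mod_cast Finset.card_le_card h3
      have h1R : ((nb S.B x').card : ℝ) ≤ tc' := by exact_mod_cast h1
      linarith
    -- b ≥ d - t'
    have hbdt' : S.d - (tc':ℝ) ≤ b := by
      obtain ⟨x', hx'⟩ := hσ'ne
      have h1 := hred' x' hx'
      have h3 : nb S.R x' ⊆ B' := by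
        rw [hB'def]
        exact S.nb_sub_cpY S.hRG (hσ'A hx')
      have h3R : ((nb S.R x').card : ℝ) ≤ b := by exact_mod_cast Finset.card_le_card h3
      linarith
    -- b + q > n, giving a vertex y* ∈ B' ∩ Q
    have hbq : (S.n:ℝ) < (b:ℝ) + q := by linarith
    have hy' : (B' ∩ Q).Nonempty := by
      apply inter_nonempty_of_card hB'Y hQY
      rw [S.hY]
      exact_mod_cast hbq
    obtain ⟨y', hy'⟩ := hy'
    rw [Finset.mem_inter] at hy'
    -- N(y*) ⊆ A ∪ P
    have hNy : nb S.G y' ⊆ A ∪ P := by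
      intro u hu
      rw [mem_nb] at hu
      rcases S.hRB y' u hu with h | h
      · apply Finset.mem_union_left
        have h4 : nb S.R y' ⊆ cp S.R S.X y' :=
          S.swapXY.nb_sub_cpY (K := S.R) S.hRG (mem_cp_self (v := y') (hB'Y hy'.1))
        have h5 : cp S.R S.X y' = A :=
          (cp_congr (mem_cp.mp hy'.1).2.symm).trans hAdef.symm
        rw [h5] at h4
        exact h4 (mem_nb.mpr h)
      · apply Finset.mem_union_right
        have h4 : nb S.B y' ⊆ cp S.B S.X y' :=
          S.swapXY.nb_sub_cpY (K := S.B) S.hBG (mem_cp_self (v := y') (hQY hy'.2))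
        have h5 : cp S.B S.X y' = P :=
          (cp_congr (mem_cp.mp hy'.2).2.symm).trans hPdef.symm
        rw [h5] at h4
        exact h4 (mem_nb.mpr h)
    -- d ≤ s + s'
    have hss' : S.d ≤ (sc:ℝ) + sc' := by
      have h1 : σ ∪ σ' ⊆ A ∩ P :=
        Finset.union_subset (Finset.subset_inter hσA hσP) (Finset.subset_inter hσ'A hσ'P)
      have h2 : σ.card + σ'.card ≤ (A ∩ P).card := by
        rw [← Finset.card_union_of_disjoint hdisj']
        exact Finset.card_le_card h1
      have h3 : (A ∪ P).card + (A ∩ P).card = a + p := Finset.card_union_add_card_inter A P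
      have h4 : (nb S.G y').card ≤ (A ∪ P).card := Finset.card_le_card hNy
      have h5 := S.hdeg y' (Finset.mem_union_right _ (hB'Y hy'.1))
      have h6 : (A ∪ P).card + (a - sc) + (p - sc') ≤ a + p := by
        rw [hσcard] at h2
        rw [hσ'card] at h2
        omega
      have h7 : (A ∪ P).card ≤ sc + sc' := by omega
      have h7R : ((A ∪ P).card : ℝ) ≤ (sc:ℝ) + sc' := by exact_mod_cast h7
      have h4R : ((nb S.G y').card:ℝ) ≤ ((A ∪ P).card : ℝ) := by exact_mod_cast h4
      linarith
    -- final contradiction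
    have hEqR : (q:ℝ) ≤ S.k - 1 + tc' := by
      have : (q:ℝ) + 1 ≤ S.k + tc' := by exact_mod_cast hEq
      linarith
    linarith
  · -- CASE (ii) : s' small
    have hbr'R : 2*(sc':ℝ) + 1 ≤ S.k := by exact_mod_cast hbr'
    -- vertices of Q \ T' lie in B'
    have hW'B : ∀ y ∈ Q \ T', y ∈ B' := by
      intro y hy
      have hyY : y ∈ S.Y := hQY (Finset.mem_sdiff.mp hy).1
      have h1 : (nb S.B y).card ≤ sc' := Finset.card_le_card (hT'σ' y hy)
      have h2 := S.deg_sum y (Finset.mem_union_right _ hyY)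
      have h1R : ((nb S.B y).card : ℝ) ≤ sc' := by exact_mod_cast h1
      have h3 : S.d - sc' ≤ ((cp S.R S.X y).card : ℝ) := by
        have h4' : nb S.R y ⊆ cp S.R S.X y :=
          S.swapXY.nb_sub_cpY (K := S.R) S.hRG (mem_cp_self (v := y) hyY)
        have h4 : ((nb S.R y).card : ℝ) ≤ ((cp S.R S.X y).card : ℝ) := by
          exact_mod_cast Finset.card_le_card h4'
        linarith
      have hne : (A ∩ cp S.R S.X y).Nonempty := by
        apply inter_nonempty_of_card hAX cp_sub
        rw [S.hX]
        have : (S.n:ℝ) < (a:ℝ) + ((cp S.R S.X y).card:ℝ) := by linarith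
        exact_mod_cast this
      exact mem_cp.mpr ⟨hyY, cp_eq_of_inter hne⟩
    -- B'\T and Q\T' are disjoint
    have hWW' : Disjoint (B' \ T) (Q \ T') := by
      rw [Finset.disjoint_left]
      intro y hy hy'
      have h1 : (nb S.R y).card ≤ sc := Finset.card_le_card (hTσ y hy)
      have h2 : (nb S.B y).card ≤ sc' := Finset.card_le_card (hT'σ' y hy')
      have h3 := S.deg_sum y
        (Finset.mem_union_right _ (hB'Y (Finset.mem_sdiff.mp hy).1))
      have h1R : ((nb S.R y).card : ℝ) ≤ sc := by exact_mod_cast h1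
      have h2R : ((nb S.B y).card : ℝ) ≤ sc' := by exact_mod_cast h2
      linarith
    -- hence q ≤ t + t'
    have hq_le : q ≤ tc + tc' := by
      have h1 : (B' \ T) ∪ (Q \ T') ⊆ B' :=
        Finset.union_subset (Finset.sdiff_subset)
          (fun y hy => hW'B y hy)
      have h2 := Finset.card_le_card h1
      rw [Finset.card_union_of_disjoint hWW'] at h2
      have e1 : (B'\T).card = b - tc := Finset.card_sdiff_of_subset hTB
      have e2 : (Q\T').card = q - tc' := Finset.card_sdiff_of_subset hT'Q
      omega
    -- σ and σ' are disjoint, both inside P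
    have hdisj2 : Disjoint σ σ' := by
      rw [Finset.disjoint_left]
      intro x hx hx'
      have h1 : (nb S.R x).card ≤ tc := deg_from_cover hσT hx
      have h2 : (nb S.B x).card ≤ tc' := deg_from_cover hσ'T' hx'
      have h3 := S.deg_sum x (Finset.mem_union_left _ (hAX (hσA hx)))
      have h1R : ((nb S.R x).card : ℝ) ≤ tc := by exact_mod_cast h1
      have h2R : ((nb S.B x).card : ℝ) ≤ tc' := by exact_mod_cast h2
      have h4 : (tc':ℝ) + 1 ≤ S.k := by
        have := hcov'R
        have h5 : (0:ℝ) ≤ sc' := by positivity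
        linarith
      linarith
    have ha_le : a ≤ sc + sc' := by
      have h1 : σ ∪ σ' ⊆ P := Finset.union_subset hσP hσ'P
      have h2 := Finset.card_le_card h1
      rw [Finset.card_union_of_disjoint hdisj2] at h2
      omega
    omega


/-- lower bound for the Y-part of the K-component of a vertex of X,
given an upper bound for the Y-part of its K'-component. -/
lemma part_lb (K K' : SimpleGraph V) (hKG : K ≤ S.G) (hK'G : K' ≤ S.G)
    (hsplit : ∀ u v, S.G.Adj u v → K.Adj u v ∨ K'.Adj u v)
    {M : ℝ} (hub : ∀ v ∈ S.X, ((cp K' S.Y v).card:ℝ) ≤ M) :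
    ∀ v ∈ S.X, S.d - M ≤ ((cp K S.Y v).card : ℝ) := by
  intro v hv
  have h1 : nb K v ⊆ cp K S.Y v := S.nb_sub_cpY hKG (mem_cp_self hv)
  have h2 : nb K' v ⊆ cp K' S.Y v := S.nb_sub_cpY hK'G (mem_cp_self hv)
  have h3 : nb S.G v ⊆ nb K v ∪ nb K' v := by
    intro u hu
    rw [mem_nb] at hu
    rcases hsplit v u hu with h | h
    · exact Finset.mem_union_left _ (mem_nb.mpr h)
    · exact Finset.mem_union_right _ (mem_nb.mpr h)
  have h4 := S.hdeg v (Finset.mem_union_left _ hv)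
  have h5 : (nb S.G v).card ≤ (cp K S.Y v).card + (cp K' S.Y v).card := by
    calc (nb S.G v).card ≤ (nb K v ∪ nb K' v).card := Finset.card_le_card h3
    _ ≤ (nb K v).card + (nb K' v).card := Finset.card_union_le _ _
    _ ≤ _ := Nat.add_le_add (Finset.card_le_card h1) (Finset.card_le_card h2)
  have h5R : ((nb S.G v).card:ℝ) ≤ ((cp K S.Y v).card:ℝ) + ((cp K' S.Y v).card:ℝ) := by
    exact_mod_cast h5
  have h6 := hub v hv
  linarith

/-- transfer a lower bound on X-parts at Y-vertices to X-parts at X-vertices -/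
lemma part_transfer (K : SimpleGraph V) {L L' : ℝ} (hL : 0 < L)
    (h1 : ∀ v ∈ S.X, L ≤ ((cp K S.Y v).card:ℝ))
    (h2 : ∀ y ∈ S.Y, L' ≤ ((cp K S.X y).card:ℝ)) :
    ∀ v ∈ S.X, L' ≤ ((cp K S.X v).card:ℝ) := by
  intro v hv
  have h3 := h1 v hv
  have hne : 0 < (cp K S.Y v).card := by exact_mod_cast lt_of_lt_of_le hL h3
  obtain ⟨y, hy⟩ := Finset.card_pos.mp hne
  rw [mem_cp] at hy
  have h4 := h2 y hy.1
  rwa [cp_congr hy.2.symm] at h4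

/-- upper bound on the Y-part of the K'-component of an X-vertex from the existence of
two other components -/
lemma opp_ub (K' : SimpleGraph V)
    (hthin : ∀ v, v ∈ S.X ∪ S.Y → (cp K' S.X v).card < S.k)
    {L : ℝ} (hlb : ∀ v ∈ S.X, L ≤ ((cp K' S.Y v).card:ℝ)) :
    ∀ v ∈ S.X, ((cp K' S.Y v).card:ℝ) ≤ S.n - 2*L := by
  intro v hv
  have hkn : S.k ≤ S.n := by have := S.hk1; have := S.hk2; have := S.hn; omega
  -- pick x₂
  have hc1 : 1 ≤ (S.X \ cp K' S.X v).card := by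
    have h1 : (S.X).card - (cp K' S.X v).card ≤ (S.X \ cp K' S.X v).card :=
      Finset.le_card_sdiff _ _
    have h2 := hthin v (Finset.mem_union_left _ hv)
    rw [S.hX] at h1
    omega
  obtain ⟨x₂, hx₂⟩ := Finset.card_pos.mp
    (show 0 < (S.X \ cp K' S.X v).card by omega)
  rw [Finset.mem_sdiff] at hx₂
  -- pick x₃
  have hc2 : 1 ≤ ((S.X \ cp K' S.X v) \ cp K' S.X x₂).card := by
    have h1 : (S.X \ cp K' S.X v).card - (cp K' S.X x₂).card
        ≤ ((S.X \ cp K' S.X v) \ cp K' S.X x₂).card := Finset.le_card_sdiff _ _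
    have h2 : (S.X).card - (cp K' S.X v).card ≤ (S.X \ cp K' S.X v).card :=
      Finset.le_card_sdiff _ _
    have h3 := hthin v (Finset.mem_union_left _ hv)
    have h4 := hthin x₂ (Finset.mem_union_left _ hx₂.1)
    have h5 := S.hk2
    rw [S.hX] at h2
    omega
  obtain ⟨x₃, hx₃⟩ := Finset.card_pos.mp
    (show 0 < ((S.X \ cp K' S.X v) \ cp K' S.X x₂).card by omega)
  rw [Finset.mem_sdiff, Finset.mem_sdiff] at hx₃
  have hx₃X : x₃ ∈ S.X := hx₃.1.1
  -- the three Y-parts are pairwise disjoint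
  have hd12 : Disjoint (cp K' S.Y v) (cp K' S.Y x₂) := by
    rw [Finset.disjoint_left]
    intro u hu hu2
    exact hx₂.2 (mem_cp.mpr ⟨hx₂.1, cp_eq_of_inter ⟨u, Finset.mem_inter.mpr ⟨hu, hu2⟩⟩⟩)
  have hd13 : Disjoint (cp K' S.Y v) (cp K' S.Y x₃) := by
    rw [Finset.disjoint_left]
    intro u hu hu2
    exact hx₃.1.2 (mem_cp.mpr ⟨hx₃X, cp_eq_of_inter ⟨u, Finset.mem_inter.mpr ⟨hu, hu2⟩⟩⟩)
  have hd23 : Disjoint (cp K' S.Y x₂) (cp K' S.Y x₃) := by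
    rw [Finset.disjoint_left]
    intro u hu hu2
    exact hx₃.2 (mem_cp.mpr ⟨hx₃X, cp_eq_of_inter ⟨u, Finset.mem_inter.mpr ⟨hu, hu2⟩⟩⟩)
  -- sum of cards at most n
  have hsub : (cp K' S.Y v) ∪ (cp K' S.Y x₂) ∪ (cp K' S.Y x₃) ⊆ S.Y :=
    Finset.union_subset (Finset.union_subset cp_sub cp_sub) cp_sub
  have hcard := Finset.card_le_card hsub
  rw [Finset.card_union_of_disjoint (by
      rw [Finset.disjoint_union_left]; exact ⟨hd13, hd23⟩),
    Finset.card_union_of_disjoint hd12, S.hY] at hcard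
  have h2 := hlb x₂ hx₂.1
  have h3 := hlb x₃ hx₃X
  have hcardR : ((cp K' S.Y v).card:ℝ) + ((cp K' S.Y x₂).card:ℝ) + ((cp K' S.Y x₃).card:ℝ)
      ≤ S.n := by exact_mod_cast hcard
  linarith

/-- one "round" of the growth argument -/
lemma round (M : ℝ) (hpos : 0 < S.d - M)
    (hubX : ∀ v ∈ S.X, ((cp S.R S.Y v).card:ℝ) ≤ M ∧ ((cp S.B S.Y v).card:ℝ) ≤ M)
    (hubY : ∀ v ∈ S.Y, ((cp S.R S.X v).card:ℝ) ≤ M ∧ ((cp S.B S.X v).card:ℝ) ≤ M) :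
    ∀ v, v ∈ S.X ∪ S.Y →
      (S.d - M ≤ ((cp S.R S.X v).card:ℝ) ∧ S.d - M ≤ ((cp S.R S.Y v).card:ℝ) ∧
       S.d - M ≤ ((cp S.B S.X v).card:ℝ) ∧ S.d - M ≤ ((cp S.B S.Y v).card:ℝ)) := by
  have hRY : ∀ v ∈ S.X, S.d - M ≤ ((cp S.R S.Y v).card : ℝ) :=
    S.part_lb S.R S.B S.hRG S.hBG S.hRB (fun v hv => (hubX v hv).2)
  have hBY : ∀ v ∈ S.X, S.d - M ≤ ((cp S.B S.Y v).card : ℝ) :=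
    S.part_lb S.B S.R S.hBG S.hRG (fun u v h => (S.hRB u v h).symm) (fun v hv => (hubX v hv).1)
  have hRX : ∀ v ∈ S.Y, S.d - M ≤ ((cp S.R S.X v).card : ℝ) :=
    S.swapXY.part_lb S.R S.B S.hRG S.hBG S.hRB (fun v hv => (hubY v hv).2)
  have hBX : ∀ v ∈ S.Y, S.d - M ≤ ((cp S.B S.X v).card : ℝ) :=
    S.swapXY.part_lb S.B S.R S.hBG S.hRG (fun u v h => (S.hRB u v h).symm)
      (fun v hv => (hubY v hv).1)
  have hRXX : ∀ v ∈ S.X, S.d - M ≤ ((cp S.R S.X v).card : ℝ) :=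
    S.part_transfer S.R hpos hRY hRX
  have hBXX : ∀ v ∈ S.X, S.d - M ≤ ((cp S.B S.X v).card : ℝ) :=
    S.part_transfer S.B hpos hBY hBX
  have hRYY : ∀ v ∈ S.Y, S.d - M ≤ ((cp S.R S.Y v).card : ℝ) :=
    S.swapXY.part_transfer S.R hpos hRX hRY
  have hBYY : ∀ v ∈ S.Y, S.d - M ≤ ((cp S.B S.Y v).card : ℝ) :=
    S.swapXY.part_transfer S.B hpos hBX hBY
  intro v hv
  rcases Finset.mem_union.mp hv with hv | hv
  · exact ⟨hRXX v hv, hRY v hv, hBXX v hv, hBY v hv⟩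
  · exact ⟨hRX v hv, hRYY v hv, hBX v hv, hBYY v hv⟩

/-- CASE 1 : all components of both colors are thin -/
lemma case_thin
    (hthin : ∀ v, v ∈ S.X ∪ S.Y →
      (cp S.R S.X v).card < S.k ∧ (cp S.R S.Y v).card < S.k ∧
      (cp S.B S.X v).card < S.k ∧ (cp S.B S.Y v).card < S.k) : False := by
  have hdR := S.hd
  have hk2R : (2*S.k : ℝ) ≤ S.n + 1 := by exact_mod_cast S.hk2
  have hk1R : (S.n : ℝ) ≤ 2*S.k := by exact_mod_cast S.hk1
  have hnR : (1:ℝ) ≤ S.n := by exact_mod_cast S.hn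
  set μ : ℝ := S.d - S.k + 1 with hμ
  have hμpos : 0 < μ := by rw [hμ]; linarith
  have hthinR : ∀ v, v ∈ S.X ∪ S.Y →
      (((cp S.R S.X v).card:ℝ) ≤ S.k - 1 ∧ ((cp S.R S.Y v).card:ℝ) ≤ S.k - 1 ∧
       ((cp S.B S.X v).card:ℝ) ≤ S.k - 1 ∧ ((cp S.B S.Y v).card:ℝ) ≤ S.k - 1) := by
    intro v hv
    obtain ⟨h1, h2, h3, h4⟩ := hthin v hv
    have c1 : ((cp S.R S.X v).card:ℝ) + 1 ≤ S.k := by exact_mod_cast h1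
    have c2 : ((cp S.R S.Y v).card:ℝ) + 1 ≤ S.k := by exact_mod_cast h2
    have c3 : ((cp S.B S.X v).card:ℝ) + 1 ≤ S.k := by exact_mod_cast h3
    have c4 : ((cp S.B S.Y v).card:ℝ) + 1 ≤ S.k := by exact_mod_cast h4
    exact ⟨by linarith, by linarith, by linarith, by linarith⟩
  -- the main induction
  have main : ∀ j : ℕ, ∀ v, v ∈ S.X ∪ S.Y →
      (μ + j/2 ≤ ((cp S.R S.X v).card:ℝ) ∧ μ + j/2 ≤ ((cp S.R S.Y v).card:ℝ) ∧
       μ + j/2 ≤ ((cp S.B S.X v).card:ℝ) ∧ μ + j/2 ≤ ((cp S.B S.Y v).card:ℝ)) := by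
    intro j
    induction j with
    | zero =>
      have h := S.round (S.k - 1) (by rw [hμ] at hμpos; linarith)
        (fun v hv => ⟨(hthinR v (Finset.mem_union_left _ hv)).2.1,
                      (hthinR v (Finset.mem_union_left _ hv)).2.2.2⟩)
        (fun v hv => ⟨(hthinR v (Finset.mem_union_right _ hv)).1,
                      (hthinR v (Finset.mem_union_right _ hv)).2.2.1⟩)
      intro v hv
      obtain ⟨h1, h2, h3, h4⟩ := h v hv
      have : S.d - (S.k - 1) = μ := by rw [hμ]; ring
      rw [this] at h1 h2 h3 h4
      simpa using ⟨h1, h2, h3, h4⟩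
    | succ j ih =>
      set L : ℝ := μ + j/2 with hL
      have hLpos : 0 < L := by
        have : (0:ℝ) ≤ (j:ℝ)/2 := by positivity
        rw [hL]; linarith
      -- upper bounds from three components
      have huR : ∀ v ∈ S.X, ((cp S.R S.Y v).card:ℝ) ≤ S.n - 2*L :=
        S.opp_ub S.R (fun v hv => (hthin v hv).1) (fun v hv => (ih v (Finset.mem_union_left _ hv)).2.1)
      have huB : ∀ v ∈ S.X, ((cp S.B S.Y v).card:ℝ) ≤ S.n - 2*L :=
        S.opp_ub S.B (fun v hv => (hthin v hv).2.2.1)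
          (fun v hv => (ih v (Finset.mem_union_left _ hv)).2.2.2)
      have huR' : ∀ v ∈ S.Y, ((cp S.R S.X v).card:ℝ) ≤ S.n - 2*L :=
        S.swapXY.opp_ub S.R
          (fun v hv => (hthin v (by
            rcases Finset.mem_union.mp hv with h | h
            · exact Finset.mem_union_right _ h
            · exact Finset.mem_union_left _ h)).2.1)
          (fun v hv => (ih v (Finset.mem_union_right _ hv)).1)
      have huB' : ∀ v ∈ S.Y, ((cp S.B S.X v).card:ℝ) ≤ S.n - 2*L :=
        S.swapXY.opp_ub S.B
          (fun v hv => (hthin v (by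
            rcases Finset.mem_union.mp hv with h | h
            · exact Finset.mem_union_right _ h
            · exact Finset.mem_union_left _ h)).2.2.2)
          (fun v hv => (ih v (Finset.mem_union_right _ hv)).2.2.1)
      have hjnn : (0:ℝ) ≤ (j:ℝ) := Nat.cast_nonneg j
      have hpos2 : 0 < S.d - (S.n - 2*L) := by
        rw [hL, hμ]; push_cast; linarith
      have h := S.round (S.n - 2*L) hpos2
        (fun v hv => ⟨huR v hv, huB v hv⟩)
        (fun v hv => ⟨huR' v hv, huB' v hv⟩)
      intro v hv
      obtain ⟨h1, h2, h3, h4⟩ := h v hv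
      have hstep : μ + ((j:ℝ)+1)/2 ≤ S.d - (S.n - 2*L) := by
        rw [hL, hμ]; push_cast; linarith
      have hcast : μ + ((j+1 : ℕ):ℝ)/2 = μ + ((j:ℝ)+1)/2 := by push_cast; ring
      rw [hcast]
      exact ⟨le_trans hstep h1, le_trans hstep h2, le_trans hstep h3, le_trans hstep h4⟩
  -- conclusion : take j = 2k at some vertex
  have hXne : S.X.Nonempty := by
    rw [← Finset.card_pos, S.hX]; exact S.hn
  obtain ⟨x, hx⟩ := hXne
  have h1 := (main (2*S.k) x (Finset.mem_union_left _ hx)).1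
  have h2 := (hthinR x (Finset.mem_union_left _ hx)).1
  have : ((2*S.k : ℕ):ℝ)/2 = (S.k:ℝ) := by push_cast; ring
  rw [this] at h1
  rw [hμ] at h1
  linarith


/-- CASE 2 : there is a fat R-component -/
lemma case_fat (x₀ : V) (hx₀ : x₀ ∈ S.X)
    (hfA : S.k ≤ (cp S.R S.X x₀).card) (hfB : S.k ≤ (cp S.R S.Y x₀).card) : False := by
  obtain ⟨σ, T, hσA, hTB, hσne, hcov, hσT, hTσ⟩ :=
    S.cover_lemma S.R S.hRG S.hnoR x₀ hx₀ hfA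
  rcases (show 2*T.card + 1 ≤ S.k ∨ 2*((cp S.R S.X x₀ \ σ).card) + 1 ≤ S.k by omega)
    with h | h
  · exact S.end_lemma x₀ hx₀ hfA hfB σ T hσA hTB hσne hcov hσT hTσ h
  · -- mirror: swap the sides; the base vertex of the component must be on the Y side
    have hk1 : 1 ≤ S.k := by have := S.hk1; have := S.hn; omega
    obtain ⟨y₀, hy₀⟩ := Finset.card_pos.mp (show 0 < (cp S.R S.Y x₀).card by omega)
    have hy₀Y : y₀ ∈ S.Y := (mem_cp.mp hy₀).1
    have hr : S.R.Reachable y₀ x₀ := (mem_cp.mp hy₀).2.symm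
    have e1 : cp S.R S.Y y₀ = cp S.R S.Y x₀ := cp_congr hr
    have e2 : cp S.R S.X y₀ = cp S.R S.X x₀ := cp_congr hr
    -- mirrored cover data
    have hσ'A : (cp S.R S.Y x₀ \ T) ⊆ cp S.R S.Y y₀ := by
      rw [e1]; exact Finset.sdiff_subset
    have hT'B : (cp S.R S.X x₀ \ σ) ⊆ cp S.R S.X y₀ := by
      rw [e2]; exact Finset.sdiff_subset
    have hσ'ne : (cp S.R S.Y x₀ \ T).Nonempty := by
      rw [← Finset.card_pos, Finset.card_sdiff_of_subset hTB]
      omega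
    have hcov' : ((cp S.R S.Y y₀ \ (cp S.R S.Y x₀ \ T)).card)
        + ((cp S.R S.X x₀ \ σ)).card < S.k := by
      rw [e1, Finset.sdiff_sdiff_eq_self hTB]
      omega
    have hσT' : ∀ y ∈ (cp S.R S.Y x₀ \ T), nb S.R y ⊆ (cp S.R S.X x₀ \ σ) := hTσ
    have hTσ' : ∀ x ∈ cp S.R S.X y₀ \ (cp S.R S.X x₀ \ σ),
        nb S.R x ⊆ cp S.R S.Y y₀ \ (cp S.R S.Y x₀ \ T) := by
      rw [e1, e2, Finset.sdiff_sdiff_eq_self hσA, Finset.sdiff_sdiff_eq_self hTB]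
      exact hσT
    have hbr' : 2 * (cp S.R S.X x₀ \ σ).card + 1 ≤ S.k := h
    exact S.swapXY.end_lemma y₀ hy₀Y
      (show S.k ≤ (cp S.R S.Y y₀).card by rw [e1]; exact hfB)
      (show S.k ≤ (cp S.R S.X y₀).card by rw [e2]; exact hfA)
      (cp S.R S.Y x₀ \ T) (cp S.R S.X x₀ \ σ) hσ'A hT'B hσ'ne hcov' hσT' hTσ' hbr'

/-- establish thin-ness of all components from the absence of fat components -/
lemma thin_of_nofat (K K' : SimpleGraph V) (hKG : K ≤ S.G)
    (hsplit : ∀ u w, S.G.Adj u w → K.Adj u w ∨ K'.Adj u w)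
    (hno : ∀ M : Finset (V × V), IsConnectedMatching K' M → M.card < S.k)
    (hnofat : ¬ ∃ x ∈ S.X, S.k ≤ (cp K S.X x).card ∧ S.k ≤ (cp K S.Y x).card)
    (v : V) :
    (cp K S.X v).card < S.k ∧ (cp K S.Y v).card < S.k := by
  have hk1 : 1 ≤ S.k := by have := S.hk1; have := S.hn; omega
  have hX : (cp K S.X v).card < S.k := by
    by_contra hX
    push_neg at hX
    have hY : (cp K S.Y v).card < S.k := by
      by_contra hY
      push_neg at hY
      obtain ⟨x, hx⟩ := Finset.card_pos.mp (show 0 < (cp K S.X v).card by omega)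
      have hxX : x ∈ S.X := (mem_cp.mp hx).1
      have hr : K.Reachable x v := (mem_cp.mp hx).2.symm
      exact hnofat ⟨x, hxX, by rw [cp_congr hr]; exact hX, by rw [cp_congr hr]; exact hY⟩
    have h5 : (cp K S.X v).card < S.k := S.swapXY.thin_rule K K' hKG hsplit hno v hY
    omega
  exact ⟨hX, S.thin_rule K K' hKG hsplit hno v hX⟩

-- the master contradiction
include S in
lemma false_of_cfg : False := by
  by_cases hfatR : ∃ x ∈ S.X, S.k ≤ (cp S.R S.X x).card ∧ S.k ≤ (cp S.R S.Y x).card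
  · obtain ⟨x, hx, h1, h2⟩ := hfatR
    exact S.case_fat x hx h1 h2
  by_cases hfatB : ∃ x ∈ S.X, S.k ≤ (cp S.B S.X x).card ∧ S.k ≤ (cp S.B S.Y x).card
  · obtain ⟨x, hx, h1, h2⟩ := hfatB
    exact S.swapRB.case_fat x hx h1 h2
  apply S.case_thin
  intro v _
  obtain ⟨h1, h2⟩ := S.thin_of_nofat S.R S.B S.hRG S.hRB S.hnoB hfatR v
  obtain ⟨h3, h4⟩ := S.thin_of_nofat S.B S.R S.hBG
    (fun u w h => (S.hRB u w h).symm) S.hnoR hfatB v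
  exact ⟨h1, h2, h3, h4⟩

end Cfg
end MCM

open MCM in
/-- Monochromatic connected matching in a 2-colored balanced bipartite graph. -/
theorem mono_connected_matching_high_degree (n : ℕ) (δ : ℝ) (hlo : (3/4 : ℝ) ≤ δ) (hhi : δ ≤ (1 : ℝ))
    (G R B : SimpleGraph (Fin n ⊕ Fin n))
    (hbip : G ≤ completeBipartiteGraph (Fin n) (Fin n))
    (hcol : R ⊔ B = G)
    (hdeg : ∀ v, δ * n ≤ ((G.neighborSet v).ncard : ℝ)) :
    ∃ (K : SimpleGraph (Fin n ⊕ Fin n)), (K = R ∨ K = B) ∧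
      ∃ M : Finset ((Fin n ⊕ Fin n) × (Fin n ⊕ Fin n)),
        IsConnectedMatching K M ∧ (n : ℝ) / 2 ≤ (M.card : ℝ) := by
  classical
  rcases Nat.eq_zero_or_pos n with rfl | hn
  · refine ⟨R, Or.inl rfl, ∅, ⟨?_, ?_, ?_⟩, by norm_num⟩ <;> simp
  by_contra hcon
  push_neg at hcon
  set k : ℕ := (n+1)/2 with hk
  have hkhalf : (n:ℝ)/2 ≤ (k:ℝ) := by
    have h1 : n ≤ 2*k := by omega
    have : (n:ℝ) ≤ 2*k := by exact_mod_cast h1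
    linarith
  have hnoR : ∀ M : Finset ((Fin n ⊕ Fin n) × (Fin n ⊕ Fin n)),
      IsConnectedMatching R M → M.card < k := by
    intro M hM
    have h1 := hcon R (Or.inl rfl) M hM
    have h2 : (M.card:ℝ) < (k:ℝ) := lt_of_lt_of_le h1 hkhalf
    exact_mod_cast h2
  have hnoB : ∀ M : Finset ((Fin n ⊕ Fin n) × (Fin n ⊕ Fin n)),
      IsConnectedMatching B M → M.card < k := by
    intro M hM
    have h1 := hcon B (Or.inr rfl) M hM
    have h2 : (M.card:ℝ) < (k:ℝ) := lt_of_lt_of_le h1 hkhalf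
    exact_mod_cast h2
  set X : Finset (Fin n ⊕ Fin n) := Finset.univ.image Sum.inl with hXdef
  set Y : Finset (Fin n ⊕ Fin n) := Finset.univ.image Sum.inr with hYdef
  have hmemX : ∀ v, v ∈ X ↔ v.isLeft := by
    intro v
    rw [hXdef]
    cases v <;> simp
  have hmemY : ∀ v, v ∈ Y ↔ v.isRight := by
    intro v
    rw [hYdef]
    cases v <;> simp
  have hRG : R ≤ G := by rw [← hcol]; exact le_sup_left
  have hBG : B ≤ G := by rw [← hcol]; exact le_sup_right
  set S : Cfg (Fin n ⊕ Fin n) :=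
    { n := n
      k := k
      d := δ * n
      G := G, R := R, B := B, X := X, Y := Y
      hn := hn
      hk1 := by omega
      hk2 := by omega
      hd := by
        have h0 : (0:ℝ) ≤ n := Nat.cast_nonneg n
        nlinarith
      hX := by rw [hXdef, Finset.card_image_of_injective _ Sum.inl_injective,
        Finset.card_univ, Fintype.card_fin]
      hY := by rw [hYdef, Finset.card_image_of_injective _ Sum.inr_injective,
        Finset.card_univ, Fintype.card_fin]
      hdisj := by
        rw [Finset.disjoint_left]
        intro u hu hu2
        rw [hmemX] at hu
        rw [hmemY] at hu2
        cases u <;> simp_all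
      hRG := hRG
      hBG := hBG
      hRB := by
        intro u v h
        rw [← hcol] at h
        exact h
      hbip := by
        intro u v h
        have h2 := hbip h
        rcases h2 with ⟨h3, h4⟩ | ⟨h3, h4⟩
        · exact Or.inl ⟨(hmemX u).mpr h3, (hmemY v).mpr h4⟩
        · exact Or.inr ⟨(hmemY u).mpr h3, (hmemX v).mpr h4⟩
      hdeg := by
        intro v _
        have h1 : G.neighborSet v = ↑(nb G v) := by
          ext u
          simp [nb, SimpleGraph.mem_neighborSet]
        have h2 := hdeg v
        rw [h1, Set.ncard_coe_finset] at h2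
        exact h2
      hnoR := hnoR
      hnoB := hnoB } with hS
  exact S.false_of_cfg
end

section
/- For every positive integer n there exists a 2-coloring of the edges of K_{n,n} in which every monochromatic path has at most 2⌈n/2⌉ vertices. Concretely: partition X into X₁, X₂ and Y into Y₁, Y₂ with |X₁| = |Y₁| = ⌈n/2⌉ and |X₂| = |Y₂| = ⌊n/2⌋; color all edges in [X₁,Y₁] and [X₂,Y₂] blue and all edges in [X₁,Y₂] and [X₂,Y₁] red. Then the longest monochromatic path has exactly 2⌈n/2⌉ vertices. -/
/-!
Let `m = ⌈n/2⌉` and call a vertex of either side *low* if its index is `< m`. Blue edges join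
vertices with the same low/high label, red edges vertices with different labels; red is thus
"same label" for the labelling obtained by flipping the labels on `Y`. An edge of either colour
preserves the corresponding labelling, so a monochromatic path lies inside one label class, which
has at most `m` vertices on each side. The low vertices span a blue `K_{m,m}`, and the zigzag
`x₀ y₀ x₁ y₁ … x_{m-1} y_{m-1}` through it is a blue path on `2m` vertices.
-/

open SimpleGraph Set

namespace SimpleGraph

variable {V β : Type*}

def sameLabel (G : SimpleGraph V) (ℓ : V → β) : SimpleGraph V where
  Adj u v := G.Adj u v ∧ ℓ u = ℓ v
  symm := ⟨fun _ _ h => ⟨h.1.symm, h.2.symm⟩⟩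
  loopless := ⟨fun _ h => h.1.ne rfl⟩

variable {G : SimpleGraph V} {ℓ : V → β}

@[simp]
lemma sameLabel_adj {u v : V} :
    (G.sameLabel ℓ).Adj u v ↔ G.Adj u v ∧ ℓ u = ℓ v := Iff.rfl

lemma Walk.label_eq_of_mem_support {u v w : V}
    (p : (G.sameLabel ℓ).Walk u v) (hw : w ∈ p.support) : ℓ w = ℓ u := by
  induction p with
  | nil => rw [List.mem_singleton.1 hw]
  | cons h q ih =>
    rcases List.mem_cons.1 (Walk.support_cons h q ▸ hw) with rfl | hw
    · rfl
    · exact (ih hw).trans h.2.symm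

lemma sameLabel_sup_sameLabel_not {α γ : Type*} (a : α → Bool) (b : γ → Bool) :
    (completeBipartiteGraph α γ).sameLabel (Sum.elim a (!b ·)) ⊔
      (completeBipartiteGraph α γ).sameLabel (Sum.elim a b) = completeBipartiteGraph α γ := by
  ext (x | y) (x | y) <;> simp <;> cases a _ <;> cases b _ <;> simp

open Finset in
lemma Walk.IsPath.length_lt_card_label [Fintype V] [DecidableEq β] {u v : V}
    {p : (G.sameLabel ℓ).Walk u v} (hp : p.IsPath) :
    p.length < #{w | ℓ w = ℓ u} := by
  classical
  calc p.length < p.support.length := by rw [p.length_support]; omega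
    _ = #p.support.toFinset := (List.toFinset_card_of_nodup hp.support_nodup).symm
    _ ≤ #{w | ℓ w = ℓ u} := card_le_card fun w hw =>
        mem_filter.2 ⟨mem_univ w, p.label_eq_of_mem_support (List.mem_toFinset.1 hw)⟩

lemma exists_isPath_of_isChain {l : List V} (hne : l ≠ [])
    (hchain : l.IsChain G.Adj) (hnodup : l.Nodup) :
    ∃ (u v : V) (p : G.Walk u v), p.IsPath ∧ p.length + 1 = l.length := by
  refine ⟨_, _, Walk.ofSupport l hne hchain, ?_, ?_⟩
  · rw [Walk.isPath_def, Walk.support_ofSupport]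
    exact hnodup
  · rw [Walk.length_ofSupport]
    have := List.length_pos_of_ne_nil hne
    omega

end SimpleGraph

open Finset in
lemma card_filter_sumElim {α γ β : Type*} [Fintype α] [Fintype γ] [DecidableEq β]
    (a : α → β) (b : γ → β) (t : β) :
    #{v | Sum.elim a b v = t} = #{x | a x = t} + #{y | b y = t} := by
  rw [card_filter, card_filter, card_filter, Fintype.sum_sum_type]
  rfl

open Finset in
lemma card_filter_decide_val_lt_eq_le {n m : ℕ} (h : n ≤ 2 * m) (t : Bool) :
    #{x : Fin n | decide (x.val < m) = t} ≤ m := by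
  cases t
  · simp only [decide_eq_false_iff_not, filter_not, card_sdiff_of_subset (filter_subset _ _),
      Fin.card_filter_val_lt, card_univ, Fintype.card_fin]
    omega
  · simp only [decide_eq_true_eq, Fin.card_filter_val_lt]
    omega

def zigzag (n : ℕ) [NeZero n] (i : ℕ) : Fin n ⊕ Fin n :=
  if Even i then .inl (Fin.ofNat n (i / 2)) else .inr (Fin.ofNat n (i / 2))

section zigzag

variable {n : ℕ} [NeZero n]

lemma sumElim_zigzag {β : Type*} (a : Fin n → β) (i : ℕ) :
    Sum.elim a a (zigzag n i) = a (Fin.ofNat n (i / 2)) := by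
  unfold zigzag
  split_ifs <;> rfl

lemma completeBipartiteGraph_adj_zigzag (i : ℕ) :
    (completeBipartiteGraph (Fin n) (Fin n)).Adj (zigzag n i) (zigzag n (i + 1)) := by
  unfold zigzag
  by_cases hi : Even i <;> simp [hi, Nat.even_add_one]

lemma zigzag_injOn : Set.InjOn (zigzag n) (Set.Iio (2 * n)) := by
  intro i hi j hj hij
  simp only [Set.mem_Iio] at hi hj
  unfold zigzag at hij
  by_cases hi' : Even i <;> by_cases hj' : Even j <;>
    simp [hi', hj', Fin.ext_iff, Nat.mod_eq_of_lt (by omega : i / 2 < n),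
      Nat.mod_eq_of_lt (by omega : j / 2 < n)] at hij <;>
    rw [Nat.even_iff] at hi' hj' <;> omega

end zigzag

lemma exists_isPath_sameLabel_sumElim {n m : ℕ} {β : Type*} (a : Fin n → β) (t : β)
    (hm : 0 < m) (hmn : m ≤ n) (ha : ∀ x : Fin n, x.val < m → a x = t) :
    ∃ (u v : Fin n ⊕ Fin n)
      (p : ((completeBipartiteGraph (Fin n) (Fin n)).sameLabel (Sum.elim a a)).Walk u v),
      p.IsPath ∧ p.length + 1 = 2 * m := by
  have : NeZero n := ⟨by omega⟩
  have hlabel : ∀ i < 2 * m, Sum.elim a a (zigzag n i) = t := fun i hi => by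
    rw [sumElim_zigzag]
    exact ha _ (by rw [Fin.val_ofNat, Nat.mod_eq_of_lt (by omega)]; omega)
  simpa using exists_isPath_of_isChain (l := (List.range (2 * m)).map (zigzag n))
    (by simp; omega)
    (List.isChain_map _ |>.2 <| (List.isChain_range _ _).2 fun i hi =>
      SimpleGraph.sameLabel_adj.2 ⟨completeBipartiteGraph_adj_zigzag i,
        (hlabel i (by omega)).trans (hlabel _ (by omega)).symm⟩)
    (List.nodup_range.map_on fun i hi j hj => zigzag_injOn
      (by simp at hi ⊢; omega) (by simp at hj ⊢; omega))

open Finset in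
/-- There is a 2-coloring of the edges of `K_{n,n}` in which every monochromatic
path has at most `2⌈n/2⌉` vertices, and some monochromatic path has exactly
`2⌈n/2⌉` vertices. -/
theorem extremal_coloring_for_paths (n : ℕ) (hn : 0 < n) :
    ∃ R B : SimpleGraph (Fin n ⊕ Fin n),
      R ⊔ B = completeBipartiteGraph (Fin n) (Fin n) ∧
      (∀ (K : SimpleGraph (Fin n ⊕ Fin n)), (K = R ∨ K = B) →
        ∀ (u v : Fin n ⊕ Fin n) (p : K.Walk u v), p.IsPath →
          p.length + 1 ≤ 2 * ((n + 1) / 2)) ∧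
      (∃ (K : SimpleGraph (Fin n ⊕ Fin n)), (K = R ∨ K = B) ∧
        ∃ (u v : Fin n ⊕ Fin n) (p : K.Walk u v), p.IsPath ∧
          p.length + 1 = 2 * ((n + 1) / 2)) := by
  set m := (n + 1) / 2
  let low : Fin n → Bool := fun x => decide (x.val < m)
  have hfiber (t : Bool) : #{x | low x = t} ≤ m := card_filter_decide_val_lt_eq_le (by omega) t
  refine ⟨_, _, sameLabel_sup_sameLabel_not low low, ?_, _, .inr rfl,
    exists_isPath_sameLabel_sumElim low true (by omega) (by omega) fun _ => decide_eq_true⟩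
  rintro K (rfl | rfl) u v p hp <;> refine hp.length_lt_card_label.trans_le ?_ <;>
    rw [card_filter_sumElim]
  · simp only [Bool.not_eq_eq_eq_not]
    linarith [hfiber (Sum.elim low (!low ·) u), hfiber (!Sum.elim low (!low ·) u)]
  · linarith [hfiber (Sum.elim low low u)]
end

section
/- Let G be a bipartite graph with parts U = {u₁,…,u_m} and V = {v₁,…,v_m}, m ≥ 2, with d(u₁) ≤ … ≤ d(u_m) and d(v₁) ≤ … ≤ d(v_m). Let j be the smallest index with d(u_j) ≤ j+1 and k the smallest index with d(v_k) ≤ k+1 (if such indices exist). If d(u_j) + d(v_k) ≥ m + 2, then G is Hamiltonian bi-connected: for every x ∈ U and y ∈ V there is a Hamiltonian path of G with endpoints x and y. -/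
/-!
Bipartite Bondy–Chvátal closure. Let `s`, `t` lie on opposite sides, be non-adjacent, and have
`d(s) + d(t) ≥ m + 2`. A Hamiltonian path of `G + st` using `st` splits as `… s | t …`. If some
consecutive pair `u w` of the path has `s ~ u` and `t ~ w`, reversing the segment between the two
pairs gives a Hamiltonian path of `G` with the same ends. Otherwise the predecessor of each
neighbour of `t` other than the first vertex is a non-neighbour of `s` on the side opposite to `s`,
so `d(t) - 1 ≤ m - d(s)`, a contradiction.

Starting from `G`, keep adding the non-edge `u₀ v₀` of largest degree sum. This sum is at least
`m + 2`: otherwise the `m - d(v₀)` non-neighbours of `v₀` all have degree at most `d(u₀)`, so one of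
them, `u_i`, has `i + 2 ≥ m - d(v₀) + 1 ≥ d(u₀)`, and the minimality of `j` gives `d(u_j) ≤ d(u₀)`.
Symmetrically `d(v_k) ≤ d(v₀)`, contradicting `d(u_j) + d(v_k) ≥ m + 2`. The process ends at the
complete bipartite graph, which has a Hamiltonian path between any `x ∈ U` and `y ∈ V`.
-/

open SimpleGraph Set

namespace List

variable {α β : Type*}

def interleaveSum : List α → List β → List (α ⊕ β)
  | a :: as, b :: bs => .inl a :: .inr b :: interleaveSum as bs
  | _, _ => []

theorem isChain_interleaveSum (us : List α) (vs : List β) :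
    (interleaveSum us vs).IsChain (completeBipartiteGraph α β).Adj := by
  suffices ∀ (us : List α) (vs : List β) (b : β),
      (.inr b :: interleaveSum us vs).IsChain (completeBipartiteGraph α β).Adj by
    cases us <;> cases vs <;> simp [interleaveSum, this]
  intro us
  induction us with
  | nil => simp [interleaveSum]
  | cons a as ih => rintro (_ | ⟨b', bs⟩) b <;> simp [interleaveSum, ih]

variable {us : List α} {vs : List β}

theorem mem_interleaveSum (h : us.length = vs.length) {v : α ⊕ β} :
    v ∈ interleaveSum us vs ↔ v.elim (· ∈ us) (· ∈ vs) := by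
  induction us generalizing vs with
  | nil => cases vs <;> cases v <;> simp_all [interleaveSum]
  | cons a as ih => cases vs <;> cases v <;> simp_all [interleaveSum]

theorem nodup_interleaveSum (h : us.length = vs.length) (hus : us.Nodup) (hvs : vs.Nodup) :
    (interleaveSum us vs).Nodup := by
  induction us generalizing vs with
  | nil => cases vs <;> simp_all [interleaveSum]
  | cons a as ih => cases vs <;> simp_all [interleaveSum, mem_interleaveSum]

theorem getLast?_interleaveSum (h : us.length = vs.length) :
    (interleaveSum us vs).getLast? = vs.getLast?.map .inr := by
  induction us generalizing vs with
  | nil => cases vs <;> simp_all [interleaveSum]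
  | cons a as ih =>
    rcases vs with _ | ⟨b, bs⟩
    · simp at h
    · have := ih (vs := bs) (by simpa using h)
      cases as <;> cases bs <;> simp_all [interleaveSum]

theorem exists_nodup_forall_mem_head?_eq [Finite α] (x : α) :
    ∃ l : List α, l.Nodup ∧ (∀ z, z ∈ l) ∧ l.head? = some x ∧ l.length = Nat.card α := by
  classical
  have := Fintype.ofFinite α
  have hnd := Finset.univ.nodup_toList (α := α)
  have hx : x ∈ Finset.univ.toList := by simp
  refine ⟨x :: Finset.univ.toList.erase x, nodup_cons.2 ⟨hnd.not_mem_erase, hnd.erase x⟩,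
    fun z => ?_, rfl, ?_⟩
  · rcases eq_or_ne z x with rfl | hz
    · exact mem_cons_self
    · exact mem_cons_of_mem _ ((hnd.mem_erase_iff).2 ⟨hz, by simp⟩)
  · rw [length_cons, length_erase_of_mem hx, Finset.length_toList, Finset.card_univ,
      Nat.card_eq_fintype_card]
    have := Fintype.card_pos_iff.2 ⟨x⟩
    omega

end List

theorem Sum.ncard_setOf_isLeft_ne {α β : Type*} (hcard : Nat.card α = Nat.card β) (s : α ⊕ β) :
    {v : α ⊕ β | v.isLeft ≠ s.isLeft}.ncard = Nat.card α := by
  cases s with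
  | inl =>
    rw [hcard, ← Set.ncard_range_of_injective Sum.inr_injective]
    congr; ext v; cases v <;> simp
  | inr =>
    rw [← Set.ncard_range_of_injective Sum.inl_injective]
    congr; ext v; cases v <;> simp

theorem Fin.apply_le_of_le_ncard_add_one {m : ℕ} {f : Fin m → ℕ} (hf : Monotone f) {j : Fin m}
    (hjmin : ∀ i < j, (i : ℕ) + 2 < f i) {r : ℕ} (hne : ∃ i, f i ≤ r)
    (hr : r ≤ {i | f i ≤ r}.ncard + 1) : f j ≤ r := by
  obtain ⟨i, hfi : f i ≤ r, himax⟩ := Set.exists_max_image {i | f i ≤ r} id (Set.toFinite _) hne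
  have hS : {i | f i ≤ r}.ncard ≤ i + 1 := by
    calc {i | f i ≤ r}.ncard ≤ (Set.Iic i).ncard := Set.ncard_le_ncard fun k hk => himax k hk
      _ = i + 1 := by rw [Set.ncard_eq_toFinset_card', Set.toFinset_Iic, Fin.card_Iic]
  have hji : j ≤ i := not_lt.1 fun hij => by have := hjmin i hij; omega
  exact (hf hji).trans hfi

namespace SimpleGraph

section HamiltonianList

variable {V : Type*} {G H : SimpleGraph V} {a b s t : V} {L : List V}

structure IsHamiltonianList (G : SimpleGraph V) (a b : V) (L : List V) : Prop where
  isChain : L.IsChain G.Adj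
  head?_eq : L.head? = some a
  getLast?_eq : L.getLast? = some b
  nodup : L.Nodup
  mem : ∀ v, v ∈ L

theorem IsHamiltonianList.exists_walk (hL : G.IsHamiltonianList a b L) :
    ∃ p : G.Walk a b, p.IsPath ∧ ∀ v, v ∈ p.support := by
  have hne : L ≠ [] := by rintro rfl; exact absurd hL.head?_eq (by simp)
  obtain rfl : L.head hne = a := by simpa [List.head?_eq_some_head hne] using hL.head?_eq
  obtain rfl : L.getLast hne = b := by
    simpa [List.getLast?_eq_some_getLast hne] using hL.getLast?_eq
  refine ⟨Walk.ofSupport L hne hL.isChain, ?_, ?_⟩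
  · rw [Walk.isPath_def, Walk.support_ofSupport]; exact hL.nodup
  · simpa only [Walk.support_ofSupport] using hL.mem

theorem IsHamiltonianList.mono (hGH : G ≤ H) (hL : G.IsHamiltonianList a b L) :
    H.IsHamiltonianList a b L :=
  { hL with isChain := hL.isChain.imp fun _ _ h => hGH h }

theorem isChain_of_isChain_sup_edge (hL : L.IsChain (H ⊔ edge s t).Adj) (hst : s ∉ L ∨ t ∉ L) :
    L.IsChain H.Adj := by
  refine hL.imp_of_mem_imp fun v w hv hw hvw => ?_
  rcases hvw with hvw | hvw
  · exact hvw
  · rw [edge_adj] at hvw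
    rcases hvw.1 with ⟨rfl, rfl⟩ | ⟨rfl, rfl⟩ <;> tauto

theorem exists_eq_append_cons_cons_of_isChain_sup_edge (hL : L.IsChain (H ⊔ edge s t).Adj)
    (hnd : L.Nodup) (hH : ¬L.IsChain H.Adj) :
    ∃ P x y S, L = P ++ x :: y :: S ∧ (edge s t).Adj x y ∧
      (P ++ [x]).IsChain H.Adj ∧ (y :: S).IsChain H.Adj := by
  obtain ⟨x, y, P, S, rfl, hxy⟩ : ∃ x y P S, L = P ++ x :: y :: S ∧ ¬H.Adj x y := by
    simpa [List.isChain_iff_forall_rel_of_append_cons_cons] using hH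
  obtain ⟨hPx, hxy', hyS⟩ := List.isChain_append_cons_cons.mp hL
  have hdisj := List.disjoint_of_nodup_append (l₁ := P ++ [x]) (l₂ := y :: S) (by simpa using hnd)
  have hedge : (edge s t).Adj x y := hxy'.resolve_left hxy
  have hy : y ∉ P ++ [x] := fun h => hdisj h (by simp)
  have hx : x ∉ y :: S := fun h => hdisj (by simp) h
  refine ⟨P, x, y, S, rfl, hedge, isChain_of_isChain_sup_edge hPx ?_,
    isChain_of_isChain_sup_edge hyS ?_⟩ <;>
  · rw [edge_adj] at hedge
    rcases hedge.1 with ⟨rfl, rfl⟩ | ⟨rfl, rfl⟩ <;> tauto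

theorem isChain_append_reverse_append {A B C : List V} (hA : A.IsChain G.Adj)
    (hB : B.IsChain G.Adj) (hC : C.IsChain G.Adj) (hB' : B ≠ [])
    (hAB : ∀ x ∈ A.getLast?, ∀ y ∈ B.getLast?, G.Adj x y)
    (hBC : ∀ x ∈ B.head?, ∀ y ∈ C.head?, G.Adj x y) :
    (A ++ B.reverse ++ C).IsChain G.Adj := by
  refine (hA.append ?_ ?_).append hC ?_
  · exact List.isChain_reverse.2 (hB.imp fun _ _ h => h.symm)
  · simpa using hAB
  · rw [List.getLast?_append_of_ne_nil _ (by simpa using hB'), List.getLast?_reverse]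
    exact hBC

theorem IsHamiltonianList.append_reverse_append {G' : SimpleGraph V} {A B C : List V}
    (hL : G'.IsHamiltonianList a b (A ++ B ++ C)) (hA' : A ≠ []) (hB' : B ≠ []) (hC' : C ≠ [])
    (hA : A.IsChain H.Adj) (hB : B.IsChain H.Adj) (hC : C.IsChain H.Adj)
    (hAB : ∀ x ∈ A.getLast?, ∀ y ∈ B.getLast?, H.Adj x y)
    (hBC : ∀ x ∈ B.head?, ∀ y ∈ C.head?, H.Adj x y) :
    H.IsHamiltonianList a b (A ++ B.reverse ++ C) := by
  have hperm : (A ++ B.reverse ++ C).Perm (A ++ B ++ C) :=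
    ((List.reverse_perm B).append_left A).append_right C
  refine ⟨isChain_append_reverse_append hA hB hC hB' hAB hBC, ?_, ?_, hperm.nodup_iff.2 hL.nodup,
    fun v => hperm.mem_iff.2 (hL.mem v)⟩
  · rw [← hL.head?_eq, List.append_assoc, List.append_assoc, List.head?_append_of_ne_nil _ hA',
      List.head?_append_of_ne_nil _ hA']
  · rw [← hL.getLast?_eq, List.getLast?_append_of_ne_nil _ hC',
      List.getLast?_append_of_ne_nil _ hC']

theorem IsHamiltonianList.exists_of_rotation {G' : SimpleGraph V} {P S P' S' : List V} {u w : V}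
    (hL : G'.IsHamiltonianList a b (P ++ s :: t :: S)) (hPs : (P ++ [s]).IsChain H.Adj)
    (htS : (t :: S).IsChain H.Adj) (hnadj : ¬H.Adj s t)
    (hrot : P ++ s :: t :: S = P' ++ u :: w :: S') (hsu : H.Adj s u) (htw : H.Adj t w) :
    ∃ L', H.IsHamiltonianList a b L' := by
  rw [show P ++ s :: t :: S = (P ++ [s]) ++ t :: S by simp, List.append_eq_append_iff] at hrot
  rcases hrot with ⟨M, rfl, hM⟩ | ⟨_ | ⟨x, _ | ⟨y, M⟩⟩, hN, hN'⟩
  · rw [hM] at hL htS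
    obtain ⟨hMu, huwS⟩ := List.isChain_split.mp htS
    have hMu' : (M ++ [u]).head? = some t := by cases M <;> simp_all
    refine ⟨_, IsHamiltonianList.append_reverse_append (A := P ++ [s]) (B := M ++ [u])
      (C := w :: S') (by simpa using hL) (by simp) (by simp) (by simp) hPs hMu huwS.tail
      (by simpa using hsu) (by simpa [hMu'] using htw)⟩
  · simp only [List.nil_append, List.cons.injEq] at hN'
    exact absurd (hN'.1 ▸ hsu) hnadj
  · simp only [List.cons_append, List.cons.injEq] at hN'
    obtain ⟨rfl, -⟩ := hN'
    obtain rfl : s = u := by simpa using congrArg List.getLast? hN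
    exact absurd hsu H.irrefl
  · simp only [List.cons_append, List.cons.injEq] at hN'
    obtain ⟨rfl, rfl, rfl⟩ := hN'
    rw [show P ++ s :: t :: S = (P ++ [s]) ++ t :: S by simp, hN] at hL
    rw [hN] at hPs
    obtain ⟨hPu, huwM⟩ := List.isChain_split.mp hPs
    have hwM : (w :: M).getLast? = some s := by
      simpa [List.getLast?_append] using (congrArg List.getLast? hN).symm
    refine ⟨_, IsHamiltonianList.append_reverse_append (A := P' ++ [u]) (B := w :: M)
      (C := t :: S) (by simpa using hL) (by simp) (by simp) (by simp) hPu huwM.tail htS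
      (by simpa [hwM] using hsu.symm) (by simpa using htw.symm)⟩

end HamiltonianList

section Bipartite

variable {α β : Type*} {H : SimpleGraph (α ⊕ β)} {s t a b : α ⊕ β}

theorem isLeft_ne_of_adj (hH : H ≤ completeBipartiteGraph α β) {v w : α ⊕ β} (h : H.Adj v w) :
    v.isLeft ≠ w.isLeft := by
  have := hH h
  cases v <;> cases w <;> simp_all

theorem neighborSet_inl_subset_range_inr (hH : H ≤ completeBipartiteGraph α β) (u : α) :
    H.neighborSet (.inl u) ⊆ range .inr := by
  rintro (w | w) hw
  · exact absurd (hH hw) (by simp)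
  · exact ⟨w, rfl⟩

theorem neighborSet_inr_subset_range_inl (hH : H ≤ completeBipartiteGraph α β) (v : β) :
    H.neighborSet (.inr v) ⊆ range .inl := by
  rintro (w | w) hw
  · exact ⟨w, rfl⟩
  · exact absurd (hH hw) (by simp)

theorem completeBipartiteGraph_adj_of_isLeft_ne (hst : s.isLeft ≠ t.isLeft) :
    (completeBipartiteGraph α β).Adj s t := by
  cases s <;> cases t <;> simp_all

theorem ncard_neighborSet_add_ncard_neighborSet_le {L : List (α ⊕ β)} (hnd : L.Nodup)
    (hmem : ∀ v, v ∈ L) (halt : L.IsChain fun v w => v.isLeft ≠ w.isLeft)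
    (hH : H ≤ completeBipartiteGraph α β) (hst : s.isLeft ≠ t.isLeft)
    (hno : ∀ i (h : i + 1 < L.length), H.Adj s L[i] → ¬H.Adj t L[i + 1]) :
    (H.neighborSet s).ncard + (H.neighborSet t).ncard ≤
      {v : α ⊕ β | v.isLeft ≠ s.isLeft}.ncard + 1 := by
  set f : Fin L.length → α ⊕ β := L.get
  have hf (X : Set (α ⊕ β)) : (f ⁻¹' X).ncard = X.ncard :=
    Set.ncard_preimage_of_injective_subset_range (List.nodup_iff_injective_get.1 hnd)
      fun v _ => List.mem_iff_get.1 (hmem v)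
  set A := f ⁻¹' H.neighborSet s
  set B := f ⁻¹' H.neighborSet t
  set F := f ⁻¹' {v | v.isLeft ≠ s.isLeft}
  set B₀ := {i ∈ B | (i : ℕ) ≠ 0}
  let pred : Fin L.length → Fin L.length := fun i => ⟨i - 1, by omega⟩
  have hAF : A ⊆ F := fun i hi => (isLeft_ne_of_adj hH hi).symm
  have hpred : pred '' B₀ ⊆ F \ A := by
    rintro _ ⟨⟨_ | i, hi⟩, ⟨hB, hi0⟩, rfl⟩
    · exact absurd rfl hi0
    · have h1 := halt.getElem i hi
      have h2 := isLeft_ne_of_adj hH hB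
      refine ⟨?_, fun hA => hno i hi hA hB⟩
      simp only [F, f, pred, Set.mem_preimage, Set.mem_ofPred_eq, List.get_eq_getElem] at h2 ⊢
      grind
  have hinj : Set.InjOn pred B₀ := fun i hi j hj hij => by
    have : (i : ℕ) - 1 = (j : ℕ) - 1 := congrArg Fin.val hij
    exact Fin.ext (by have := hi.2; have := hj.2; omega)
  have hB₀ : B.ncard ≤ B₀.ncard + 1 := by
    have : (B \ B₀).ncard ≤ 1 := (Set.ncard_le_one (Set.toFinite _)).2 fun i hi j hj =>
      Fin.ext (by simp_all [B₀])
    have := Set.ncard_le_ncard_sdiff_add_ncard B B₀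
    omega
  calc (H.neighborSet s).ncard + (H.neighborSet t).ncard = A.ncard + B.ncard := by rw [hf, hf]
    _ ≤ A.ncard + (pred '' B₀).ncard + 1 := by rw [hinj.ncard_image]; omega
    _ ≤ A.ncard + (F \ A).ncard + 1 := by have := Set.ncard_le_ncard hpred; omega
    _ = F.ncard + 1 := by
      rw [Set.ncard_sdiff hAF]; have := Set.ncard_le_ncard hAF; omega
    _ = _ := by rw [hf]

theorem IsHamiltonianList.exists_of_split (hH : H ≤ completeBipartiteGraph α β)
    (hcard : Nat.card α = Nat.card β) (hst : s.isLeft ≠ t.isLeft) (hnadj : ¬H.Adj s t)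
    (hdeg : Nat.card α + 2 ≤ (H.neighborSet s).ncard + (H.neighborSet t).ncard)
    {P S : List (α ⊕ β)} (hL : (H ⊔ edge s t).IsHamiltonianList a b (P ++ s :: t :: S))
    (hPs : (P ++ [s]).IsChain H.Adj) (htS : (t :: S).IsChain H.Adj) :
    ∃ L', H.IsHamiltonianList a b L' := by
  set L := P ++ s :: t :: S
  by_cases hrot : ∃ i, ∃ h : i + 1 < L.length, H.Adj s L[i] ∧ H.Adj t L[i + 1]
  · obtain ⟨i, hi, hsu, htw⟩ := hrot
    have hsplit : L = L.take i ++ L[i] :: L[i + 1] :: L.drop (i + 2) := by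
      rw [← List.drop_eq_getElem_cons, ← List.drop_eq_getElem_cons, List.take_append_drop]
    exact hL.exists_of_rotation hPs htS hnadj hsplit hsu htw
  · push Not at hrot
    have hsup : H ⊔ edge s t ≤ completeBipartiteGraph α β :=
      sup_le hH ((edge_le_iff _).2 (Or.inr (completeBipartiteGraph_adj_of_isLeft_ne hst)))
    have halt := hL.isChain.imp fun v w h => isLeft_ne_of_adj hsup h
    have := ncard_neighborSet_add_ncard_neighborSet_le hL.nodup hL.mem halt hH hst hrot
    rw [Sum.ncard_setOf_isLeft_ne hcard] at this
    omega

theorem IsHamiltonianList.exists_of_sup_edge (hH : H ≤ completeBipartiteGraph α β)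
    (hcard : Nat.card α = Nat.card β) (hst : s.isLeft ≠ t.isLeft) (hnadj : ¬H.Adj s t)
    (hdeg : Nat.card α + 2 ≤ (H.neighborSet s).ncard + (H.neighborSet t).ncard)
    {L : List (α ⊕ β)} (hL : (H ⊔ edge s t).IsHamiltonianList a b L) :
    ∃ L', H.IsHamiltonianList a b L' := by
  by_cases hc : L.IsChain H.Adj
  · exact ⟨L, { hL with isChain := hc }⟩
  obtain ⟨P, x, y, S, rfl, hxy, hPx, hyS⟩ :=
    exists_eq_append_cons_cons_of_isChain_sup_edge hL.isChain hL.nodup hc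
  rcases ((edge_adj _ _ _ _).1 hxy).1 with ⟨rfl, rfl⟩ | ⟨rfl, rfl⟩
  · exact hL.exists_of_split hH hcard hst hnadj hdeg hPx hyS
  · rw [edge_comm] at hL
    exact hL.exists_of_split hH hcard hst.symm (fun h => hnadj h.symm) (by omega) hPx hyS

theorem isHamiltonianList_interleaveSum {us : List α} {vs : List β} {x : α} {y : β}
    (h : us.length = vs.length) (hus : us.Nodup) (hvs : vs.Nodup) (hu : ∀ a, a ∈ us)
    (hv : ∀ b, b ∈ vs) (hx : us.head? = some x) (hy : vs.getLast? = some y) :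
    (completeBipartiteGraph α β).IsHamiltonianList (.inl x) (.inr y) (us.interleaveSum vs) where
  isChain := List.isChain_interleaveSum us vs
  head?_eq := by
    rcases us with _ | ⟨x', us⟩ <;> rcases vs with _ | ⟨y', vs⟩ <;> simp_all [List.interleaveSum]
  getLast?_eq := by simp [List.getLast?_interleaveSum h, hy]
  nodup := List.nodup_interleaveSum h hus hvs
  mem v := by cases v <;> simp [List.mem_interleaveSum h, hu, hv]

theorem exists_isHamiltonianList_completeBipartiteGraph [Finite α] [Finite β]
    (hcard : Nat.card α = Nat.card β) (x : α) (y : β) :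
    ∃ L, (completeBipartiteGraph α β).IsHamiltonianList (.inl x) (.inr y) L := by
  obtain ⟨us, hus, hu, hx, hlu⟩ := List.exists_nodup_forall_mem_head?_eq x
  obtain ⟨vs, hvs, hv, hy, hlv⟩ := List.exists_nodup_forall_mem_head?_eq y
  exact ⟨_, isHamiltonianList_interleaveSum (vs := vs.reverse) (by simp [hlu, hlv, hcard])
    hus (List.nodup_reverse.2 hvs) hu (by simpa using hv) hx (by simpa using hy)⟩

end Bipartite

section DegreeSequence

variable {m : ℕ} {V : Type*} {G H : SimpleGraph V} {P : Fin m → V} {v : V}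

theorem ncard_neighborSet_add_ncard_setOf_not_adj (hP : P.Injective)
    (hv : H.neighborSet v ⊆ range P) :
    (H.neighborSet v).ncard + {i | ¬H.Adj (P i) v}.ncard = m := by
  have : H.neighborSet v = P '' {i | H.Adj (P i) v} := by
    ext w
    constructor
    · intro hw
      obtain ⟨i, rfl⟩ := hv hw
      exact ⟨i, hw.symm, rfl⟩
    · rintro ⟨i, hi, rfl⟩
      exact hi.symm
  rw [this, Set.ncard_image_of_injective _ hP, ← Set.compl_ofPred, Set.ncard_add_ncard_compl,
    Nat.card_eq_fintype_card, Fintype.card_fin]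

theorem ncard_neighborSet_le_of_forall_not_adj_le [Finite V] (hGH : G ≤ H) (hP : P.Injective)
    (hmono : Monotone fun i => (G.neighborSet (P i)).ncard) {j : Fin m}
    (hjmin : ∀ i < j, (i : ℕ) + 2 < (G.neighborSet (P i)).ncard) {i₀ : Fin m}
    (hv : H.neighborSet v ⊆ range P)
    (hmax : ∀ i, ¬H.Adj (P i) v → (H.neighborSet (P i)).ncard ≤ (H.neighborSet (P i₀)).ncard)
    (hsum : (H.neighborSet (P i₀)).ncard + (H.neighborSet v).ncard ≤ m + 1) :
    (G.neighborSet (P j)).ncard ≤ (H.neighborSet (P i₀)).ncard := by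
  set r := (H.neighborSet (P i₀)).ncard
  have hT := ncard_neighborSet_add_ncard_setOf_not_adj hP hv
  have hGH' (i : Fin m) : (G.neighborSet (P i)).ncard ≤ (H.neighborSet (P i)).ncard :=
    Set.ncard_le_ncard fun _ hw => hGH hw
  have hTS : {i | ¬H.Adj (P i) v} ⊆ {i | (G.neighborSet (P i)).ncard ≤ r} := fun i hi =>
    (hGH' i).trans (hmax i hi)
  refine Fin.apply_le_of_le_ncard_add_one hmono hjmin ⟨i₀, hGH' i₀⟩ ?_
  have := Set.ncard_le_ncard hTS
  omega

end DegreeSequence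

theorem exists_isHamiltonianList_of_le {m : ℕ} {G : SimpleGraph (Fin m ⊕ Fin m)}
    (hU : Monotone fun i : Fin m => (G.neighborSet (.inl i)).ncard)
    (hV : Monotone fun i : Fin m => (G.neighborSet (.inr i)).ncard) {j k : Fin m}
    (hjmin : ∀ i < j, (i : ℕ) + 2 < (G.neighborSet (.inl i)).ncard)
    (hkmin : ∀ i < k, (i : ℕ) + 2 < (G.neighborSet (.inr i)).ncard)
    (hsum : m + 2 ≤ (G.neighborSet (.inl j)).ncard + (G.neighborSet (.inr k)).ncard)
    {H : SimpleGraph (Fin m ⊕ Fin m)} (hGH : G ≤ H) (hH : H ≤ completeBipartiteGraph _ _)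
    (x y : Fin m) : ∃ L, H.IsHamiltonianList (.inl x) (.inr y) L := by
  induction H using WellFoundedGT.induction with | _ H ih => ?_
  by_cases hall : ∀ u v, H.Adj (.inl u) (.inr v)
  · obtain ⟨L, hL⟩ := exists_isHamiltonianList_completeBipartiteGraph rfl x y
    refine ⟨L, hL.mono ?_⟩
    rintro (u | u) (v | v) h <;> simp_all [(hall _ _).symm]
  push Not at hall
  obtain ⟨⟨u₀, v₀⟩, hnon, hmax⟩ :=
    Set.exists_max_image {p : Fin m × Fin m | ¬H.Adj (.inl p.1) (.inr p.2)}
      (fun p => (H.neighborSet (.inl p.1)).ncard + (H.neighborSet (.inr p.2)).ncard)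
      (Set.toFinite _) (by obtain ⟨u, v, h⟩ := hall; exact ⟨(u, v), h⟩)
  simp only [Set.mem_ofPred_eq, Prod.forall] at hnon hmax
  have hdeg : m + 2 ≤ (H.neighborSet (.inl u₀)).ncard + (H.neighborSet (.inr v₀)).ncard := by
    by_contra! hlt
    have hu := ncard_neighborSet_le_of_forall_not_adj_le hGH Sum.inl_injective hU hjmin (i₀ := u₀)
      (neighborSet_inr_subset_range_inl hH v₀)
      (fun u hu => by have := hmax u v₀ hu; omega) (by omega)
    have hv := ncard_neighborSet_le_of_forall_not_adj_le hGH Sum.inr_injective hV hkmin (i₀ := v₀)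
      (neighborSet_inl_subset_range_inr hH u₀)
      (fun v hv => by have := hmax u₀ v (fun h => hv h.symm); omega) (by omega)
    omega
  obtain ⟨L, hL⟩ := ih _ (lt_sup_edge _ _ _ (by simp) hnon) (hGH.trans le_sup_left)
    (sup_le hH ((edge_le_iff _).2 (Or.inr (by simp))))
  exact hL.exists_of_sup_edge hH rfl (by simp) hnon (by simpa using hdeg)

end SimpleGraph

theorem berge_hamiltonian_biconnected_general (m : ℕ)
    (G : SimpleGraph (Fin m ⊕ Fin m))
    (hbip : G ≤ completeBipartiteGraph (Fin m) (Fin m))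
    (hU : Monotone fun i : Fin m => (G.neighborSet (Sum.inl i)).ncard)
    (hV : Monotone fun i : Fin m => (G.neighborSet (Sum.inr i)).ncard)
    (j k : Fin m)
    (hjmin : ∀ j' : Fin m, j' < j → (j' : ℕ) + 2 < (G.neighborSet (Sum.inl j')).ncard)
    (hkmin : ∀ k' : Fin m, k' < k → (k' : ℕ) + 2 < (G.neighborSet (Sum.inr k')).ncard)
    (hsum : m + 2 ≤ (G.neighborSet (Sum.inl j)).ncard + (G.neighborSet (Sum.inr k)).ncard) :
    ∀ (x y : Fin m), ∃ p : G.Walk (Sum.inl x) (Sum.inr y),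
      p.IsPath ∧ ∀ v : Fin m ⊕ Fin m, v ∈ p.support := by
  intro x y
  obtain ⟨L, hL⟩ := exists_isHamiltonianList_of_le hU hV hjmin hkmin hsum le_rfl hbip x y
  exact hL.exists_walk

/-- Berge's criterion for Hamiltonian bi-connectedness of a balanced bipartite
graph.  Vertices of each part are indexed by `Fin m` in nondecreasing order of
degree (so the paper's 1-indexed `u_j` corresponds to index `j - 1`, and the
condition `d(u_j) ≤ j + 1` becomes `d ≤ (j : ℕ) + 2`).  If `j` and `k` are the
smallest indices with `d(u_j) ≤ j + 1` and `d(v_k) ≤ k + 1` respectively, and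
`d(u_j) + d(v_k) ≥ m + 2`, then for every `x ∈ U` and `y ∈ V` there is a
Hamiltonian path with endpoints `x` and `y`. -/
theorem berge_hamiltonian_biconnected (m : ℕ) (hm : 2 ≤ m)
    (G : SimpleGraph (Fin m ⊕ Fin m))
    (hbip : G ≤ completeBipartiteGraph (Fin m) (Fin m))
    (hU : Monotone fun i : Fin m => (G.neighborSet (Sum.inl i)).ncard)
    (hV : Monotone fun i : Fin m => (G.neighborSet (Sum.inr i)).ncard)
    (j k : Fin m)
    (hj : (G.neighborSet (Sum.inl j)).ncard ≤ (j : ℕ) + 2)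
    (hjmin : ∀ j' : Fin m, j' < j → (j' : ℕ) + 2 < (G.neighborSet (Sum.inl j')).ncard)
    (hk : (G.neighborSet (Sum.inr k)).ncard ≤ (k : ℕ) + 2)
    (hkmin : ∀ k' : Fin m, k' < k → (k' : ℕ) + 2 < (G.neighborSet (Sum.inr k')).ncard)
    (hsum : m + 2 ≤ (G.neighborSet (Sum.inl j)).ncard + (G.neighborSet (Sum.inr k)).ncard) :
    ∀ (x y : Fin m), ∃ p : G.Walk (Sum.inl x) (Sum.inr y),
      p.IsPath ∧ ∀ v : Fin m ⊕ Fin m, v ∈ p.support :=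
  berge_hamiltonian_biconnected_general m G hbip hU hV j k hjmin hkmin hsum
end

section
/- Let G be a bipartite graph with parts X, Y of size n each, with minimum degree at least (3/4 + η)n for some η > 0 and n sufficiently large. In any 2-coloring of E(G), let H₁ be a largest monochromatic (say blue) component satisfying |H₁∩X|, |H₁∩Y| ≥ n/2, set X₁ = H₁∩X, Y₁ = H₁∩Y, X₂ = X∖X₁, Y₂ = Y∖Y₁. Then all edges of G between X₁ and Y₂, and between X₂ and Y₁, are red; moreover any two vertices u, u′ ∈ X₂ have a common red neighbor in Y₁, and any two vertices v, v′ ∈ Y₂ have a common red neighbor in X₁. -/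
/-!
A blue edge cannot leave the blue component `H₁`, so every edge of `G` between `H₁` and its
complement is red. Two vertices `u, u'` of `X₂` have all their neighbours in `Y`, so each misses at
most `n - |Y₁|` vertices of `Y₁`; with degrees `≥ (3/4 + η)n` and `|Y₁| ≥ n/2` their neighbourhoods in
`Y₁` have total size `> |Y₁|`, hence meet, and the edges to a common neighbour in `Y₁` are red.
-/

open SimpleGraph Set

lemma Set.ncard_add_ncard_le_ncard_inter_add {α : Type*} {N T S : Set α} (hS : S.Finite)
    (hN : N ⊆ S) (hT : T ⊆ S) : N.ncard + T.ncard ≤ (N ∩ T).ncard + S.ncard := by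
  rw [← ncard_union_add_ncard_inter N T (hS.subset hN) (hS.subset hT), add_comm]
  exact Nat.add_le_add_left (ncard_le_ncard (union_subset hN hT) hS) _

lemma Set.inter_nonempty_of_ncard_lt_ncard_add_ncard {α : Type*} {A A' S : Set α}
    (hS : S.Finite) (hA : A ⊆ S) (hA' : A' ⊆ S) (h : S.ncard < A.ncard + A'.ncard) :
    (A ∩ A').Nonempty := by
  have := ncard_add_ncard_le_ncard_inter_add hS hA hA'
  exact nonempty_of_ncard_ne_zero (by omega)

namespace SimpleGraph

variable {V : Type*}

lemma exists_common_adj_of_two_mul_ncard_lt (G : SimpleGraph V) {S T : Set V} {u u' : V}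
    (hS : S.Finite) (hT : T ⊆ S) (hu : G.neighborSet u ⊆ S) (hu' : G.neighborSet u' ⊆ S)
    (h : 2 * S.ncard < (G.neighborSet u).ncard + (G.neighborSet u').ncard + T.ncard) :
    ∃ y ∈ T, G.Adj u y ∧ G.Adj u' y := by
  have hA := ncard_add_ncard_le_ncard_inter_add hS hu hT
  have hA' := ncard_add_ncard_le_ncard_inter_add hS hu' hT
  obtain ⟨y, ⟨huy, hy⟩, hu'y, -⟩ := inter_nonempty_of_ncard_lt_ncard_add_ncard (hS.subset hT)
    (inter_subset_right (s := G.neighborSet u)) (inter_subset_right (s := G.neighborSet u'))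
    (by omega)
  exact ⟨y, hy, huy, hu'y⟩

lemma ConnectedComponent.not_adj_of_mem_supp_of_notMem_supp {G : SimpleGraph V}
    (C : G.ConnectedComponent) {a b : V} (ha : a ∈ C.supp) (hb : b ∉ C.supp) : ¬ G.Adj a b :=
  fun hab => hb (C.mem_supp_of_adj_mem_supp ha hab)

variable {R B : SimpleGraph V}

lemma ConnectedComponent.adj_and_not_adj_of_sup_adj (C : B.ConnectedComponent) {a b : V}
    (ha : a ∈ C.supp) (hb : b ∉ C.supp) (hab : (R ⊔ B).Adj a b) : R.Adj a b ∧ ¬ B.Adj a b :=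
  have hB := C.not_adj_of_mem_supp_of_notMem_supp ha hb
  ⟨hab.resolve_right hB, hB⟩

lemma ConnectedComponent.exists_common_left_adj (C : B.ConnectedComponent) {S : Set V}
    {u u' : V} (hS : S.Finite) (hu : u ∉ C.supp) (hu' : u' ∉ C.supp)
    (hNu : (R ⊔ B).neighborSet u ⊆ S) (hNu' : (R ⊔ B).neighborSet u' ⊆ S)
    (h : 2 * S.ncard < ((R ⊔ B).neighborSet u).ncard + ((R ⊔ B).neighborSet u').ncard
      + (C.supp ∩ S).ncard) :
    ∃ y ∈ C.supp ∩ S, R.Adj u y ∧ R.Adj u' y := by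
  obtain ⟨y, hy, huy, hu'y⟩ :=
    exists_common_adj_of_two_mul_ncard_lt _ hS inter_subset_right hNu hNu' h
  exact ⟨y, hy, (C.adj_and_not_adj_of_sup_adj hy.1 hu huy.symm).1.symm,
    (C.adj_and_not_adj_of_sup_adj hy.1 hu' hu'y.symm).1.symm⟩

variable {α β : Type*} {G : SimpleGraph (α ⊕ β)}

lemma neighborSet_inl_subset_range_inr_s14 (hG : G ≤ completeBipartiteGraph α β) (a : α) :
    G.neighborSet (Sum.inl a) ⊆ range Sum.inr := by
  rintro (w | w) hw
  · simpa using hG hw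
  · exact ⟨w, rfl⟩

lemma neighborSet_inr_subset_range_inl_s14 (hG : G ≤ completeBipartiteGraph α β) (b : β) :
    G.neighborSet (Sum.inr b) ⊆ range Sum.inl := by
  rintro (w | w) hw
  · exact ⟨w, rfl⟩
  · simpa using hG hw

end SimpleGraph

lemma two_mul_lt_of_min_degree {η : ℝ} (hη : 0 < η) {n d d' t : ℕ} (hn : 1 ≤ n)
    (hd : (3 / 4 + η) * n ≤ d) (hd' : (3 / 4 + η) * n ≤ d') (ht : (n : ℝ) / 2 ≤ t) :
    2 * n < d + d' + t := by
  have hn' : (1 : ℝ) ≤ n := by exact_mod_cast hn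
  have : (2 * n : ℝ) < d + d' + t := by nlinarith
  exact_mod_cast this

/-- Structure of a largest blue component in a 2-colored balanced bipartite graph
with minimum degree `(3/4 + η)n`: with `X₁ = H₁ ∩ X`, `Y₁ = H₁ ∩ Y`,
`X₂ = X \ X₁`, `Y₂ = Y \ Y₁`, all edges of `G` between `X₁` and `Y₂` and between
`X₂` and `Y₁` are red (and not blue), any two vertices of `X₂` have a common red
neighbor in `Y₁`, and any two vertices of `Y₂` have a common red neighbor in `X₁`. -/
theorem largest_blue_component_structure (η : ℝ) (hη : 0 < η) :
    ∃ n₀ : ℕ, ∀ n : ℕ, n₀ ≤ n →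
    ∀ (G R B : SimpleGraph (Fin n ⊕ Fin n)),
      G ≤ completeBipartiteGraph (Fin n) (Fin n) →
      R ⊔ B = G →
      (∀ v, (3 / 4 + η) * n ≤ ((G.neighborSet v).ncard : ℝ)) →
      ∀ H₁ : B.ConnectedComponent,
        (n : ℝ) / 2 ≤ (((H₁.supp ∩ Set.range Sum.inl).ncard : ℕ) : ℝ) →
        (n : ℝ) / 2 ≤ (((H₁.supp ∩ Set.range Sum.inr).ncard : ℕ) : ℝ) →
        -- H₁ is a largest monochromatic component with both intersections ≥ n/2:
        (∀ (K : SimpleGraph (Fin n ⊕ Fin n)), (K = R ∨ K = B) →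
          ∀ C : K.ConnectedComponent,
            (n : ℝ) / 2 ≤ (((C.supp ∩ Set.range Sum.inl).ncard : ℕ) : ℝ) →
            (n : ℝ) / 2 ≤ (((C.supp ∩ Set.range Sum.inr).ncard : ℕ) : ℝ) →
            C.supp.ncard ≤ H₁.supp.ncard) →
        -- all edges between X₁ and Y₂ and between X₂ and Y₁ are red:
        ((∀ x y, x ∈ H₁.supp ∩ Set.range Sum.inl → y ∈ Set.range Sum.inr \ H₁.supp →
            G.Adj x y → R.Adj x y ∧ ¬ B.Adj x y) ∧
         (∀ x y, x ∈ Set.range Sum.inl \ H₁.supp → y ∈ H₁.supp ∩ Set.range Sum.inr →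
            G.Adj x y → R.Adj x y ∧ ¬ B.Adj x y) ∧
         -- common red neighbors:
         (∀ u u', u ∈ Set.range Sum.inl \ H₁.supp → u' ∈ Set.range Sum.inl \ H₁.supp →
            ∃ y, y ∈ H₁.supp ∩ Set.range Sum.inr ∧ R.Adj u y ∧ R.Adj u' y) ∧
         (∀ v v', v ∈ Set.range Sum.inr \ H₁.supp → v' ∈ Set.range Sum.inr \ H₁.supp →
            ∃ x, x ∈ H₁.supp ∩ Set.range Sum.inl ∧ R.Adj v x ∧ R.Adj v' x)) := by
  refine ⟨1, fun n hn G R B hG hRB hdeg H₁ hX₁ hY₁ _ => ?_⟩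
  subst hRB
  have hX : (range (Sum.inl : Fin n → Fin n ⊕ Fin n)).ncard = n := by
    simp [ncard_range_of_injective Sum.inl_injective]
  have hY : (range (Sum.inr : Fin n → Fin n ⊕ Fin n)).ncard = n := by
    simp [ncard_range_of_injective Sum.inr_injective]
  refine ⟨?_, ?_, ?_, ?_⟩
  · rintro x y ⟨hx, -⟩ ⟨-, hy⟩ hxy
    exact H₁.adj_and_not_adj_of_sup_adj hx hy hxy
  · rintro x y ⟨-, hx⟩ ⟨hy, -⟩ hxy
    obtain ⟨hR, hB⟩ := H₁.adj_and_not_adj_of_sup_adj hy hx hxy.symm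
    exact ⟨hR.symm, fun h => hB h.symm⟩
  · rintro u u' ⟨⟨a, rfl⟩, hu⟩ ⟨⟨a', rfl⟩, hu'⟩
    refine H₁.exists_common_left_adj (toFinite _) hu hu' (neighborSet_inl_subset_range_inr_s14 hG a)
      (neighborSet_inl_subset_range_inr_s14 hG a') ?_
    rw [hY]
    exact two_mul_lt_of_min_degree hη hn (hdeg _) (hdeg _) hY₁
  · rintro v v' ⟨⟨b, rfl⟩, hv⟩ ⟨⟨b', rfl⟩, hv'⟩
    refine H₁.exists_common_left_adj (toFinite _) hv hv' (neighborSet_inr_subset_range_inl_s14 hG b)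
      (neighborSet_inr_subset_range_inl_s14 hG b') ?_
    rw [hX]
    exact two_mul_lt_of_min_degree hη hn (hdeg _) (hdeg _) hX₁
end

section
/- Let G be a balanced bipartite graph with parts X, Y of size n and minimum degree δ(G) ≥ (3/4 + γ)n, 0 < γ ≤ 1/4, n ≥ 3/γ. Suppose X* ⊆ X and Y* ⊆ Y with |X*| = |Y*| = m ≥ (1/2 − γ/4)n, the blue minimum degree from X* to Y* and from Y* to X* are each at least γn/8, and the sets X_S′ = {x ∈ X* : d_B(x, Y*) ≤ m − (1/4 − γ/2)n} and Y_S′ = {y ∈ Y* : d_B(y, X*) ≤ m − (1/4 − γ/2)n} each have size less than γn/8 − 2. Then the bipartite graph of blue edges between X* and Y* is Hamiltonian bi-connected. -/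
open SimpleGraph Set

/-- Degree of `x` into the set `S` in the graph `K`. -/
noncomputable def dIn {V : Type*} (K : SimpleGraph V) (x : V) (S : Set V) : ℕ :=
  (K.neighborSet x ∩ S).ncard

/-- The subgraph of `K` consisting of the edges joining `A` to `C`. -/
def between {V : Type*} (K : SimpleGraph V) (A C : Set V) : SimpleGraph V where
  Adj a b := K.Adj a b ∧ ((a ∈ A ∧ b ∈ C) ∨ (a ∈ C ∧ b ∈ A))
  symm := by
    constructor
    intro a b hab
    exact ⟨hab.1.symm, by tauto⟩
  loopless := by
    constructor
    intro a ha
    exact K.irrefl ha.1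

set_option linter.unusedSectionVars false
set_option maxHeartbeats 1000000
open List Finset

section Lists
variable {α : Type*}

/-- Splitting a list at a consecutive pair. -/
lemma split_of_mem_zip : ∀ {L : List α} {w z : α}, (w, z) ∈ L.zip L.tail →
    ∃ P Q, L = P ++ w :: z :: Q := by
  intro L
  induction L with
  | nil => simp
  | cons a t ih =>
    intro w z h
    cases t with
    | nil => simp at h
    | cons b t' =>
      simp only [List.tail_cons, List.zip_cons_cons, List.mem_cons] at h
      rcases h with h | h
      · obtain ⟨rfl, rfl⟩ := Prod.mk.inj h
        exact ⟨[], t', rfl⟩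
      · obtain ⟨P, Q, hPQ⟩ := ih (by simpa using h)
        exact ⟨a :: P, Q, by simp [hPQ]⟩

lemma adj_of_mem_zip {R : α → α → Prop} : ∀ {L : List α} {w z : α}, L.IsChain R →
    (w, z) ∈ L.zip L.tail → R w z := by
  intro L
  induction L with
  | nil => simp
  | cons a t ih =>
    intro w z hc h
    cases t with
    | nil => simp at h
    | cons b t' =>
      simp only [List.tail_cons, List.zip_cons_cons, List.mem_cons] at h
      rcases h with h | h
      · cases h; exact hc.rel_head
      · exact ih hc.tail (by simpa using h)

lemma map_fst_zip_tail : ∀ (L : List α), (L.zip L.tail).map Prod.fst = L.dropLast := by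
  intro L
  induction L with
  | nil => simp
  | cons a t ih =>
    cases t with
    | nil => simp
    | cons b t' => simpa using ih

lemma split_unique {w : α} : ∀ {P₁ P₂ R₁ R₂ : List α}, P₁ ++ w :: R₁ = P₂ ++ w :: R₂ →
    w ∉ P₁ → w ∉ P₂ → P₁ = P₂ ∧ R₁ = R₂ := by
  intro P₁
  induction P₁ with
  | nil =>
    intro P₂ R₁ R₂ h h1 h2
    cases P₂ with
    | nil => simpa using h
    | cons p P₂' =>
      simp only [List.nil_append, List.cons_append, List.cons.injEq] at h
      exact absurd (h.1 ▸ (List.mem_cons_self (a := p) (l := P₂'))) h2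
  | cons p P₁' ih =>
    intro P₂ R₁ R₂ h h1 h2
    cases P₂ with
    | nil =>
      simp only [List.nil_append, List.cons_append, List.cons.injEq] at h
      exact absurd (h.1.symm ▸ (List.mem_cons_self (a := p) (l := P₁'))) (by simp at h1; tauto)
    | cons q P₂' =>
      simp only [List.cons_append, List.cons.injEq] at h
      obtain ⟨rfl, h⟩ := h
      obtain ⟨h3, h4⟩ := ih h (by simp at h1; tauto) (by simp at h2; tauto)
      exact ⟨by rw [h3], h4⟩


lemma chain'_elim_extra {R : α → α → Prop} {u v : α} :
    ∀ {M : List α}, M.IsChain (fun a b => R a b ∨ (a = u ∧ b = v) ∨ (a = v ∧ b = u)) →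
      u ∉ M → M.IsChain R := by
  intro M
  induction M with
  | nil => simp
  | cons a t ih =>
    intro hc hu
    cases t with
    | nil => simp
    | cons b t' =>
      rw [List.isChain_cons_cons] at hc ⊢
      obtain ⟨hab, ht⟩ := hc
      simp only [List.mem_cons, not_or] at hu
      refine ⟨?_, ih ht (by simp only [List.mem_cons] at hu ⊢; tauto)⟩
      rcases hab with h | ⟨rfl, rfl⟩ | ⟨rfl, rfl⟩
      · exact h
      · exact absurd rfl hu.1
      · exact absurd rfl hu.2.1

lemma chain'_elim_extra' {R : α → α → Prop} {u v : α} {M : List α}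
    (hc : M.IsChain (fun a b => R a b ∨ (a = u ∧ b = v) ∨ (a = v ∧ b = u)))
    (hv : v ∉ M) : M.IsChain R :=
  chain'_elim_extra (u := v) (v := u) (hc.imp fun _ _ h => by tauto) hv

lemma chain_split {R : α → α → Prop} {u v : α} :
    ∀ {L : List α}, L.IsChain (fun a b => R a b ∨ (a = u ∧ b = v) ∨ (a = v ∧ b = u)) →
      L.Nodup →
    L.IsChain R ∨
    (∃ P Q, L = P ++ u :: v :: Q ∧ List.IsChain R (P ++ [u]) ∧ List.IsChain R (v :: Q)) ∨
    (∃ P Q, L = P ++ v :: u :: Q ∧ List.IsChain R (P ++ [v]) ∧ List.IsChain R (u :: Q)) := by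
  intro L
  induction L with
  | nil => simp
  | cons a t ih =>
    intro hc hnd
    cases t with
    | nil => left; simp
    | cons b t' =>
      rw [List.isChain_cons_cons] at hc
      obtain ⟨hab, ht⟩ := hc
      have hnd' : (b :: t').Nodup := hnd.of_cons
      have hamem : a ∉ b :: t' := (List.nodup_cons.mp hnd).1
      by_cases hR : R a b
      · rcases ih ht hnd' with h | ⟨P, Q, hPQ, c1, c2⟩ | ⟨P, Q, hPQ, c1, c2⟩
        · left; exact List.isChain_cons_cons.mpr ⟨hR, h⟩
        · right; left
          refine ⟨a :: P, Q, by simp [hPQ], ?_, c2⟩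
          rw [List.cons_append, List.isChain_cons]
          refine ⟨?_, c1⟩
          intro y hy
          cases P with
          | nil =>
            simp only [List.nil_append, List.head?_cons, Option.mem_def,
              Option.some.injEq] at hy
            subst hy
            have : b = u := by
              have := hPQ
              simp at this
              exact this.1
            rwa [← this]
          | cons p P' =>
            simp only [List.cons_append, List.head?_cons, Option.mem_def,
              Option.some.injEq] at hy
            subst hy
            have : b = p := by
              have := hPQ
              simp at this
              exact this.1
            rwa [← this]
        · right; right
          refine ⟨a :: P, Q, by simp [hPQ], ?_, c2⟩
          rw [List.cons_append, List.isChain_cons]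
          refine ⟨?_, c1⟩
          intro y hy
          cases P with
          | nil =>
            simp only [List.nil_append, List.head?_cons, Option.mem_def,
              Option.some.injEq] at hy
            subst hy
            have : b = v := by
              have := hPQ; simp at this; exact this.1
            rwa [← this]
          | cons p P' =>
            simp only [List.cons_append, List.head?_cons, Option.mem_def,
              Option.some.injEq] at hy
            subst hy
            have : b = p := by
              have := hPQ; simp at this; exact this.1
            rwa [← this]
      · rcases hab with h | ⟨rfl, rfl⟩ | ⟨rfl, rfl⟩
        · exact absurd h hR
        · right; left
          refine ⟨[], t', by simp, by simp, ?_⟩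
          refine chain'_elim_extra ht hamem
        · right; right
          refine ⟨[], t', by simp, by simp, ?_⟩
          exact chain'_elim_extra' ht hamem
end Lists

section Graph
variable {V : Type*} [DecidableEq V]

lemma chain'_flip_iff {R : V → V → Prop} (hsymm : ∀ a b, R a b → R b a) {l : List V} :
    l.IsChain (fun a b => R b a) ↔ l.IsChain R :=
  ⟨fun h => h.imp fun _ _ => hsymm _ _, fun h => h.imp fun _ _ => hsymm _ _⟩

/-- The rotation surgery: if `L = M₁ ++ w :: z :: M₂ ++ u :: v :: L₂` where all consecutive
pairs are `H`-edges except possibly `(u, v)`, and `w ~ u`, `z ~ v`, then there is a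
rearrangement of `L` which is an `H`-path with the same endpoints. -/
lemma surgery (H : SimpleGraph V) {M₁ M₂ L₂ : List V} {w z u v : V}
    (c1 : List.IsChain H.Adj (M₁ ++ w :: z :: M₂ ++ [u]))
    (c2 : List.IsChain H.Adj (v :: L₂))
    (hwu : H.Adj w u) (hzv : H.Adj z v) :
    ∃ N : List V, N ~ (M₁ ++ w :: z :: M₂ ++ u :: v :: L₂) ∧ List.IsChain H.Adj N ∧
      N.head? = (M₁ ++ w :: z :: M₂ ++ u :: v :: L₂).head? ∧
      N.getLast? = (M₁ ++ w :: z :: M₂ ++ u :: v :: L₂).getLast? := by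
  refine ⟨M₁ ++ w :: u :: (M₂.reverse ++ z :: v :: L₂), ?_, ?_, ?_, ?_⟩
  · have hR : M₁ ++ w :: z :: M₂ ++ u :: v :: L₂ = M₁ ++ (w :: z :: (M₂ ++ u :: v :: L₂)) := by
      simp
    rw [hR]
    refine List.Perm.append_left M₁ ?_
    refine List.Perm.cons w ?_
    have h1 : u :: (M₂.reverse ++ z :: v :: L₂) = (u :: (M₂.reverse ++ [z])) ++ (v :: L₂) := by
      simp
    have h2 : z :: (M₂ ++ u :: v :: L₂) = (z :: (M₂ ++ [u])) ++ (v :: L₂) := by simp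
    rw [h1, h2]
    refine List.Perm.append ?_ (List.Perm.refl _)
    have hrev : (z :: (M₂ ++ [u])).reverse = u :: (M₂.reverse ++ [z]) := by simp
    calc u :: (M₂.reverse ++ [z]) = (z :: (M₂ ++ [u])).reverse := hrev.symm
      _ ~ z :: (M₂ ++ [u]) := List.reverse_perm _
  · -- IsChain
    have hd : List.IsChain H.Adj ((M₁ ++ [w]) ++ (z :: M₂ ++ [u])) := by
      have : (M₁ ++ [w]) ++ (z :: M₂ ++ [u]) = M₁ ++ w :: z :: M₂ ++ [u] := by simp
      rw [this]; exact c1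
    rw [List.isChain_append] at hd
    obtain ⟨cMw, czMu, hlink⟩ := hd
    have crev : List.IsChain H.Adj (u :: (M₂.reverse ++ [z])) := by
      have : u :: (M₂.reverse ++ [z]) = (z :: M₂ ++ [u]).reverse := by simp
      rw [this, List.isChain_reverse, chain'_flip_iff (fun a b h => h.symm)]
      exact czMu
    have target_eq : M₁ ++ w :: u :: (M₂.reverse ++ z :: v :: L₂)
        = (M₁ ++ [w]) ++ ((u :: (M₂.reverse ++ [z])) ++ (v :: L₂)) := by simp
    rw [target_eq, List.isChain_append]
    refine ⟨cMw, ?_, ?_⟩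
    · rw [List.isChain_append]
      refine ⟨crev, c2, ?_⟩
      intro a ha b hb
      simp only [List.head?_cons, Option.mem_def, Option.some.injEq] at hb
      have : (u :: (M₂.reverse ++ [z])).getLast? = some z := by
        have : u :: (M₂.reverse ++ [z]) = (u :: M₂.reverse) ++ [z] := by simp
        rw [this, List.getLast?_concat]
      rw [this] at ha
      simp only [Option.mem_def, Option.some.injEq] at ha
      subst ha hb
      exact hzv
    · intro a ha b hb
      have : ((u :: (M₂.reverse ++ [z])) ++ v :: L₂).head? = some u := by simp
      rw [this] at hb
      simp only [Option.mem_def, Option.some.injEq] at hb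
      subst hb
      have : (M₁ ++ [w]).getLast? = some w := by simp
      rw [this] at ha
      simp only [Option.mem_def, Option.some.injEq] at ha
      subst ha
      exact hwu
  · simp [List.head?_append]
  · have key : ∀ (P : List V), (P ++ v :: L₂).getLast? = (v :: L₂).getLast? := fun P =>
      List.getLast?_append_cons ..
    have e1 : M₁ ++ w :: u :: (M₂.reverse ++ z :: v :: L₂)
        = (M₁ ++ [w, u] ++ M₂.reverse ++ [z]) ++ v :: L₂ := by simp
    have e2 : M₁ ++ w :: z :: M₂ ++ u :: v :: L₂
        = (M₁ ++ [w, z] ++ M₂ ++ [u]) ++ v :: L₂ := by simp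
    rw [e1, e2, key, key]


def addE (H : SimpleGraph V) (u v : V) : SimpleGraph V :=
  H ⊔ SimpleGraph.fromEdgeSet {s(u, v)}

lemma le_addE (H : SimpleGraph V) (u v : V) : H ≤ addE H u v := le_sup_left

lemma addE_adj {H : SimpleGraph V} {u v a b : V} (huv : u ≠ v) :
    (addE H u v).Adj a b ↔ H.Adj a b ∨ (a = u ∧ b = v) ∨ (a = v ∧ b = u) := by
  simp only [addE, SimpleGraph.sup_adj, SimpleGraph.fromEdgeSet_adj, Set.mem_singleton_iff,
    Sym2.eq_iff]
  constructor
  · rintro (h | ⟨h1, h2⟩)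
    · exact Or.inl h
    · tauto
  · rintro (h | ⟨rfl, rfl⟩ | ⟨rfl, rfl⟩)
    · exact Or.inl h
    · exact Or.inr ⟨Or.inl ⟨rfl, rfl⟩, huv⟩
    · exact Or.inr ⟨Or.inr ⟨rfl, rfl⟩, huv.symm⟩

open scoped Classical in
noncomputable def nbr (H : SimpleGraph V) (S : Finset V) (u : V) : Finset V :=
  S.filter fun b => H.Adj u b

lemma mem_nbr {H : SimpleGraph V} {S : Finset V} {u b : V} :
    b ∈ nbr H S u ↔ b ∈ S ∧ H.Adj u b := by
  simp [nbr]

lemma nbr_subset {H : SimpleGraph V} {S : Finset V} {u : V} : nbr H S u ⊆ S := by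
  classical
  intro b hb
  exact (mem_nbr.mp hb).1

lemma nbr_mono {H H' : SimpleGraph V} (h : H ≤ H') (S : Finset V) (u : V) :
    nbr H S u ⊆ nbr H' S u := by
  intro b hb
  rw [mem_nbr] at hb ⊢
  exact ⟨hb.1, h hb.2⟩

/-- A Hamiltonian path (as a list) from `x` to `y` covering `A ∪ B`. -/
def IsHamList (H : SimpleGraph V) (A B : Finset V) (x y : V) (L : List V) : Prop :=
  L.IsChain H.Adj ∧ L.Nodup ∧ L.head? = some x ∧ L.getLast? = some y ∧ L.toFinset = A ∪ B

lemma eq_dropLast_append {L : List V} {y : V} (h : L.getLast? = some y) :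
    L = L.dropLast ++ [y] := by
  have hne : L ≠ [] := by rintro rfl; simp at h
  have h2 := List.dropLast_append_getLast hne
  rw [List.getLast?_eq_getLast hne, Option.some.injEq] at h
  rw [← h]
  exact h2.symm

lemma exists_rotation_pair (H : SimpleGraph V) {A B : Finset V}
    (hdisj : Disjoint A B)
    {u v x y : V} (hu : u ∈ A) (hv : v ∈ B)
    {L : List V}
    (hc : L.IsChain (addE H u v).Adj) (hnd : L.Nodup)
    (hhead : L.head? = some x) (hlast : L.getLast? = some y)
    (hset : L.toFinset = A ∪ B)
    (hbip : ∀ a b, H.Adj a b → (a ∈ A ∧ b ∈ B) ∨ (a ∈ B ∧ b ∈ A))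
    (hcount : (B.erase y).card + 1 ≤ ((nbr H B u).erase y).card + ((nbr H A v).erase x).card) :
    ∃ w z, (w, z) ∈ L.zip L.tail ∧ w ∈ nbr H B u ∧ z ∈ nbr H A v := by
  classical
  set Lp := L.zip L.tail with hLp
  have hfst : Lp.map Prod.fst = L.dropLast := map_fst_zip_tail L
  have ndD : L.dropLast.Nodup := (List.dropLast_sublist L).nodup hnd
  have ndLp : Lp.Nodup := List.Nodup.of_map Prod.fst (hfst ▸ ndD)
  have hLdec : L = L.dropLast ++ [y] := eq_dropLast_append hlast
  have hynotd : y ∉ L.dropLast := by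
    intro hy
    have h2 := hLdec ▸ hnd
    rw [List.nodup_append] at h2
    exact h2.2.2 y hy y (by simp) rfl
  have hLtail : L = x :: L.tail := by
    cases L with
    | nil => simp at hhead
    | cons a t => simp at hhead; subst hhead; rfl
  have hsnd : Lp.map Prod.snd = L.tail := List.map_snd_zip (by
    cases L <;> simp)
  -- fst is injective on Lp
  have hinj : ∀ ⦃p⦄, p ∈ Lp → ∀ ⦃q⦄, q ∈ Lp → p.1 = q.1 → p = q :=
    List.inj_on_of_nodup_map (hfst ▸ ndD)
  set F1 : Finset (V × V) := Lp.toFinset.filter (fun p => p.1 ∈ nbr H B u) with hF1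
  set F2 : Finset (V × V) := Lp.toFinset.filter (fun p => p.2 ∈ nbr H A v) with hF2
  set FZ : Finset (V × V) := Lp.toFinset.filter (fun p => p.1 ∈ B) with hFZ
  have hF1Z : F1 ⊆ FZ := by
    intro p hp
    simp only [hF1, hFZ, Finset.mem_filter] at hp ⊢
    exact ⟨hp.1, nbr_subset hp.2⟩
  have huv : u ≠ v := fun h => (Finset.disjoint_left.mp hdisj hu) (h ▸ hv)
  have hF2Z : F2 ⊆ FZ := by
    intro p hp
    simp only [hF2, hFZ, Finset.mem_filter, List.mem_toFinset] at hp ⊢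
    refine ⟨hp.1, ?_⟩
    have hadj : (addE H u v).Adj p.1 p.2 := adj_of_mem_zip hc (by
      cases p; exact hp.1)
    have hp2A : p.2 ∈ A := nbr_subset hp.2
    have hp2B : p.2 ∉ B := Finset.disjoint_left.mp hdisj hp2A
    rw [addE_adj huv] at hadj
    rcases hadj with h | ⟨rfl, rfl⟩ | ⟨rfl, rfl⟩
    · rcases hbip _ _ h with ⟨_, h2⟩ | ⟨h1, _⟩
      · exact absurd h2 hp2B
      · exact h1
    · exact absurd hv hp2B
    · exact hv
  -- card FZ ≤ (B.erase y).card
  have hfstmem : ∀ ⦃p⦄, p ∈ Lp → p.1 ∈ L.dropLast := by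
    intro p hp
    rw [← hfst]
    exact List.mem_map_of_mem hp
  have hZcard : FZ.card ≤ (B.erase y).card := by
    have h1 : FZ.card = (FZ.image Prod.fst).card := by
      rw [Finset.card_image_of_injOn]
      intro p hp q hq
      exact hinj (List.mem_toFinset.mp (Finset.mem_filter.mp hp).1)
        (List.mem_toFinset.mp (Finset.mem_filter.mp hq).1)
    rw [h1]
    apply Finset.card_le_card
    intro w hw
    obtain ⟨p, hp, rfl⟩ := Finset.mem_image.mp hw
    obtain ⟨hpl, hpB⟩ := Finset.mem_filter.mp hp
    rw [Finset.mem_erase]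
    refine ⟨?_, hpB⟩
    intro h
    exact hynotd (h ▸ hfstmem (List.mem_toFinset.mp hpl))
  have hF1card : ((nbr H B u).erase y).card ≤ F1.card := by
    calc ((nbr H B u).erase y).card ≤ (F1.image Prod.fst).card := by
          apply Finset.card_le_card
          intro w hw
          obtain ⟨hwy, hwn⟩ := Finset.mem_erase.mp hw
          have hwL : w ∈ L := by
            rw [← List.mem_toFinset, hset]
            exact Finset.mem_union_right _ (nbr_subset hwn)
          have hwD : w ∈ L.dropLast := by
            rw [hLdec] at hwL
            rcases List.mem_append.mp hwL with h | h
            · exact h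
            · simp at h; exact absurd h hwy
          rw [← hfst] at hwD
          obtain ⟨p, hp, hpw⟩ := List.mem_map.mp hwD
          exact Finset.mem_image.mpr ⟨p, Finset.mem_filter.mpr
            ⟨List.mem_toFinset.mpr hp, hpw ▸ hwn⟩, hpw⟩
      _ ≤ F1.card := Finset.card_image_le
  have hF2card : ((nbr H A v).erase x).card ≤ F2.card := by
    calc ((nbr H A v).erase x).card ≤ (F2.image Prod.snd).card := by
          apply Finset.card_le_card
          intro z hz
          obtain ⟨hzx, hzn⟩ := Finset.mem_erase.mp hz
          have hzL : z ∈ L := by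
            rw [← List.mem_toFinset, hset]
            exact Finset.mem_union_left _ (nbr_subset hzn)
          have hzT : z ∈ L.tail := by
            conv at hzL => rw [hLtail]
            rcases List.mem_cons.mp hzL with h | h
            · exact absurd h hzx
            · exact h
          rw [← hsnd] at hzT
          obtain ⟨p, hp, hpz⟩ := List.mem_map.mp hzT
          exact Finset.mem_image.mpr ⟨p, Finset.mem_filter.mpr
            ⟨List.mem_toFinset.mpr hp, hpz ▸ hzn⟩, hpz⟩
      _ ≤ F2.card := Finset.card_image_le
  have hint : 0 < (F1 ∩ F2).card := by
    have hun : (F1 ∪ F2).card ≤ FZ.card :=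
      Finset.card_le_card (Finset.union_subset hF1Z hF2Z)
    have := Finset.card_union_add_card_inter F1 F2
    omega
  obtain ⟨p, hp⟩ := Finset.card_pos.mp hint
  rw [Finset.mem_inter] at hp
  obtain ⟨hp1, hp2⟩ := hp
  obtain ⟨hpl, hpn1⟩ := Finset.mem_filter.mp hp1
  obtain ⟨-, hpn2⟩ := Finset.mem_filter.mp hp2
  exact ⟨p.1, p.2, by simpa using List.mem_toFinset.mp hpl, hpn1, hpn2⟩

lemma not_mem_of_nodup_split {P R : List V} {w : V} (h : (P ++ w :: R).Nodup) :
    w ∉ P ∧ w ∉ R := by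
  rw [List.nodup_append] at h
  obtain ⟨_, h2, h3⟩ := h
  exact ⟨fun hw => h3 w hw w List.mem_cons_self rfl, (List.nodup_cons.mp h2).1⟩

lemma closure_case (H : SimpleGraph V) {A B : Finset V}
    (hdisj : Disjoint A B)
    (hbip : ∀ a b, H.Adj a b → (a ∈ A ∧ b ∈ B) ∨ (a ∈ B ∧ b ∈ A))
    {u v : V} (hu : u ∈ A) (hv : v ∈ B) (hnadj : ¬ H.Adj u v)
    {x₀ y₀ : V} {L P Q : List V}
    (hPQ : L = P ++ u :: v :: Q)
    (cP : List.IsChain H.Adj (P ++ [u])) (cQ : List.IsChain H.Adj (v :: Q))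
    (hnd : L.Nodup) (hhead : L.head? = some x₀) (hlast : L.getLast? = some y₀)
    (hset : L.toFinset = A ∪ B)
    (hcount : (B.erase y₀).card + 1 ≤
      ((nbr H B u).erase y₀).card + ((nbr H A v).erase x₀).card) :
    ∃ N, IsHamList H A B x₀ y₀ N := by
  classical
  have huv : u ≠ v := fun h => (Finset.disjoint_left.mp hdisj hu) (h ▸ hv)
  -- reconstruct the (addE H u v)-chain
  have hc : L.IsChain (addE H u v).Adj := by
    have h1 : L = (P ++ [u]) ++ (v :: Q) := by rw [hPQ]; simp
    rw [h1, List.isChain_append]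
    refine ⟨cP.imp (fun a b h => le_addE H u v h), cQ.imp (fun a b h => le_addE H u v h), ?_⟩
    intro a ha b hb
    simp only [List.getLast?_concat, Option.mem_def, Option.some.injEq] at ha
    simp only [List.head?_cons, Option.mem_def, Option.some.injEq] at hb
    subst ha hb
    rw [addE_adj huv]
    exact Or.inr (Or.inl ⟨rfl, rfl⟩)
  obtain ⟨w, z, hzip, hwn, hzn⟩ := exists_rotation_pair H hdisj hu hv hc hnd hhead hlast
    hset hbip hcount
  have hwB : w ∈ B := nbr_subset hwn
  have hadjuw : H.Adj u w := (mem_nbr.mp hwn).2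
  have hzA : z ∈ A := nbr_subset hzn
  have hadjvz : H.Adj v z := (mem_nbr.mp hzn).2
  have hwu : w ≠ u := fun h => H.irrefl (h ▸ hadjuw)
  have hwv : w ≠ v := fun h => hnadj (h ▸ hadjuw)
  have hzu : z ≠ u := fun h => hnadj ((h ▸ hadjvz).symm)
  have hzv : z ≠ v := fun h => H.irrefl (h ▸ hadjvz)
  obtain ⟨P', Q', hsplit⟩ := split_of_mem_zip hzip
  have hwP' : w ∉ P' := (not_mem_of_nodup_split (hsplit ▸ hnd)).1
  have hwL : w ∈ L := by rw [hsplit]; simp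
  have hwPQ : w ∈ P ∨ w ∈ Q := by
    rw [hPQ] at hwL
    rcases List.mem_append.mp hwL with h | h
    · exact Or.inl h
    · rcases List.mem_cons.mp h with h | h
      · exact absurd h hwu
      · rcases List.mem_cons.mp h with h | h
        · exact absurd h hwv
        · exact Or.inr h
  rcases hwPQ with hwP | hwQ
  · -- the pair (w, z) lies in P
    obtain ⟨M₁, M₂0, hP⟩ := List.append_of_mem hwP
    have hL1 : L = M₁ ++ w :: (M₂0 ++ u :: v :: Q) := by rw [hPQ, hP]; simp
    have hwM₁ : w ∉ M₁ := (not_mem_of_nodup_split (hL1 ▸ hnd)).1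
    obtain ⟨hM₁P', htails⟩ := split_unique (hL1.symm.trans hsplit) hwM₁ hwP'
    cases M₂0 with
    | nil =>
      simp only [List.nil_append, List.cons.injEq] at htails
      exact absurd htails.1.symm hzu
    | cons m2 M₂ =>
      simp only [List.cons_append, List.cons.injEq] at htails
      obtain ⟨rfl, -⟩ := htails
      have hLshape : L = M₁ ++ w :: m2 :: M₂ ++ u :: v :: Q := by
        rw [hPQ, hP]; try simp
      have c1 : List.IsChain H.Adj (M₁ ++ w :: m2 :: M₂ ++ [u]) := by
        rw [hP] at cP
        have : M₁ ++ w :: m2 :: M₂ ++ [u] = (M₁ ++ w :: m2 :: M₂) ++ [u] := by simp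
        simpa using cP
      obtain ⟨N, hperm, hch, hh, hl⟩ := surgery H c1 cQ hadjuw.symm hadjvz.symm
      rw [← hLshape] at hperm hh hl
      exact ⟨N, hch, hperm.nodup_iff.mpr hnd, hh.trans hhead, hl.trans hlast,
        (List.toFinset_eq_of_perm _ _ hperm).trans hset⟩
  · -- the pair (w, z) lies in Q
    obtain ⟨M₁, M₂0, hQ⟩ := List.append_of_mem hwQ
    have hL1 : L = (P ++ u :: v :: M₁) ++ w :: M₂0 := by rw [hPQ, hQ]; simp
    have hwM₁ : w ∉ P ++ u :: v :: M₁ := (not_mem_of_nodup_split (hL1 ▸ hnd)).1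
    obtain ⟨hPP', htails⟩ := split_unique (hL1.symm.trans hsplit) hwM₁ hwP'
    cases M₂0 with
    | nil => simp at htails
    | cons m2 M₂ =>
      simp only [List.cons.injEq] at htails
      obtain ⟨rfl, -⟩ := htails
      have hQshape : Q = M₁ ++ w :: m2 :: M₂ := by rw [hQ]
      have hLrev : L.reverse = M₂.reverse ++ m2 :: w :: M₁.reverse ++ v :: u :: P.reverse := by
        rw [hPQ, hQshape]; simp
      have c1' : List.IsChain H.Adj (M₂.reverse ++ m2 :: w :: M₁.reverse ++ [v]) := by
        have heq : M₂.reverse ++ m2 :: w :: M₁.reverse ++ [v] = (v :: Q).reverse := by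
          rw [hQshape]; simp
        rw [heq, List.isChain_reverse, chain'_flip_iff (fun a b h => h.symm)]
        exact cQ
      have c2' : List.IsChain H.Adj (u :: P.reverse) := by
        have heq : u :: P.reverse = (P ++ [u]).reverse := by simp
        rw [heq, List.isChain_reverse, chain'_flip_iff (fun a b h => h.symm)]
        exact cP
      obtain ⟨N, hperm, hch, hh, hl⟩ := surgery H c1' c2' hadjvz.symm hadjuw.symm
      rw [← hLrev] at hperm hh hl
      refine ⟨N.reverse, ?_, ?_, ?_, ?_, ?_⟩
      · rw [List.isChain_reverse, chain'_flip_iff (fun a b h => h.symm)]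
        exact hch
      · exact ((N.reverse_perm.trans hperm).trans L.reverse_perm).nodup_iff.mpr hnd
      · rw [List.head?_reverse, hl, List.getLast?_reverse]
        exact hhead
      · rw [List.getLast?_reverse, hh, List.head?_reverse]
        exact hlast
      · rw [List.toFinset_reverse]
        exact (List.toFinset_eq_of_perm _ _ (hperm.trans L.reverse_perm)).trans hset

lemma ham_closure (H : SimpleGraph V) {A B : Finset V} {m : ℕ}
    (hdisj : Disjoint A B) (hB : B.card = m)
    (hbip : ∀ a b, H.Adj a b → (a ∈ A ∧ b ∈ B) ∨ (a ∈ B ∧ b ∈ A))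
    {u v : V} (hu : u ∈ A) (hv : v ∈ B) (hnadj : ¬ H.Adj u v)
    (hsum : m + 2 ≤ (nbr H B u).card + (nbr H A v).card)
    {x y : V} (hx : x ∈ A) (hy : y ∈ B)
    {L : List V} (hham : IsHamList (addE H u v) A B x y L) :
    ∃ L', IsHamList H A B x y L' := by
  classical
  have huv : u ≠ v := fun h => (Finset.disjoint_left.mp hdisj hu) (h ▸ hv)
  obtain ⟨hc, hnd, hhead, hlast, hset⟩ := hham
  have hc' : L.IsChain (fun a b => H.Adj a b ∨ (a = u ∧ b = v) ∨ (a = v ∧ b = u)) :=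
    hc.imp (fun a b h => (addE_adj huv).mp h)
  rcases chain_split hc' hnd with hch | ⟨P, Q, hPQ, cP, cQ⟩ | ⟨P, Q, hPQ, cP, cQ⟩
  · exact ⟨L, hch, hnd, hhead, hlast, hset⟩
  · -- L = P ++ u :: v :: Q
    refine closure_case H hdisj hbip hu hv hnadj hPQ cP cQ hnd hhead hlast hset ?_
    have h1 : (B.erase y).card = m - 1 := by rw [Finset.card_erase_of_mem hy, hB]
    have h2 : (nbr H B u).card - 1 ≤ ((nbr H B u).erase y).card :=
      Finset.pred_card_le_card_erase
    have h3 : (nbr H A v).card - 1 ≤ ((nbr H A v).erase x).card :=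
      Finset.pred_card_le_card_erase
    have hm1 : 1 ≤ m := by
      rw [← hB]
      exact Finset.card_pos.mpr ⟨y, hy⟩
    omega
  · -- L = P ++ v :: u :: Q : work with the reversed list
    have hrev : L.reverse = Q.reverse ++ u :: v :: P.reverse := by rw [hPQ]; simp
    have cP' : List.IsChain H.Adj (Q.reverse ++ [u]) := by
      have heq : Q.reverse ++ [u] = (u :: Q).reverse := by simp
      rw [heq, List.isChain_reverse, chain'_flip_iff (fun a b h => h.symm)]
      exact cQ
    have cQ' : List.IsChain H.Adj (v :: P.reverse) := by
      have heq : v :: P.reverse = (P ++ [v]).reverse := by simp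
      rw [heq, List.isChain_reverse, chain'_flip_iff (fun a b h => h.symm)]
      exact cP
    have hxB : x ∉ B := Finset.disjoint_left.mp hdisj hx
    have hcnt : (B.erase x).card + 1 ≤
        ((nbr H B u).erase x).card + ((nbr H A v).erase y).card := by
      have hxe : (B.erase x).card = m := by rw [Finset.erase_eq_of_notMem hxB, hB]
      have h2 : (nbr H B u).erase x = nbr H B u := Finset.erase_eq_of_notMem
        (fun h => hxB (nbr_subset h))
      have h3 : (nbr H A v).erase y = nbr H A v := Finset.erase_eq_of_notMem
        (fun h => (Finset.disjoint_left.mp hdisj (nbr_subset h)) hy)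
      rw [hxe, h2, h3]
      omega
    obtain ⟨N, hN⟩ := closure_case H hdisj hbip hu hv hnadj hrev cP' cQ'
      (List.nodup_reverse.mpr hnd) (by rw [List.head?_reverse]; exact hlast)
      (by rw [List.getLast?_reverse]; exact hhead)
      (by rw [List.toFinset_reverse]; exact hset) hcnt
    obtain ⟨hch, hndN, hh, hl, hsetN⟩ := hN
    refine ⟨N.reverse, ?_, List.nodup_reverse.mpr hndN, ?_, ?_, by rwa [List.toFinset_reverse]⟩
    · rw [List.isChain_reverse, chain'_flip_iff (fun a b h => h.symm)]
      exact hch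
    · rw [List.head?_reverse]; exact hl
    · rw [List.getLast?_reverse]; exact hh

/-- Interleave two lists: `weave [b1,…,bk] [a1,…,ak] = [b1,a1,b2,a2,…]`. -/
def weave : List V → List V → List V
  | [], _ => []
  | _ :: _, [] => []
  | b :: bs, a :: as => b :: a :: weave bs as

lemma weave_mem : ∀ {bs as : List V} {c : V}, c ∈ weave bs as → c ∈ bs ∨ c ∈ as := by
  intro bs
  induction bs with
  | nil => intro as c h; simp [weave] at h
  | cons b bs' ih =>
    intro as c h
    cases as with
    | nil => simp [weave] at h
    | cons a as' =>
      simp only [weave, List.mem_cons] at h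
      rcases h with rfl | rfl | h
      · exact Or.inl (List.mem_cons_self)
      · exact Or.inr (List.mem_cons_self)
      · rcases ih h with h | h
        · exact Or.inl (List.mem_cons_of_mem _ h)
        · exact Or.inr (List.mem_cons_of_mem _ h)

lemma weave_mem' : ∀ {bs as : List V} (h : bs.length = as.length) {c : V},
    c ∈ bs ∨ c ∈ as → c ∈ weave bs as := by
  intro bs
  induction bs with
  | nil =>
    intro as h c hc
    cases as with
    | nil => simpa using hc
    | cons a as' => simp at h
  | cons b bs' ih =>
    intro as h c hc
    cases as with
    | nil => simp at h
    | cons a as' =>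
      simp only [List.length_cons, Nat.succ.injEq] at h
      simp only [List.mem_cons] at hc
      simp only [weave, List.mem_cons]
      rcases hc with (rfl | hc) | (rfl | hc)
      · exact Or.inl rfl
      · exact Or.inr (Or.inr (ih h (Or.inl hc)))
      · exact Or.inr (Or.inl rfl)
      · exact Or.inr (Or.inr (ih h (Or.inr hc)))

lemma weave_nodup : ∀ {bs as : List V}, bs.Nodup → as.Nodup →
    (∀ c ∈ bs, c ∉ as) → (weave bs as).Nodup := by
  intro bs
  induction bs with
  | nil => intro as _ _ _; simp [weave]
  | cons b bs' ih =>
    intro as hb ha hd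
    cases as with
    | nil => simp [weave]
    | cons a as' =>
      simp only [weave, List.nodup_cons]
      have hba : b ≠ a := fun h => hd b (List.mem_cons_self) (h ▸ List.mem_cons_self)
      refine ⟨?_, ?_, ih hb.of_cons ha.of_cons
        (fun c hc hc' => hd c (List.mem_cons_of_mem _ hc) (List.mem_cons_of_mem _ hc'))⟩
      · simp only [List.mem_cons, not_or]
        refine ⟨hba, fun h => ?_⟩
        rcases weave_mem h with h | h
        · exact (List.nodup_cons.mp hb).1 h
        · exact hd b (List.mem_cons_self) (List.mem_cons_of_mem _ h)
      · intro h
        rcases weave_mem h with h | h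
        · exact hd a (List.mem_cons_of_mem _ h) (List.mem_cons_self)
        · exact (List.nodup_cons.mp ha).1 h

lemma weave_chain (H : SimpleGraph V) (y : V) :
    ∀ (bs as : List V) (x : V), bs.length = as.length →
    (∀ a ∈ x :: as, ∀ b ∈ bs ++ [y], H.Adj a b) →
    List.IsChain H.Adj (x :: (weave bs as ++ [y])) := by
  intro bs
  induction bs with
  | nil =>
    intro as x h hadj
    cases as with
    | nil =>
      simp only [weave, List.nil_append]
      exact List.isChain_pair.mpr (hadj x (by simp) y (by simp))
    | cons a as' => simp at h
  | cons b bs' ih =>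
    intro as x h hadj
    cases as with
    | nil => simp at h
    | cons a as' =>
      simp only [List.length_cons, Nat.succ.injEq] at h
      have hxb : H.Adj x b := hadj x (by simp) b (by simp)
      have hab : H.Adj a b := hadj a (by simp) b (by simp)
      have htail : List.IsChain H.Adj (a :: (weave bs' as' ++ [y])) := by
        refine ih as' a h ?_
        intro a' ha' b' hb'
        refine hadj a' ?_ b' ?_
        · rcases List.mem_cons.mp ha' with rfl | h'
          · simp
          · simp [h']
        · rcases List.mem_append.mp hb' with h' | h'
          · simp [h']
          · simp at h'; simp [h']
      show List.IsChain H.Adj (x :: b :: a :: (weave bs' as' ++ [y]))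
      exact List.isChain_cons_cons.mpr ⟨hxb, List.isChain_cons_cons.mpr ⟨hab.symm, htail⟩⟩

lemma ham_base (H : SimpleGraph V) {A B : Finset V} {m : ℕ}
    (hdisj : Disjoint A B) (hA : A.card = m) (hB : B.card = m)
    (hcomp : ∀ a ∈ A, ∀ b ∈ B, H.Adj a b)
    {x y : V} (hx : x ∈ A) (hy : y ∈ B) :
    ∃ L, IsHamList H A B x y L := by
  classical
  set as := (A.erase x).toList with has
  set bs := (B.erase y).toList with hbs
  have hasA : ∀ c ∈ as, c ∈ A.erase x := by
    intro c hc; rwa [has, Finset.mem_toList] at hc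
  have hbsB : ∀ c ∈ bs, c ∈ B.erase y := by
    intro c hc; rwa [hbs, Finset.mem_toList] at hc
  have hlen : bs.length = as.length := by
    rw [has, hbs, Finset.length_toList, Finset.length_toList,
      Finset.card_erase_of_mem hx, Finset.card_erase_of_mem hy, hA, hB]
  have hxy : x ≠ y := fun h => (Finset.disjoint_left.mp hdisj hx) (h ▸ hy)
  refine ⟨x :: (weave bs as ++ [y]), ?_, ?_, rfl, ?_, ?_⟩
  · refine weave_chain H y bs as x hlen ?_
    intro a ha b hb
    have haA : a ∈ A := by
      rcases List.mem_cons.mp ha with rfl | h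
      · exact hx
      · exact Finset.mem_of_mem_erase (hasA a h)
    have hbB : b ∈ B := by
      rcases List.mem_append.mp hb with h | h
      · exact Finset.mem_of_mem_erase (hbsB b h)
      · simp only [List.mem_singleton] at h; exact h ▸ hy
    exact hcomp a haA b hbB
  · rw [List.nodup_cons]
    constructor
    · intro h
      rcases List.mem_append.mp h with h | h
      · rcases weave_mem h with h | h
        · exact (Finset.disjoint_left.mp hdisj hx) (Finset.mem_of_mem_erase (hbsB x h))
        · exact (Finset.notMem_erase x A) (hasA x h)
      · simp only [List.mem_singleton] at h; exact hxy h
    · rw [List.nodup_append]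
      refine ⟨?_, by simp, ?_⟩
      · refine weave_nodup (Finset.nodup_toList _) (Finset.nodup_toList _) ?_
        intro c hc hc'
        exact (Finset.disjoint_left.mp hdisj (Finset.mem_of_mem_erase (hasA c hc')))
          (Finset.mem_of_mem_erase (hbsB c hc))
      · intro c hc c' hc' hcc'
        simp only [List.mem_singleton] at hc'
        rw [hc'] at hcc'
        subst hcc'
        rcases weave_mem hc with h | h
        · exact (Finset.notMem_erase c B) (hbsB c h)
        · exact (Finset.disjoint_left.mp hdisj (Finset.mem_of_mem_erase (hasA c h))) hy
  · have : x :: (weave bs as ++ [y]) = (x :: weave bs as) ++ [y] := by simp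
    rw [this, List.getLast?_concat]
  · ext c
    simp only [List.toFinset_cons, List.toFinset_append, Finset.mem_insert,
      Finset.mem_union, List.mem_toFinset]
    constructor
    · rintro (rfl | h | h)
      · exact Or.inl hx
      · rcases weave_mem h with h | h
        · exact Or.inr (Finset.mem_of_mem_erase (hbsB c h))
        · exact Or.inl (Finset.mem_of_mem_erase (hasA c h))
      · have : c = y := by simpa using h
        exact Or.inr (this ▸ hy)
    · intro h
      by_cases hcx : c = x
      · exact Or.inl hcx
      by_cases hcy : c = y
      · exact Or.inr (Or.inr (by simp [hcy]))
      refine Or.inr (Or.inl ?_)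
      rcases h with h | h
      · refine weave_mem' hlen (Or.inr ?_)
        rw [has, Finset.mem_toList]
        exact Finset.mem_erase.mpr ⟨hcx, h⟩
      · refine weave_mem' hlen (Or.inl ?_)
        rw [hbs, Finset.mem_toList]
        exact Finset.mem_erase.mpr ⟨hcy, h⟩

open scoped Classical in
lemma ham_core (A B : Finset V) (m s : ℕ) (SA SB : Finset V)
    (hdisj : Disjoint A B) (hA : A.card = m) (hB : B.card = m)
    (hSA : SA ⊆ A) (hSB : SB ⊆ B) (hsA : SA.card ≤ s) (hsB : SB.card ≤ s)
    (hm2 : 2 * s + 2 ≤ m) :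
    ∀ k (H : SimpleGraph V),
      ((A ×ˢ B).filter (fun p => ¬ H.Adj p.1 p.2)).card = k →
      (∀ a b, H.Adj a b → (a ∈ A ∧ b ∈ B) ∨ (a ∈ B ∧ b ∈ A)) →
      (∀ a ∈ A, s + 3 ≤ (nbr H B a).card) →
      (∀ b ∈ B, s + 3 ≤ (nbr H A b).card) →
      (∀ a ∈ A \ SA, ∀ b ∈ B \ SB, m + 2 ≤ (nbr H B a).card + (nbr H A b).card) →
      ∀ x ∈ A, ∀ y ∈ B, ∃ L, IsHamList H A B x y L := by
  classical
  intro k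
  induction k using Nat.strong_induction_on with
  | _ k ih =>
    intro H hk hbip hminA hminB hbig x hx y hy
    rcases Nat.eq_zero_or_pos k with rfl | hkpos
    · -- no missing pairs: complete bipartite
      have hcomp : ∀ a ∈ A, ∀ b ∈ B, H.Adj a b := by
        intro a ha b hb
        by_contra hne
        have : (a, b) ∈ (A ×ˢ B).filter (fun p => ¬ H.Adj p.1 p.2) := by
          simp [Finset.mem_product, ha, hb, hne]
        rw [Finset.card_eq_zero.mp hk] at this
        simp at this
      exact ham_base H hdisj hA hB hcomp hx hy
    · -- there is a missing pair; select one with large degree sum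
      set miss := (A ×ˢ B).filter (fun p => ¬ H.Adj p.1 p.2) with hmiss
      have hne : miss.Nonempty := Finset.card_pos.mp (hk ▸ hkpos)
      have hmem_miss : ∀ p, p ∈ miss ↔ p.1 ∈ A ∧ p.2 ∈ B ∧ ¬ H.Adj p.1 p.2 := by
        intro p
        simp [hmiss, Finset.mem_product, and_assoc]
      have hsmall : ∀ {S T : Finset V}, S ⊆ T → T.card = m → m - s ≤ (T \ S).card →
        True := fun _ _ _ => trivial
      have hcBS : (B \ SB).card = m - SB.card := by
        rw [Finset.card_sdiff_of_subset hSB, hB]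
      have hcAS : (A \ SA).card = m - SA.card := by
        rw [Finset.card_sdiff_of_subset hSA, hA]
      have hsel : ∃ u v, u ∈ A ∧ v ∈ B ∧ ¬ H.Adj u v ∧
          m + 2 ≤ (nbr H B u).card + (nbr H A v).card := by
        by_cases hc1 : ∃ p ∈ miss, p.1 ∉ SA ∧ p.2 ∉ SB
        · obtain ⟨p, hp, h1, h2⟩ := hc1
          obtain ⟨hpA, hpB, hpn⟩ := (hmem_miss p).mp hp
          exact ⟨p.1, p.2, hpA, hpB, hpn,
            hbig p.1 (Finset.mem_sdiff.mpr ⟨hpA, h1⟩) p.2 (Finset.mem_sdiff.mpr ⟨hpB, h2⟩)⟩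
        · have hbigbig : ∀ a ∈ A \ SA, ∀ b ∈ B \ SB, H.Adj a b := by
            intro a ha b hb
            by_contra hne'
            obtain ⟨haA, haS⟩ := Finset.mem_sdiff.mp ha
            obtain ⟨hbB, hbS⟩ := Finset.mem_sdiff.mp hb
            exact hc1 ⟨(a, b), (hmem_miss _).mpr ⟨haA, hbB, hne'⟩, haS, hbS⟩
          by_cases hc2 : ∃ p ∈ miss, p.1 ∉ SA ∨ p.2 ∉ SB
          · obtain ⟨p, hp, hor⟩ := hc2
            obtain ⟨hpA, hpB, hpn⟩ := (hmem_miss p).mp hp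
            rcases hor with h1 | h2
            · -- p.1 is big
              have hsub : B \ SB ⊆ nbr H B p.1 := by
                intro b hb
                exact mem_nbr.mpr ⟨(Finset.mem_sdiff.mp hb).1,
                  hbigbig p.1 (Finset.mem_sdiff.mpr ⟨hpA, h1⟩) b hb⟩
              have hd1 : m - s ≤ (nbr H B p.1).card := by
                have := Finset.card_le_card hsub
                omega
              have hd2 := hminB p.2 hpB
              exact ⟨p.1, p.2, hpA, hpB, hpn, by omega⟩
            · -- p.2 is big
              have hsub : A \ SA ⊆ nbr H A p.2 := by
                intro a ha
                exact mem_nbr.mpr ⟨(Finset.mem_sdiff.mp ha).1,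
                  (hbigbig a ha p.2 (Finset.mem_sdiff.mpr ⟨hpB, h2⟩)).symm⟩
              have hd2 : m - s ≤ (nbr H A p.2).card := by
                have := Finset.card_le_card hsub
                omega
              have hd1 := hminA p.1 hpA
              exact ⟨p.1, p.2, hpA, hpB, hpn, by omega⟩
          · -- all missing pairs are small-small
            obtain ⟨p, hp⟩ := hne
            obtain ⟨hpA, hpB, hpn⟩ := (hmem_miss p).mp hp
            have hsub1 : B \ SB ⊆ nbr H B p.1 := by
              intro b hb
              obtain ⟨hbB, hbS⟩ := Finset.mem_sdiff.mp hb
              refine mem_nbr.mpr ⟨hbB, ?_⟩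
              by_contra hne'
              exact hc2 ⟨(p.1, b), (hmem_miss _).mpr ⟨hpA, hbB, hne'⟩, Or.inr hbS⟩
            have hsub2 : A \ SA ⊆ nbr H A p.2 := by
              intro a ha
              obtain ⟨haA, haS⟩ := Finset.mem_sdiff.mp ha
              refine mem_nbr.mpr ⟨haA, ?_⟩
              by_contra hne'
              exact hc2 ⟨(a, p.2), (hmem_miss _).mpr ⟨haA, hpB, fun h => hne' h.symm⟩,
                Or.inl haS⟩
            have hd1 : m - s ≤ (nbr H B p.1).card := by
              have := Finset.card_le_card hsub1; omega
            have hd2 : m - s ≤ (nbr H A p.2).card := by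
              have := Finset.card_le_card hsub2; omega
            exact ⟨p.1, p.2, hpA, hpB, hpn, by omega⟩
      obtain ⟨u, v, hu, hv, hnadj, hsum⟩ := hsel
      have huv : u ≠ v := fun h => (Finset.disjoint_left.mp hdisj hu) (h ▸ hv)
      set H' := addE H u v with hH'
      have hbip' : ∀ a b, H'.Adj a b → (a ∈ A ∧ b ∈ B) ∨ (a ∈ B ∧ b ∈ A) := by
        intro a b hab
        rw [hH', addE_adj huv] at hab
        rcases hab with h | ⟨rfl, rfl⟩ | ⟨rfl, rfl⟩
        · exact hbip a b h
        · exact Or.inl ⟨hu, hv⟩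
        · exact Or.inr ⟨hv, hu⟩
      have hmissH' : (A ×ˢ B).filter (fun p => ¬ H'.Adj p.1 p.2) = miss.erase (u, v) := by
        ext q
        simp only [Finset.mem_filter, Finset.mem_erase, hmiss, Finset.mem_product]
        constructor
        · rintro ⟨⟨hq1, hq2⟩, hqn⟩
          refine ⟨?_, ⟨hq1, hq2⟩, fun h => hqn (le_addE H u v h)⟩
          rintro rfl
          exact hqn ((addE_adj huv).mpr (Or.inr (Or.inl ⟨rfl, rfl⟩)))
        · rintro ⟨hquv, ⟨hq1, hq2⟩, hqn⟩
          refine ⟨⟨hq1, hq2⟩, fun h => ?_⟩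
          rw [hH', addE_adj huv] at h
          rcases h with h | ⟨h1, h2⟩ | ⟨h1, h2⟩
          · exact hqn h
          · exact hquv (Prod.ext h1 h2)
          · exact (Finset.disjoint_left.mp hdisj hu) (h2 ▸ hq2)
      have hmem_uv : (u, v) ∈ miss := (hmem_miss _).mpr ⟨hu, hv, hnadj⟩
      have hcard' : ((A ×ˢ B).filter (fun p => ¬ H'.Adj p.1 p.2)).card = k - 1 := by
        rw [hmissH', Finset.card_erase_of_mem hmem_uv, hk]
      obtain ⟨L', hL'⟩ := ih (k - 1) (by omega) H' hcard' hbip'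
        (fun a ha => le_trans (hminA a ha) (Finset.card_le_card (nbr_mono (le_addE H u v) _ _)))
        (fun b hb => le_trans (hminB b hb) (Finset.card_le_card (nbr_mono (le_addE H u v) _ _)))
        (fun a ha b hb => le_trans (hbig a ha b hb) (Nat.add_le_add
          (Finset.card_le_card (nbr_mono (le_addE H u v) _ _))
          (Finset.card_le_card (nbr_mono (le_addE H u v) _ _))))
        x hx y hy
      exact ham_closure H hdisj hB hbip hu hv hnadj hsum hx hy hL'

lemma walk_of_chain (H : SimpleGraph V) :
    ∀ (L : List V) (x y : V), L.IsChain H.Adj → L.head? = some x → L.getLast? = some y →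
      ∃ p : H.Walk x y, p.support = L := by
  intro L
  induction L with
  | nil => intro x y _ h _; simp at h
  | cons a t ih =>
    intro x y hc hh hl
    simp only [List.head?_cons, Option.some.injEq] at hh
    subst hh
    cases t with
    | nil =>
      simp only [List.getLast?_singleton, Option.some.injEq] at hl
      subst hl
      exact ⟨SimpleGraph.Walk.nil, rfl⟩
    | cons b t' =>
      rw [List.isChain_cons_cons] at hc
      rw [List.getLast?_cons_cons] at hl
      obtain ⟨q, hq⟩ := ih b y hc.2 rfl hl
      exact ⟨SimpleGraph.Walk.cons hc.1 q, by simp [hq]⟩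

end Graph

/-- Under the stated degree conditions, the bipartite graph of blue edges between
`X*` and `Y*` is Hamiltonian bi-connected. -/
theorem blue_hamiltonian_biconnected (γ : ℝ) (n m : ℕ)
    (hγ0 : 0 < γ) (hγ : γ ≤ 1 / 4) (hn : 3 / γ ≤ (n : ℝ))
    (G R B : SimpleGraph (Fin n ⊕ Fin n))
    (hbip : G ≤ completeBipartiteGraph (Fin n) (Fin n))
    (hcol : R ⊔ B = G)
    (hdeg : ∀ v, (3 / 4 + γ) * n ≤ ((G.neighborSet v).ncard : ℝ))
    (Xs Ys : Set (Fin n ⊕ Fin n))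
    (hXs : Xs ⊆ Set.range Sum.inl) (hYs : Ys ⊆ Set.range Sum.inr)
    (hXm : Xs.ncard = m) (hYm : Ys.ncard = m)
    (hm : (1 / 2 - γ / 4) * n ≤ (m : ℝ))
    (hBdegX : ∀ x ∈ Xs, γ * n / 8 ≤ (dIn B x Ys : ℝ))
    (hBdegY : ∀ y ∈ Ys, γ * n / 8 ≤ (dIn B y Xs : ℝ))
    (hXS' : (({x ∈ Xs | (dIn B x Ys : ℝ) ≤ (m : ℝ) - (1 / 4 - γ / 2) * n}.ncard : ℕ) : ℝ)
      < γ * n / 8 - 2)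
    (hYS' : (({y ∈ Ys | (dIn B y Xs : ℝ) ≤ (m : ℝ) - (1 / 4 - γ / 2) * n}.ncard : ℕ) : ℝ)
      < γ * n / 8 - 2) :
    ∀ x ∈ Xs, ∀ y ∈ Ys,
      ∃ p : (between B Xs Ys).Walk x y, p.IsPath ∧ ∀ v ∈ Xs ∪ Ys, v ∈ p.support := by
  classical
  intro x hx y hy
  have hXfin : Xs.Finite := Set.toFinite Xs
  have hYfin : Ys.Finite := Set.toFinite Ys
  set AF := hXfin.toFinset with hAFdef
  set BF := hYfin.toFinset with hBFdef
  have hmemA : ∀ a, a ∈ AF ↔ a ∈ Xs := fun a => Set.Finite.mem_toFinset _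
  have hmemB : ∀ b, b ∈ BF ↔ b ∈ Ys := fun b => Set.Finite.mem_toFinset _
  have hAcard : AF.card = m := by rw [← hXm, Set.ncard_eq_toFinset_card Xs hXfin]
  have hBcard : BF.card = m := by rw [← hYm, Set.ncard_eq_toFinset_card Ys hYfin]
  set H := between B Xs Ys with hHdef
  have hadj : ∀ a b, H.Adj a b ↔ B.Adj a b ∧ ((a ∈ Xs ∧ b ∈ Ys) ∨ (a ∈ Ys ∧ b ∈ Xs)) :=
    fun a b => Iff.rfl
  have hdisj : Disjoint AF BF := by
    rw [Finset.disjoint_left]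
    intro a haA haB
    obtain ⟨p, hp⟩ := hXs ((hmemA a).mp haA)
    obtain ⟨q, hq⟩ := hYs ((hmemB a).mp haB)
    rw [← hp] at hq
    simp at hq
  have hbipF : ∀ a b, H.Adj a b → (a ∈ AF ∧ b ∈ BF) ∨ (a ∈ BF ∧ b ∈ AF) := by
    intro a b hab
    rcases ((hadj a b).mp hab).2 with ⟨h1, h2⟩ | ⟨h1, h2⟩
    · exact Or.inl ⟨(hmemA a).mpr h1, (hmemB b).mpr h2⟩
    · exact Or.inr ⟨(hmemB a).mpr h1, (hmemA b).mpr h2⟩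
  -- degree translation
  have hdeg_nbrX : ∀ a ∈ AF, (nbr H BF a).card = dIn B a Ys := by
    intro a ha
    rw [hmemA] at ha
    have hfin : (B.neighborSet a ∩ Ys).Finite := Set.toFinite _
    have heq : nbr H BF a = hfin.toFinset := by
      ext b
      rw [mem_nbr, hmemB, Set.Finite.mem_toFinset, Set.mem_inter_iff,
        SimpleGraph.mem_neighborSet]
      constructor
      · rintro ⟨hb, hab⟩
        exact ⟨((hadj a b).mp hab).1, hb⟩
      · rintro ⟨hab, hb⟩
        exact ⟨hb, (hadj a b).mpr ⟨hab, Or.inl ⟨ha, hb⟩⟩⟩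
    rw [heq, dIn, Set.ncard_eq_toFinset_card _ hfin]
  have hdeg_nbrY : ∀ b ∈ BF, (nbr H AF b).card = dIn B b Xs := by
    intro b hb
    rw [hmemB] at hb
    have hfin : (B.neighborSet b ∩ Xs).Finite := Set.toFinite _
    have heq : nbr H AF b = hfin.toFinset := by
      ext a
      rw [mem_nbr, hmemA, Set.Finite.mem_toFinset, Set.mem_inter_iff,
        SimpleGraph.mem_neighborSet]
      constructor
      · rintro ⟨ha, hab⟩
        exact ⟨((hadj b a).mp hab).1, ha⟩
      · rintro ⟨hab, ha⟩
        exact ⟨ha, (hadj b a).mpr ⟨hab, Or.inr ⟨hb, ha⟩⟩⟩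
    rw [heq, dIn, Set.ncard_eq_toFinset_card _ hfin]
  -- the exceptional sets
  set SA := AF.filter (fun a => (dIn B a Ys : ℝ) ≤ (m : ℝ) - (1 / 4 - γ / 2) * n) with hSAdef
  set SB := BF.filter (fun b => (dIn B b Xs : ℝ) ≤ (m : ℝ) - (1 / 4 - γ / 2) * n) with hSBdef
  have hSAcard : (SA.card : ℝ) < γ * n / 8 - 2 := by
    have hfinS : ({x ∈ Xs | (dIn B x Ys : ℝ) ≤ (m : ℝ) - (1 / 4 - γ / 2) * n}).Finite :=
      Set.toFinite _
    have : SA = hfinS.toFinset := by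
      ext a
      rw [hSAdef, Finset.mem_filter, hmemA, Set.Finite.mem_toFinset, Set.mem_setOf_eq]
    rw [this, ← Set.ncard_eq_toFinset_card _ hfinS]
    exact hXS'
  have hSBcard : (SB.card : ℝ) < γ * n / 8 - 2 := by
    have hfinS : ({y ∈ Ys | (dIn B y Xs : ℝ) ≤ (m : ℝ) - (1 / 4 - γ / 2) * n}).Finite :=
      Set.toFinite _
    have : SB = hfinS.toFinset := by
      ext b
      rw [hSBdef, Finset.mem_filter, hmemB, Set.Finite.mem_toFinset, Set.mem_setOf_eq]
    rw [this, ← Set.ncard_eq_toFinset_card _ hfinS]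
    exact hYS'
  set s := max SA.card SB.card with hsdef
  have hsR : (s : ℝ) < γ * n / 8 - 2 := by
    rw [hsdef]
    push_cast
    exact max_lt hSAcard hSBcard
  have hn0 : (0 : ℝ) ≤ n := Nat.cast_nonneg n
  have hn3 : (3 : ℝ) ≤ γ * n := by
    rw [div_le_iff₀ hγ0] at hn
    linarith
  have hm2 : 2 * s + 2 ≤ m := by
    have h : ((2 * s + 2 : ℕ) : ℝ) < (m : ℝ) := by
      push_cast
      nlinarith [mul_nonneg (sub_nonneg.mpr hγ) hn0]
    exact_mod_cast h.le
  have hminA : ∀ a ∈ AF, s + 3 ≤ (nbr H BF a).card := by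
    intro a ha
    rw [hdeg_nbrX a ha]
    have h1 := hBdegX a ((hmemA a).mp ha)
    have h : ((s + 2 : ℕ) : ℝ) < (dIn B a Ys : ℝ) := by push_cast; linarith
    have := Nat.cast_lt.mp h
    omega
  have hminB : ∀ b ∈ BF, s + 3 ≤ (nbr H AF b).card := by
    intro b hb
    rw [hdeg_nbrY b hb]
    have h1 := hBdegY b ((hmemB b).mp hb)
    have h : ((s + 2 : ℕ) : ℝ) < (dIn B b Xs : ℝ) := by push_cast; linarith
    have := Nat.cast_lt.mp h
    omega
  have hbigF : ∀ a ∈ AF \ SA, ∀ b ∈ BF \ SB,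
      m + 2 ≤ (nbr H BF a).card + (nbr H AF b).card := by
    intro a ha b hb
    obtain ⟨haA, haS⟩ := Finset.mem_sdiff.mp ha
    obtain ⟨hbB, hbS⟩ := Finset.mem_sdiff.mp hb
    rw [hdeg_nbrX a haA, hdeg_nbrY b hbB]
    have h1 : (m : ℝ) - (1 / 4 - γ / 2) * n < (dIn B a Ys : ℝ) := by
      by_contra hle
      exact haS (Finset.mem_filter.mpr ⟨haA, not_lt.mp hle⟩)
    have h2 : (m : ℝ) - (1 / 4 - γ / 2) * n < (dIn B b Xs : ℝ) := by
      by_contra hle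
      exact hbS (Finset.mem_filter.mpr ⟨hbB, not_lt.mp hle⟩)
    have h : ((m + 2 : ℕ) : ℝ) < ((dIn B a Ys + dIn B b Xs : ℕ) : ℝ) := by
      push_cast
      linarith
    exact (Nat.cast_lt.mp h).le
  obtain ⟨L, hchain, hnodup, hhead, hlast, hsetL⟩ :=
    ham_core AF BF m s SA SB hdisj hAcard hBcard (Finset.filter_subset _ _)
      (Finset.filter_subset _ _) (le_max_left _ _) (le_max_right _ _) hm2
      _ H rfl hbipF hminA hminB hbigF x ((hmemA x).mpr hx) y ((hmemB y).mpr hy)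
  obtain ⟨p, hsupp⟩ := walk_of_chain H L x y hchain hhead hlast
  refine ⟨p, SimpleGraph.Walk.IsPath.mk' (by rw [hsupp]; exact hnodup), ?_⟩
  intro v hv
  rw [hsupp, ← List.mem_toFinset, hsetL, Finset.mem_union, hmemA, hmemB]
  exact hv
end
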